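/- arXiv:1211.2564 — 5 statements merged into one kernel-verified Lean document; each statement's English description precedes it below -/
import Mathlib

section
/- Let X be an open connected subset of ℝ^n and φ, ψ ∈ C^∞(X;ℝ). There is a constant C = C(k,n) ∈ ℕ depending only on k and n such that for every smooth compactly supported k-form η = Σ'_{|I|=k} η_I dx^I on X one has ∫_X ( Σ'_{|J|=k−1} Σ'_{|I₁|=k} Σ'_{|I₂|=k} Σ_{ℓ₁,ℓ₂=1}^{n} sign(ℓ₁J, I₁) sign(ℓ₂J, I₂) (∂²φ/∂x^{ℓ₁}∂x^{ℓ₂}) η_{I₁} η_{I₂} + Σ'_{|I|=k} Σ_{ℓ=1}^{n} |∂η_I/∂x^ℓ|² ) e^{−φ} dV ≤ C · ( ‖d*_{φ−ψ,φ−2ψ} η‖²_{φ−2ψ} + ‖dη‖²_φ + ∫_X Σ'_{|I|=k} Σ_{ℓ=1}^{n} |∂ψ/∂x^ℓ|² |η_I|² e^{−φ} dV ). -/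
open MeasureTheory Real Topology Filter

noncomputable section

/-- Euclidean space `ℝⁿ`. -/
abbrev Euc (n : ℕ) := EuclideanSpace ℝ (Fin n)

/-- Strictly increasing multi-indices of length `k` in `{1,…,n}`, encoded as
`k`-element subsets of `Fin n`. -/
abbrev MIdx (n k : ℕ) := {s : Finset (Fin n) // s.card = k}

/-- A `k`-form on (an open subset of) `ℝⁿ`, given by its coefficient functions with respect to
the standard basis `dx^I`, `I` a strictly increasing multi-index of length `k`. -/
abbrev Form (n k : ℕ) := Euc n → MIdx n k → ℝ

/-- `msign ℓ J I` is the sign of the permutation rearranging the multi-index `(ℓ, j₁, …, j_m)`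
(`J = (j₁ < ⋯ < j_m)`) into the strictly increasing multi-index `I`, if the former is a
permutation of `I`, and `0` otherwise. -/
def msign {n : ℕ} (ℓ : Fin n) (J I : Finset (Fin n)) : ℝ :=
  if ℓ ∉ J ∧ insert ℓ J = I then (-1 : ℝ) ^ (J.filter (fun j => j < ℓ)).card else 0

/-- The partial derivative `∂f/∂xℓ` at `x`. -/
def pder {n : ℕ} (ℓ : Fin n) (f : Euc n → ℝ) (x : Euc n) : ℝ :=
  fderiv ℝ f x (EuclideanSpace.single ℓ 1)

/-- Coefficients of the exterior derivative `dη` of a (differentiable) `k`-form `η`. -/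
def dcoef {n k : ℕ} (η : Form n k) : Form n (k + 1) := fun x H =>
  ∑ I : MIdx n k, ∑ ℓ : Fin n, msign ℓ I.1 H.1 * pder ℓ (fun y => η y I) x

/-- A smooth compactly supported `k`-form with support contained in `X`. -/
def IsTestForm {n k : ℕ} (X : Set (Euc n)) (η : Form n k) : Prop :=
  (∀ I, ContDiff ℝ (⊤ : ℕ∞) fun x => η x I) ∧
  (∀ I, HasCompactSupport fun x => η x I) ∧
  (∀ I, tsupport (fun x => η x I) ⊆ X)

/-- The weighted inner product `⟨u,v⟩_φ = ∫_X ⟨u,v⟩ e^{−φ} dV` of two `k`-forms. -/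
def wInner {n k : ℕ} (X : Set (Euc n)) (φ : Euc n → ℝ) (u v : Form n k) : ℝ :=
  ∫ x in X, (∑ I : MIdx n k, u x I * v x I) * exp (-φ x)

/-- The squared weighted norm `‖u‖²_φ = ∫_X |u|² e^{−φ} dV` of a `k`-form. -/
def wNormSq {n k : ℕ} (X : Set (Euc n)) (φ : Euc n → ℝ) (u : Form n k) : ℝ :=
  wInner X φ u u

/-- The weighted norm `‖u‖_φ`. -/
def wNorm {n k : ℕ} (X : Set (Euc n)) (φ : Euc n → ℝ) (u : Form n k) : ℝ :=
  Real.sqrt (wNormSq X φ u)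

/-- Membership in `L²_k(X, φ)`: each coefficient is measurable and square-integrable on `X`
with respect to the weight `e^{−φ}`. -/
def MemL2Form {n k : ℕ} (X : Set (Euc n)) (φ : Euc n → ℝ) (u : Form n k) : Prop :=
  ∀ I, AEStronglyMeasurable (fun x => u x I) (volume.restrict X) ∧
    Integrable (fun x => (u x I) ^ 2 * exp (-φ x)) (volume.restrict X)

/-- `w` is the distributional exterior derivative of the `k`-form `u` on `X`:
for every smooth compactly supported `(k+1)`-form `ψ` with support in `X`,
`∫_X ⟨w, ψ⟩ = ∫_X ⟨u, d*₀₀ ψ⟩`, where `d*₀₀` is the unweighted formal adjoint of `d`. -/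
def HasDistD {n k : ℕ} (X : Set (Euc n)) (u : Form n k) (w : Form n (k + 1)) : Prop :=
  ∀ ψ : Form n (k + 1), IsTestForm X ψ →
    (∫ x in X, ∑ H : MIdx n (k + 1), w x H * ψ x H) =
      ∫ x in X, ∑ I : MIdx n k, u x I *
        (-∑ H : MIdx n (k + 1), ∑ ℓ : Fin n, msign ℓ I.1 H.1 * pder ℓ (fun y => ψ y H) x)

/-- `u` belongs to the domain of `d : L²_k(X,φa) ⇸ L²_{k+1}(X,φb)`. -/
def InDomD {n k : ℕ} (X : Set (Euc n)) (φa φb : Euc n → ℝ) (u : Form n k) : Prop :=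
  MemL2Form X φa u ∧ ∃ w : Form n (k + 1), HasDistD X u w ∧ MemL2Form X φb w

/-- `w` is the value of the Hilbert-space adjoint `d*_{φ₂,φ₁}` of
`d : L²_k(X,φ₁) ⇸ L²_{k+1}(X,φ₂)` at `v`; in particular `v ∈ dom d*_{φ₂,φ₁}`. -/
def IsAdjointVal {n k : ℕ} (X : Set (Euc n)) (φ₁ φ₂ : Euc n → ℝ)
    (v : Form n (k + 1)) (w : Form n k) : Prop :=
  MemL2Form X φ₂ v ∧ MemL2Form X φ₁ w ∧
  ∀ (u : Form n k) (du : Form n (k + 1)), MemL2Form X φ₁ u → HasDistD X u du →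
    MemL2Form X φ₂ du → wInner X φ₂ du v = wInner X φ₁ u w

/-- The formal adjoint `d*_{φ₂,φ₁} v = e^{φ₁} d*₀₀ (e^{−φ₂} v)` of the exterior derivative
`d : L²(X,φ₁) ⇸ L²(X,φ₂)`, computed on a (differentiable) `k`-form `v`. -/
def dstarW {n k : ℕ} (φ₁ φ₂ : Euc n → ℝ) (v : Form n k) : Form n (k - 1) := fun x J =>
  -exp (φ₁ x) * ∑ I : MIdx n k, ∑ ℓ : Fin n,
    msign ℓ J.1 I.1 * pder ℓ (fun y => v y I * exp (-φ₂ y)) x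

/-- The operator `δ^φ_ℓ(f) = (∂φ/∂xℓ)·f − ∂f/∂xℓ`. -/
def deltaOp {n : ℕ} (φ : Euc n → ℝ) (ℓ : Fin n) (f : Euc n → ℝ) (x : Euc n) : ℝ :=
  pder ℓ φ x * f x - pder ℓ f x

/-- The Hessian matrix `(∂²φ/∂xᵃ∂xᵇ)(x)`. -/
def hessMat {n : ℕ} (φ : Euc n → ℝ) (x : Euc n) (a b : Fin n) : ℝ :=
  pder a (fun y => pder b φ y) x

end


noncomputable section
open Finset

lemma msign_apply {n : ℕ} (ℓ : Fin n) (J I : Finset (Fin n)) (h : ℓ ∉ J) (h2 : insert ℓ J = I) :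
    msign ℓ J I = (-1 : ℝ) ^ (J.filter (fun j => j < ℓ)).card := if_pos ⟨h, h2⟩

lemma msign_eq_zero {n : ℕ} {ℓ : Fin n} {J I : Finset (Fin n)}
    (h : ¬ (ℓ ∉ J ∧ insert ℓ J = I)) : msign ℓ J I = 0 := if_neg h

lemma msign_mul_ne_zero {n : ℕ} {ℓ ℓ' : Fin n} {J J' I I' : Finset (Fin n)}
    (h : msign ℓ J I * msign ℓ' J' I' ≠ 0) :
    (ℓ ∉ J ∧ insert ℓ J = I) ∧ (ℓ' ∉ J' ∧ insert ℓ' J' = I') := by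
  constructor
  · by_contra hc; exact h (by rw [msign_eq_zero hc, zero_mul])
  · by_contra hc; exact h (by rw [msign_eq_zero (I := I') hc, mul_zero])

/-- The key combinatorial identity for signs. -/
lemma star_id {n : ℕ} (k : ℕ) (ℓ ℓ' : Fin n) (I I' : MIdx n k) :
    (∑ H : MIdx n (k+1), msign ℓ I.1 H.1 * msign ℓ' I'.1 H.1)
      + (∑ J : MIdx n (k-1), msign ℓ J.1 I'.1 * msign ℓ' J.1 I.1)
      = if ℓ = ℓ' ∧ I = I' then 1 else 0 := by
  obtain ⟨I, hI⟩ := I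
  obtain ⟨I', hI'⟩ := I'
  by_cases hll : ℓ = ℓ'
  · subst hll
    by_cases hII : I = I'
    · subst hII
      rw [if_pos (⟨rfl, rfl⟩ : ℓ = ℓ ∧ (⟨I, hI⟩ : MIdx n k) = ⟨I, hI⟩)]
      by_cases hmem : ℓ ∈ I
      · have hz : (∑ H : MIdx n (k+1), msign ℓ I H.1 * msign ℓ I H.1) = 0 := by
          refine Finset.sum_eq_zero fun H _ => ?_
          by_contra hc
          exact (msign_mul_ne_zero hc).1.1 hmem
        rw [hz, zero_add]
        have hJc : (I.erase ℓ).card = k - 1 := by rw [card_erase_of_mem hmem, hI]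
        rw [Fintype.sum_eq_single (⟨I.erase ℓ, hJc⟩ : MIdx n (k-1)) ?_]
        · rw [msign_apply ℓ _ _ (notMem_erase ℓ I) (insert_erase hmem)]
          rw [← pow_add, ← two_mul, pow_mul, neg_one_sq, one_pow]
        · intro J hJ
          by_contra hc
          apply hJ
          obtain ⟨⟨h1, h2⟩, -⟩ := msign_mul_ne_zero hc
          have h2' : insert ℓ J.1 = I := h2
          refine Subtype.ext ?_
          show J.1 = I.erase ℓ
          rw [← h2', erase_insert h1]
      · have hz : (∑ J : MIdx n (k-1), msign ℓ J.1 I * msign ℓ J.1 I) = 0 := by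
          refine Finset.sum_eq_zero fun J _ => ?_
          by_contra hc
          have h2 : insert ℓ J.1 = I := (msign_mul_ne_zero hc).1.2
          exact hmem (h2 ▸ mem_insert_self ℓ J.1)
        rw [hz, add_zero]
        have hHc : (insert ℓ I).card = k + 1 := by rw [card_insert_of_notMem hmem, hI]
        rw [Fintype.sum_eq_single (⟨insert ℓ I, hHc⟩ : MIdx n (k+1)) ?_]
        · rw [msign_apply ℓ _ _ hmem rfl]
          rw [← pow_add, ← two_mul, pow_mul, neg_one_sq, one_pow]
        · intro H hH
          by_contra hc
          apply hH
          obtain ⟨⟨-, h2⟩, -⟩ := msign_mul_ne_zero hc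
          exact Subtype.ext (h2 : insert ℓ I = H.1).symm
    · rw [if_neg (fun h => hII (congrArg Subtype.val h.2))]
      have hz1 : (∑ H : MIdx n (k+1), msign ℓ I H.1 * msign ℓ I' H.1) = 0 := by
        refine Finset.sum_eq_zero fun H _ => ?_
        by_contra hc
        obtain ⟨⟨h1, h2⟩, h3, h4⟩ := msign_mul_ne_zero hc
        have h2' : insert ℓ I = H.1 := h2
        have h4' : insert ℓ I' = H.1 := h4
        exact hII (by rw [← erase_insert h1, h2', ← h4', erase_insert h3])
      have hz2 : (∑ J : MIdx n (k-1), msign ℓ J.1 I' * msign ℓ J.1 I) = 0 := by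
        refine Finset.sum_eq_zero fun J _ => ?_
        by_contra hc
        obtain ⟨⟨h1, h2⟩, h3, h4⟩ := msign_mul_ne_zero hc
        have h2' : insert ℓ J.1 = I' := h2
        have h4' : insert ℓ J.1 = I := h4
        exact hII (by rw [← h2', h4'])
      rw [hz1, hz2, add_zero]
  · rw [if_neg (fun h => hll h.1)]
    by_cases hgood : ℓ ∉ I ∧ ℓ' ∉ I' ∧ insert ℓ I = insert ℓ' I'
    · obtain ⟨hlI, hl'I', hins⟩ := hgood
      have hlI' : ℓ ∈ I' := by
        have : ℓ ∈ insert ℓ' I' := hins ▸ mem_insert_self ℓ I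
        exact (mem_insert.1 this).resolve_left hll
      have hl'I : ℓ' ∈ I := by
        have : ℓ' ∈ insert ℓ I := hins.symm ▸ mem_insert_self ℓ' I'
        exact (mem_insert.1 this).resolve_left (fun h => hll h.symm)
      set J : Finset (Fin n) := I.erase ℓ' with hJdef
      have hJeq : I'.erase ℓ = J := by
        ext a
        have hmemiff := Finset.ext_iff.1 hins
        simp only [mem_insert] at hmemiff
        simp only [mem_erase, hJdef]
        constructor
        · rintro ⟨haℓ, haI'⟩
          have : a = ℓ ∨ a ∈ I := (hmemiff a).2 (Or.inr haI')
          refine ⟨fun h => hl'I' (h ▸ haI'), this.resolve_left haℓ⟩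
        · rintro ⟨haℓ', haI⟩
          have : a = ℓ' ∨ a ∈ I' := (hmemiff a).1 (Or.inr haI)
          refine ⟨fun h => hlI (h ▸ haI), this.resolve_left haℓ'⟩
      have hIJ : insert ℓ' J = I := insert_erase hl'I
      have hI'J : insert ℓ J = I' := by rw [← hJeq]; exact insert_erase hlI'
      have hlJ : ℓ ∉ J := fun h => hlI (mem_of_mem_erase h)
      have hl'J : ℓ' ∉ J := notMem_erase ℓ' I
      have hJc : J.card = k - 1 := by rw [hJdef, card_erase_of_mem hl'I, hI]
      have hHc : (insert ℓ I).card = k + 1 := by rw [card_insert_of_notMem hlI, hI]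
      rw [Fintype.sum_eq_single (⟨insert ℓ I, hHc⟩ : MIdx n (k+1)) ?_,
          Fintype.sum_eq_single (⟨J, hJc⟩ : MIdx n (k-1)) ?_]
      · rw [msign_apply ℓ I _ hlI rfl, msign_apply ℓ' I' _ hl'I' hins.symm,
            msign_apply ℓ J I' hlJ hI'J, msign_apply ℓ' J I hl'J hIJ]
        have e1 : (I.filter (fun j => j < ℓ)).card
            = (J.filter (fun j => j < ℓ)).card + (if ℓ' < ℓ then 1 else 0) := by
          rw [← hIJ, filter_insert]
          split_ifs with h
          · rw [card_insert_of_notMem (fun hmem => hl'J (mem_filter.1 hmem).1)]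
          · rw [add_zero]
        have e2 : (I'.filter (fun j => j < ℓ')).card
            = (J.filter (fun j => j < ℓ')).card + (if ℓ < ℓ' then 1 else 0) := by
          rw [← hI'J, filter_insert]
          split_ifs with h
          · rw [card_insert_of_notMem (fun hmem => hlJ (mem_filter.1 hmem).1)]
          · rw [add_zero]
        have hone : (if ℓ' < ℓ then (1:ℕ) else 0) + (if ℓ < ℓ' then 1 else 0) = 1 := by
          rcases lt_or_gt_of_ne hll with h | h
          · rw [if_neg (asymm h), if_pos h]
          · rw [if_pos h, if_neg (asymm h)]
        rw [← pow_add, ← pow_add, e1, e2,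
          show (J.filter (fun j => j < ℓ)).card + (if ℓ' < ℓ then 1 else 0)
              + ((J.filter (fun j => j < ℓ')).card + (if ℓ < ℓ' then 1 else 0))
            = ((J.filter (fun j => j < ℓ)).card + (J.filter (fun j => j < ℓ')).card) + 1 by
            omega, pow_succ]
        ring
      · intro J' hJ'
        by_contra hc
        apply hJ'
        obtain ⟨⟨h1, h2⟩, -, -⟩ := msign_mul_ne_zero hc
        have h2' : insert ℓ J'.1 = I' := h2
        refine Subtype.ext ?_
        show J'.1 = J
        rw [← hJeq, ← h2', erase_insert h1]
      · intro H hH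
        by_contra hc
        apply hH
        obtain ⟨⟨-, h2⟩, -⟩ := msign_mul_ne_zero hc
        exact Subtype.ext (h2 : insert ℓ I = H.1).symm
    · have hz1 : (∑ H : MIdx n (k+1), msign ℓ I H.1 * msign ℓ' I' H.1) = 0 := by
        refine Finset.sum_eq_zero fun H _ => ?_
        by_contra hc
        obtain ⟨⟨h1, h2⟩, h3, h4⟩ := msign_mul_ne_zero hc
        have h2' : insert ℓ I = H.1 := h2
        have h4' : insert ℓ' I' = H.1 := h4
        exact hgood ⟨h1, h3, by rw [h2', h4']⟩
      have hz2 : (∑ J : MIdx n (k-1), msign ℓ J.1 I' * msign ℓ' J.1 I) = 0 := by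
        refine Finset.sum_eq_zero fun J _ => ?_
        by_contra hc
        obtain ⟨⟨h1, h2⟩, h3, h4⟩ := msign_mul_ne_zero hc
        have h2' : insert ℓ J.1 = I' := h2
        have h4' : insert ℓ' J.1 = I := h4
        apply hgood
        have hlnI : ℓ ∉ I := by
          rw [← h4']
          simp only [mem_insert]
          rintro (h | h)
          · exact hll h
          · exact h1 h
        have hl'nI' : ℓ' ∉ I' := by
          rw [← h2']
          simp only [mem_insert]
          rintro (h | h)
          · exact hll h.symm
          · exact h3 h
        exact ⟨hlnI, hl'nI', by rw [← h2', ← h4', Finset.insert_comm]⟩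
      rw [hz1, hz2, add_zero]

lemma msign_sq_le {n : ℕ} (ℓ : Fin n) (J I : Finset (Fin n)) : msign ℓ J I ^ 2 ≤ 1 := by
  unfold msign
  split_ifs
  · rw [← pow_mul, mul_comm, pow_mul, neg_one_sq, one_pow]
  · norm_num

end
noncomputable section
open MeasureTheory Real Set

/-- Smooth on `X`. -/
def XSm {n : ℕ} (X : Set (Euc n)) (f : Euc n → ℝ) : Prop := ContDiffOn ℝ (⊤ : ℕ∞) f X

/-- Smooth on `X` and vanishing outside the compact `K ⊆ X`. -/
def Good {n : ℕ} (X K : Set (Euc n)) (f : Euc n → ℝ) : Prop :=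
  ContDiffOn ℝ (⊤ : ℕ∞) f X ∧ ∀ x ∉ K, f x = 0

variable {n : ℕ} {X K : Set (Euc n)}

lemma Good.eventually_zero (hK : IsCompact K) {f : Euc n → ℝ} (hf : Good X K f)
    {x : Euc n} (hx : x ∉ K) : f =ᶠ[nhds x] 0 := by
  filter_upwards [hK.isClosed.isOpen_compl.mem_nhds hx] with y hy
  exact hf.2 y hy

lemma Good.differentiableAt (hX : IsOpen X) (hK : IsCompact K) (hKX : K ⊆ X)
    {f : Euc n → ℝ} (hf : Good X K f) (x : Euc n) : DifferentiableAt ℝ f x := by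
  by_cases hx : x ∈ X
  · exact (hf.1.contDiffAt (hX.mem_nhds hx)).differentiableAt (by simp)
  · have := hf.eventually_zero hK (fun hxK => hx (hKX hxK))
    exact ((differentiableAt_const (0 : ℝ)).congr_of_eventuallyEq this)

lemma Good.continuous (hX : IsOpen X) (hK : IsCompact K) (hKX : K ⊆ X)
    {f : Euc n → ℝ} (hf : Good X K f) : Continuous f := by
  rw [continuous_iff_continuousAt]
  exact fun x => (hf.differentiableAt hX hK hKX x).continuousAt

lemma Good.pder_zero (hK : IsCompact K) {f : Euc n → ℝ} (hf : Good X K f)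
    {x : Euc n} (hx : x ∉ K) (ℓ : Fin n) : pder ℓ f x = 0 := by
  unfold pder
  rw [Filter.EventuallyEq.fderiv_eq (hf.eventually_zero hK hx)]
  rw [show (0 : Euc n → ℝ) = (fun _ => (0:ℝ)) from rfl, fderiv_fun_const]
  simp

lemma XSm.pderiv (hX : IsOpen X) {f : Euc n → ℝ} (hf : XSm X f) (ℓ : Fin n) :
    XSm X (pder ℓ f) := by
  have h1 : ContDiffOn ℝ (⊤ : ℕ∞) (fderiv ℝ f) X := hf.fderiv_of_isOpen hX (le_of_eq rfl)
  exact h1.clm_apply contDiffOn_const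

lemma Good.pderiv (hX : IsOpen X) (hK : IsCompact K) {f : Euc n → ℝ} (hf : Good X K f)
    (ℓ : Fin n) : Good X K (pder ℓ f) :=
  ⟨XSm.pderiv hX hf.1 ℓ, fun x hx => hf.pder_zero hK hx ℓ⟩

lemma Good.mul_xsm {f g : Euc n → ℝ} (hf : Good X K f) (hg : XSm X g) :
    Good X K (fun x => f x * g x) :=
  ⟨hf.1.mul hg, fun x hx => by simp only [hf.2 x hx, zero_mul]⟩

lemma XSm.mul_good {f g : Euc n → ℝ} (hf : XSm X f) (hg : Good X K g) :
    Good X K (fun x => f x * g x) :=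
  ⟨ContDiffOn.mul hf hg.1, fun x hx => by simp only [hg.2 x hx, mul_zero]⟩

lemma Good.mul_good {f g : Euc n → ℝ} (hf : Good X K f) (hg : Good X K g) :
    Good X K (fun x => f x * g x) := hf.mul_xsm hg.1

lemma Good.add' {f g : Euc n → ℝ} (hf : Good X K f) (hg : Good X K g) :
    Good X K (fun x => f x + g x) :=
  ⟨hf.1.add hg.1, fun x hx => by simp only [hf.2 x hx, hg.2 x hx, zero_add]⟩

lemma Good.sub' {f g : Euc n → ℝ} (hf : Good X K f) (hg : Good X K g) :
    Good X K (fun x => f x - g x) :=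
  ⟨hf.1.sub hg.1, fun x hx => by simp only [hf.2 x hx, hg.2 x hx, sub_zero]⟩

lemma Good.finset_sum {ι : Type*} (s : Finset ι) (f : ι → Euc n → ℝ)
    (hf : ∀ i ∈ s, Good X K (f i)) : Good X K (fun x => ∑ i ∈ s, f i x) :=
  ⟨ContDiffOn.sum (fun i hi => (hf i hi).1),
   fun x hx => Finset.sum_eq_zero fun i hi => (hf i hi).2 x hx⟩

lemma Good.hasCompactSupport (hK : IsCompact K) {f : Euc n → ℝ} (hf : Good X K f) :
    HasCompactSupport f := HasCompactSupport.intro hK hf.2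

lemma Good.integrable (hX : IsOpen X) (hK : IsCompact K) (hKX : K ⊆ X)
    {f : Euc n → ℝ} (hf : Good X K f) : Integrable f volume :=
  (hf.continuous hX hK hKX).integrable_of_hasCompactSupport (hf.hasCompactSupport hK)

lemma Good.contDiff_one (hX : IsOpen X) (hK : IsCompact K) (hKX : K ⊆ X)
    {f : Euc n → ℝ} (hf : Good X K f) : ContDiff ℝ 1 f := by
  rw [contDiff_one_iff_fderiv]
  refine ⟨fun x => hf.differentiableAt hX hK hKX x, ?_⟩
  rw [continuous_iff_continuousAt]
  intro x
  by_cases hx : x ∈ X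
  · have h1 : ContDiffOn ℝ (⊤ : ℕ∞) (fderiv ℝ f) X := hf.1.fderiv_of_isOpen hX (le_of_eq rfl)
    exact (h1.continuousOn.continuousAt (hX.mem_nhds hx))
  · have hxK : x ∉ K := fun h => hx (hKX h)
    have hev : fderiv ℝ f =ᶠ[nhds x] (fun _ => 0) := by
      filter_upwards [hK.isClosed.isOpen_compl.mem_nhds hxK] with y hy
      have h2 : f =ᶠ[nhds y] 0 := hf.eventually_zero hK hy
      rw [Filter.EventuallyEq.fderiv_eq h2]
      rw [show (0 : Euc n → ℝ) = (fun _ => (0:ℝ)) from rfl, fderiv_fun_const]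
      rfl
    exact (continuousAt_const.congr hev.symm)

/-- The integral of a partial derivative of a compactly supported function vanishes. -/
lemma Good.integral_pder (hX : IsOpen X) (hK : IsCompact K) (hKX : K ⊆ X)
    {f : Euc n → ℝ} (hf : Good X K f) (ℓ : Fin n) : ∫ x, pder ℓ f x = 0 := by
  obtain ⟨C, hC⟩ := ContDiff.lipschitzWith_of_hasCompactSupport
    (hf.hasCompactSupport hK) (hf.contDiff_one hX hK hKX) one_ne_zero
  have key := LipschitzWith.integral_lineDeriv_mul_eq (μ := volume)
    (LipschitzWith.const (1 : ℝ)) hC (hf.hasCompactSupport hK)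
    (-(EuclideanSpace.single ℓ 1))
  have h0 : ∀ (x : Euc n) (v : Euc n), lineDeriv ℝ (fun _ : Euc n => (1:ℝ)) x v = 0 := by
    intro x v
    rw [(differentiableAt_const (1:ℝ)).lineDeriv_eq_fderiv]
    simp
  simp only [h0, zero_mul, integral_zero, mul_one, neg_neg] at key
  have heq : ∫ x, pder ℓ f x = ∫ x, lineDeriv ℝ f x (EuclideanSpace.single ℓ 1) := by
    congr 1
    funext x
    exact ((hf.differentiableAt hX hK hKX x).lineDeriv_eq_fderiv).symm
  rw [heq, ← key]

end
noncomputable section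
open MeasureTheory Real Set

variable {n : ℕ} {X K : Set (Euc n)}

lemma pder_mul {f g : Euc n → ℝ} {x : Euc n} (ℓ : Fin n)
    (hf : DifferentiableAt ℝ f x) (hg : DifferentiableAt ℝ g x) :
    pder ℓ (fun y => f y * g y) x = pder ℓ f x * g x + f x * pder ℓ g x := by
  unfold pder
  rw [fderiv_fun_mul hf hg]
  simp only [ContinuousLinearMap.add_apply, ContinuousLinearMap.smul_apply, smul_eq_mul]
  ring

lemma pder_sub {f g : Euc n → ℝ} {x : Euc n} (ℓ : Fin n)
    (hf : DifferentiableAt ℝ f x) (hg : DifferentiableAt ℝ g x) :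
    pder ℓ (fun y => f y - g y) x = pder ℓ f x - pder ℓ g x := by
  unfold pder
  rw [fderiv_fun_sub hf hg]
  simp

lemma pder_exp_neg {φ : Euc n → ℝ} {x : Euc n} (ℓ : Fin n) (hφ : DifferentiableAt ℝ φ x) :
    pder ℓ (fun y => exp (-φ y)) x = -pder ℓ φ x * exp (-φ x) := by
  unfold pder
  have h : HasFDerivAt (fun y => exp (-φ y)) (exp (-φ x) • -fderiv ℝ φ x) x :=
    (hφ.hasFDerivAt.neg).exp
  rw [h.fderiv]
  simp only [ContinuousLinearMap.coe_smul', Pi.smul_apply, ContinuousLinearMap.neg_apply,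
    smul_eq_mul]
  ring

/-- Schwarz symmetry of second partial derivatives for functions that are
smooth on the open set `X` and vanish outside `K`. -/
lemma Good.pder_comm (hX : IsOpen X) (hK : IsCompact K) (hKX : K ⊆ X)
    {f : Euc n → ℝ} (hf : Good X K f) (ℓ ℓ' : Fin n) (x : Euc n) :
    pder ℓ (pder ℓ' f) x = pder ℓ' (pder ℓ f) x := by
  by_cases hx : x ∈ X
  · have hev : ∀ᶠ y in nhds x, HasFDerivAt f (fderiv ℝ f y) y := by
      filter_upwards [hX.mem_nhds hx] with y hy
      exact ((hf.1.contDiffAt (hX.mem_nhds hy)).differentiableAt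
        (by simp)).hasFDerivAt
    have hf' : ContDiffOn ℝ (⊤ : ℕ∞) (fderiv ℝ f) X := hf.1.fderiv_of_isOpen hX (le_of_eq rfl)
    have hdf' : DifferentiableAt ℝ (fderiv ℝ f) x :=
      (hf'.contDiffAt (hX.mem_nhds hx)).differentiableAt (by simp)
    have hsym := second_derivative_symmetric_of_eventually hev hdf'.hasFDerivAt
      (EuclideanSpace.single ℓ 1) (EuclideanSpace.single ℓ' 1)
    have happ : ∀ (a b : Fin n), pder a (pder b f) x
        = fderiv ℝ (fderiv ℝ f) x (EuclideanSpace.single a 1) (EuclideanSpace.single b 1) := by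
      intro a b
      unfold pder
      rw [show (fun y => (fderiv ℝ f y) (EuclideanSpace.single b 1))
          = fun y => (fderiv ℝ f y) ((fun _ => EuclideanSpace.single b (1:ℝ)) y) from rfl]
      rw [fderiv_clm_apply hdf' (differentiableAt_const _)]
      simp
    rw [happ ℓ ℓ', happ ℓ' ℓ, hsym]
  · have hxK : x ∉ K := fun h => hx (hKX h)
    rw [(hf.pderiv hX hK ℓ').pder_zero hK hxK ℓ, (hf.pderiv hX hK ℓ).pder_zero hK hxK ℓ']

lemma XSm.exp_neg {φ : Euc n → ℝ} (hφ : XSm X φ) : XSm X (fun x => exp (-φ x)) :=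
  Real.contDiff_exp.comp_contDiffOn hφ.neg

lemma XSm.differentiableAt (hX : IsOpen X) {f : Euc n → ℝ} (hf : XSm X f)
    {x : Euc n} (hx : x ∈ X) : DifferentiableAt ℝ f x :=
  (hf.contDiffAt (hX.mem_nhds hx)).differentiableAt (by simp)

/-- Integration by parts: `∫ (δ^φ_ℓ u) w e^{-φ} = ∫ u (∂_ℓ w) e^{-φ}`. -/
lemma ibp (hX : IsOpen X) (hK : IsCompact K) (hKX : K ⊆ X)
    {φ u w : Euc n → ℝ} (hφ : XSm X φ) (hu : Good X K u) (hw : XSm X w) (ℓ : Fin n) :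
    ∫ x, (pder ℓ φ x * u x - pder ℓ u x) * (w x * exp (-φ x))
      = ∫ x, u x * (pder ℓ w x * exp (-φ x)) := by
  have hE : XSm X (fun x => exp (-φ x)) := hφ.exp_neg
  have hwE : XSm X (fun x => w x * exp (-φ x)) := hw.mul hE
  have hG : Good X K (fun x => u x * (w x * exp (-φ x))) := hu.mul_xsm hwE
  have hint : ∫ x, pder ℓ (fun x => u x * (w x * exp (-φ x))) x = 0 :=
    hG.integral_pder hX hK hKX ℓ
  have hpt : ∀ x, pder ℓ (fun x => u x * (w x * exp (-φ x))) x
      = pder ℓ u x * (w x * exp (-φ x)) + u x * (pder ℓ w x * exp (-φ x))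
        - pder ℓ φ x * (u x * (w x * exp (-φ x))) := by
    intro x
    by_cases hx : x ∈ X
    · have hdu := hu.differentiableAt hX hK hKX x
      have hdφ := hφ.differentiableAt hX hx
      have hdw := hw.differentiableAt hX hx
      have hdE : DifferentiableAt ℝ (fun y => exp (-φ y)) x := hE.differentiableAt hX hx
      rw [pder_mul ℓ hdu (hdw.fun_mul hdE), pder_mul ℓ hdw hdE, pder_exp_neg ℓ hdφ]
      ring
    · have hxK : x ∉ K := fun h => hx (hKX h)
      rw [hG.pder_zero hK hxK ℓ, hu.2 x hxK, hu.pder_zero hK hxK ℓ]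
      ring
  have h1 : Integrable (fun x => pder ℓ u x * (w x * exp (-φ x))) volume :=
    ((hu.pderiv hX hK ℓ).mul_xsm hwE).integrable hX hK hKX
  have h2 : Integrable (fun x => u x * (pder ℓ w x * exp (-φ x))) volume :=
    (hu.mul_xsm ((XSm.pderiv hX hw ℓ).mul hE)).integrable hX hK hKX
  have h3 : Integrable (fun x => pder ℓ φ x * (u x * (w x * exp (-φ x)))) volume :=
    (XSm.mul_good (XSm.pderiv hX hφ ℓ) hG).integrable hX hK hKX
  have hsplit : ∫ x, pder ℓ (fun x => u x * (w x * exp (-φ x))) x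
      = (∫ x, pder ℓ u x * (w x * exp (-φ x))) + (∫ x, u x * (pder ℓ w x * exp (-φ x)))
        - ∫ x, pder ℓ φ x * (u x * (w x * exp (-φ x))) := by
    rw [show (fun x => pder ℓ (fun x => u x * (w x * exp (-φ x))) x)
        = fun x => pder ℓ u x * (w x * exp (-φ x)) + u x * (pder ℓ w x * exp (-φ x))
          - pder ℓ φ x * (u x * (w x * exp (-φ x))) from funext hpt]
    have h12 : Integrable (fun x => pder ℓ u x * (w x * exp (-φ x))
        + u x * (pder ℓ w x * exp (-φ x))) volume := h1.add h2
    rw [integral_sub h12 h3, integral_add h1 h2]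
  have hre : (fun x => (pder ℓ φ x * u x - pder ℓ u x) * (w x * exp (-φ x)))
      = fun x => pder ℓ φ x * (u x * (w x * exp (-φ x)))
        - pder ℓ u x * (w x * exp (-φ x)) := by
    funext x; ring
  rw [hre, integral_sub h3 h1]
  rw [hint] at hsplit
  linarith

/-- Key identity: `∫ (δ^φ_ℓ u)(δ^φ_{ℓ'} v) e^{-φ}
  = ∫ ((∂_{ℓ'} u)(∂_ℓ v) + (∂_ℓ ∂_{ℓ'} φ) u v) e^{-φ}`. -/
lemma dd_identity (hX : IsOpen X) (hK : IsCompact K) (hKX : K ⊆ X)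
    {φ u v : Euc n → ℝ} (hφ : XSm X φ) (hu : Good X K u) (hv : Good X K v) (ℓ ℓ' : Fin n) :
    ∫ x, (pder ℓ φ x * u x - pder ℓ u x) * ((pder ℓ' φ x * v x - pder ℓ' v x) * exp (-φ x))
      = ∫ x, (pder ℓ' u x * pder ℓ v x + hessMat φ x ℓ ℓ' * u x * v x) * exp (-φ x) := by
  have hφℓ' : XSm X (pder ℓ' φ) := XSm.pderiv hX hφ ℓ'
  have hw : XSm X (fun x => pder ℓ' φ x * v x - pder ℓ' v x) :=
    (hφℓ'.mul hv.1).sub (XSm.pderiv hX hv.1 ℓ')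
  rw [ibp hX hK hKX hφ hu hw ℓ]
  -- now compute `pder ℓ (δ^φ_{ℓ'} v)` on `X` and handle the complement
  have hpt : ∀ x, u x * (pder ℓ (fun y => pder ℓ' φ y * v y - pder ℓ' v y) x * exp (-φ x))
      = u x * ((hessMat φ x ℓ ℓ' * v x
          + (pder ℓ' φ x * pder ℓ v x - pder ℓ' (pder ℓ v) x)) * exp (-φ x)) := by
    intro x
    by_cases hx : x ∈ X
    · have hdφℓ' : DifferentiableAt ℝ (pder ℓ' φ) x := hφℓ'.differentiableAt hX hx
      have hdv := hv.differentiableAt hX hK hKX x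
      have hdvℓ' : DifferentiableAt ℝ (pder ℓ' v) x :=
        (XSm.pderiv hX hv.1 ℓ').differentiableAt hX hx
      rw [pder_sub ℓ (hdφℓ'.fun_mul hdv) hdvℓ', pder_mul ℓ hdφℓ' hdv,
        hv.pder_comm hX hK hKX ℓ ℓ' x]
      unfold hessMat
      ring
    · have hxK : x ∉ K := fun h => hx (hKX h)
      rw [hu.2 x hxK]
      ring
  rw [show (fun x => u x * (pder ℓ (fun y => pder ℓ' φ y * v y - pder ℓ' v y) x * exp (-φ x)))
      = _ from funext hpt]
  -- split into the Hessian part and the remaining part, and do one more ibp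
  have hE : XSm X (fun x => exp (-φ x)) := hφ.exp_neg
  have hhess : XSm X (fun x => hessMat φ x ℓ ℓ') := by
    have : XSm X (pder ℓ (pder ℓ' φ)) := XSm.pderiv hX (XSm.pderiv hX hφ ℓ') ℓ
    exact this
  have hIhess : Integrable (fun x => u x * (hessMat φ x ℓ ℓ' * v x * exp (-φ x))) volume :=
    (hu.mul_xsm ((hhess.mul hv.1).mul hE)).integrable hX hK hKX
  have hIrem : Integrable (fun x => u x
      * ((pder ℓ' φ x * pder ℓ v x - pder ℓ' (pder ℓ v) x) * exp (-φ x))) volume := by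
    refine (hu.mul_xsm (ContDiffOn.mul ?_ hE)).integrable hX hK hKX
    exact (hφℓ'.mul (XSm.pderiv hX hv.1 ℓ)).sub (XSm.pderiv hX (XSm.pderiv hX hv.1 ℓ) ℓ')
  have hsplit : ∫ x, u x * ((hessMat φ x ℓ ℓ' * v x
        + (pder ℓ' φ x * pder ℓ v x - pder ℓ' (pder ℓ v) x)) * exp (-φ x))
      = (∫ x, u x * (hessMat φ x ℓ ℓ' * v x * exp (-φ x)))
        + ∫ x, u x * ((pder ℓ' φ x * pder ℓ v x - pder ℓ' (pder ℓ v) x) * exp (-φ x)) := by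
    rw [← integral_add hIhess hIrem]
    congr 1
    funext x
    ring
  rw [hsplit]
  -- second integration by parts, with `u' := ∂_ℓ v` and `w' := u`
  have hibp2 := ibp hX hK hKX hφ (hv.pderiv hX hK ℓ) hu.1 ℓ'
  have hre : (fun x => u x * ((pder ℓ' φ x * pder ℓ v x - pder ℓ' (pder ℓ v) x) * exp (-φ x)))
      = fun x => (pder ℓ' φ x * pder ℓ v x - pder ℓ' (pder ℓ v) x) * (u x * exp (-φ x)) := by
    funext x; ring
  rw [hre, hibp2]
  have hI4 : Integrable (fun x => pder ℓ v x * (pder ℓ' u x * exp (-φ x))) volume :=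
    ((hv.pderiv hX hK ℓ).mul_xsm ((XSm.pderiv hX hu.1 ℓ').mul hE)).integrable hX hK hKX
  rw [← integral_add hIhess hI4]
  congr 1
  funext x
  ring

end
noncomputable section
open Finset

variable {n : ℕ}

lemma hflat {k : ℕ} (g : MIdx n k → Fin n → ℝ) :
    (∑ t : MIdx n k × Fin n, g t.1 t.2) = ∑ I : MIdx n k, ∑ ℓ : Fin n, g I ℓ := by
  rw [Fintype.sum_prod_type]

lemma star_id' {k : ℕ} (t₁ t₂ : MIdx n k × Fin n) :
    (∑ H : MIdx n (k+1), msign t₁.2 t₁.1.1 H.1 * msign t₂.2 t₂.1.1 H.1)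
      = (if t₁ = t₂ then (1:ℝ) else 0)
        - ∑ J : MIdx n (k-1), msign t₁.2 J.1 t₂.1.1 * msign t₂.2 J.1 t₁.1.1 := by
  have h := star_id k t₁.2 t₂.2 t₁.1 t₂.1
  have hiff : (t₁.2 = t₂.2 ∧ t₁.1 = t₂.1) ↔ t₁ = t₂ := by
    rw [Prod.ext_iff]; tauto
  rw [if_congr hiff rfl rfl] at h
  linarith

/-- Pointwise expansion of `Σ_H |(dη)_H|²`. -/
lemma alg1 {k : ℕ} (a : MIdx n k → Fin n → ℝ) :
    (∑ H : MIdx n (k+1), (∑ I : MIdx n k, ∑ ℓ : Fin n, msign ℓ I.1 H.1 * a I ℓ)^2)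
    + (∑ J : MIdx n (k-1), ∑ I₁ : MIdx n k, ∑ I₂ : MIdx n k, ∑ ℓ₁ : Fin n, ∑ ℓ₂ : Fin n,
        msign ℓ₁ J.1 I₁.1 * msign ℓ₂ J.1 I₂.1 * (a I₁ ℓ₂ * a I₂ ℓ₁))
    = ∑ I : MIdx n k, ∑ ℓ : Fin n, a I ℓ ^ 2 := by
  classical
  have e1 : (∑ H : MIdx n (k+1), (∑ I : MIdx n k, ∑ ℓ : Fin n, msign ℓ I.1 H.1 * a I ℓ)^2)
      = ∑ t₁ : MIdx n k × Fin n, ∑ t₂ : MIdx n k × Fin n, (a t₁.1 t₁.2 * a t₂.1 t₂.2)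
          * ∑ H : MIdx n (k+1), msign t₁.2 t₁.1.1 H.1 * msign t₂.2 t₂.1.1 H.1 := by
    have e0 : ∀ H : MIdx n (k+1), (∑ I : MIdx n k, ∑ ℓ : Fin n, msign ℓ I.1 H.1 * a I ℓ)^2
        = ∑ t₁ : MIdx n k × Fin n, ∑ t₂ : MIdx n k × Fin n,
            (msign t₁.2 t₁.1.1 H.1 * a t₁.1 t₁.2) * (msign t₂.2 t₂.1.1 H.1 * a t₂.1 t₂.2) := by
      intro H
      rw [← hflat (fun I ℓ => msign ℓ I.1 H.1 * a I ℓ), sq, Finset.sum_mul_sum]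
    simp only [e0]
    rw [Finset.sum_comm]
    refine Finset.sum_congr rfl fun t₁ _ => ?_
    rw [Finset.sum_comm]
    refine Finset.sum_congr rfl fun t₂ _ => ?_
    rw [Finset.mul_sum]
    exact Finset.sum_congr rfl fun H _ => by ring
  rw [e1]
  simp only [star_id']
  have e2 : ∀ t₁ t₂ : MIdx n k × Fin n,
      (a t₁.1 t₁.2 * a t₂.1 t₂.2) * ((if t₁ = t₂ then (1:ℝ) else 0)
        - ∑ J : MIdx n (k-1), msign t₁.2 J.1 t₂.1.1 * msign t₂.2 J.1 t₁.1.1)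
      = (if t₁ = t₂ then a t₁.1 t₁.2 * a t₂.1 t₂.2 else 0)
        - ∑ J : MIdx n (k-1),
            (a t₁.1 t₁.2 * a t₂.1 t₂.2) * (msign t₁.2 J.1 t₂.1.1 * msign t₂.2 J.1 t₁.1.1) := by
    intro t₁ t₂
    rw [mul_sub, Finset.mul_sum]
    split_ifs <;> ring
  simp only [e2]
  rw [Finset.sum_congr rfl (fun t₁ _ => Finset.sum_sub_distrib _ _), Finset.sum_sub_distrib]
  have e3 : (∑ t₁ : MIdx n k × Fin n, ∑ t₂ : MIdx n k × Fin n,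
      (if t₁ = t₂ then a t₁.1 t₁.2 * a t₂.1 t₂.2 else 0))
      = ∑ I : MIdx n k, ∑ ℓ : Fin n, a I ℓ ^ 2 := by
    rw [← hflat (fun I ℓ => a I ℓ ^ 2)]
    refine Finset.sum_congr rfl fun t₁ _ => ?_
    rw [Finset.sum_ite_eq Finset.univ t₁ (fun t₂ => a t₁.1 t₁.2 * a t₂.1 t₂.2)]
    simp [sq]
  rw [e3]
  have e4 : (∑ t₁ : MIdx n k × Fin n, ∑ t₂ : MIdx n k × Fin n, ∑ J : MIdx n (k-1),
      (a t₁.1 t₁.2 * a t₂.1 t₂.2) * (msign t₁.2 J.1 t₂.1.1 * msign t₂.2 J.1 t₁.1.1))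
      = ∑ J : MIdx n (k-1), ∑ I₁ : MIdx n k, ∑ I₂ : MIdx n k, ∑ ℓ₁ : Fin n, ∑ ℓ₂ : Fin n,
          msign ℓ₁ J.1 I₁.1 * msign ℓ₂ J.1 I₂.1 * (a I₁ ℓ₂ * a I₂ ℓ₁) := by
    rw [Finset.sum_congr rfl fun (t₁ : MIdx n k × Fin n) _ =>
      (Finset.sum_comm (s := (Finset.univ : Finset (MIdx n k × Fin n)))
        (t := (Finset.univ : Finset (MIdx n (k-1))))
        (f := fun t₂ J => (a t₁.1 t₁.2 * a t₂.1 t₂.2)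
          * (msign t₁.2 J.1 t₂.1.1 * msign t₂.2 J.1 t₁.1.1)))]
    rw [Finset.sum_comm]
    refine Finset.sum_congr rfl fun J _ => ?_
    rw [hflat (fun I ℓ₁ => ∑ t₂ : MIdx n k × Fin n,
      (a I ℓ₁ * a t₂.1 t₂.2) * (msign ℓ₁ J.1 t₂.1.1 * msign t₂.2 J.1 I.1))]
    have inner : ∀ (I : MIdx n k) (ℓ₁ : Fin n),
        (∑ t₂ : MIdx n k × Fin n,
          (a I ℓ₁ * a t₂.1 t₂.2) * (msign ℓ₁ J.1 t₂.1.1 * msign t₂.2 J.1 I.1))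
        = ∑ I₂ : MIdx n k, ∑ ℓ₂ : Fin n,
            (a I ℓ₁ * a I₂ ℓ₂) * (msign ℓ₁ J.1 I₂.1 * msign ℓ₂ J.1 I.1) :=
      fun I ℓ₁ => hflat (fun I₂ ℓ₂ => (a I ℓ₁ * a I₂ ℓ₂) * (msign ℓ₁ J.1 I₂.1 * msign ℓ₂ J.1 I.1))
    simp only [inner]
    rw [Finset.sum_congr rfl fun (I : MIdx n k) _ =>
      (Finset.sum_comm (s := (Finset.univ : Finset (Fin n)))
        (t := (Finset.univ : Finset (MIdx n k)))
        (f := fun ℓ₁ I₂ => ∑ ℓ₂ : Fin n,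
          (a I ℓ₁ * a I₂ ℓ₂) * (msign ℓ₁ J.1 I₂.1 * msign ℓ₂ J.1 I.1)))]
    rw [Finset.sum_comm]
    refine Finset.sum_congr rfl fun I₁ _ => Finset.sum_congr rfl fun I₂ _ =>
      Finset.sum_congr rfl fun ℓ₁ _ => Finset.sum_congr rfl fun ℓ₂ _ => by ring
  rw [e4]
  ring

end
noncomputable section
open Finset

variable {n : ℕ} {X K : Set (Euc n)}

lemma Good.const_mul {f : Euc n → ℝ} (c : ℝ) (hf : Good X K f) :
    Good X K (fun x => c * f x) := XSm.mul_good contDiffOn_const hf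

lemma Good.sq' {f : Euc n → ℝ} (hf : Good X K f) : Good X K (fun x => f x ^ 2) :=
  ⟨hf.1.pow 2, fun x hx => by simp [hf.2 x hx]⟩

lemma unflatten5 {k m : ℕ} (F : MIdx n m → MIdx n k → Fin n → MIdx n k → Fin n → ℝ) :
    (∑ q : MIdx n m × (MIdx n k × Fin n) × (MIdx n k × Fin n),
        F q.1 q.2.1.1 q.2.1.2 q.2.2.1 q.2.2.2)
    = ∑ J : MIdx n m, ∑ I₁ : MIdx n k, ∑ I₂ : MIdx n k, ∑ ℓ₁ : Fin n, ∑ ℓ₂ : Fin n,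
        F J I₁ ℓ₁ I₂ ℓ₂ := by
  rw [Fintype.sum_prod_type]
  refine Finset.sum_congr rfl fun J _ => ?_
  rw [Fintype.sum_prod_type]
  rw [hflat (fun I₁ ℓ₁ => ∑ t₂ : MIdx n k × Fin n, F J I₁ ℓ₁ t₂.1 t₂.2)]
  refine Finset.sum_congr rfl fun I₁ _ => ?_
  have h1 : ∀ ℓ₁ : Fin n, (∑ t₂ : MIdx n k × Fin n, F J I₁ ℓ₁ t₂.1 t₂.2)
      = ∑ I₂ : MIdx n k, ∑ ℓ₂ : Fin n, F J I₁ ℓ₁ I₂ ℓ₂ :=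
    fun ℓ₁ => hflat (fun I₂ ℓ₂ => F J I₁ ℓ₁ I₂ ℓ₂)
  simp only [h1]
  exact Finset.sum_comm

/-- Flattening of the square expansion of a `J`-indexed family. -/
lemma ptflat {k m : ℕ} (s : Fin n → MIdx n k → MIdx n m → ℝ) (g : MIdx n k → Fin n → ℝ)
    (E : ℝ) :
    (∑ J : MIdx n m, (∑ I : MIdx n k, ∑ ℓ : Fin n, s ℓ I J * g I ℓ)^2) * E
    = ∑ q : MIdx n m × (MIdx n k × Fin n) × (MIdx n k × Fin n),
        (s q.2.1.2 q.2.1.1 q.1 * s q.2.2.2 q.2.2.1 q.1)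
          * (g q.2.1.1 q.2.1.2 * (g q.2.2.1 q.2.2.2 * E)) := by
  rw [Finset.sum_mul]
  conv_rhs => rw [Fintype.sum_prod_type]
  refine Finset.sum_congr rfl fun J _ => ?_
  rw [← hflat (fun I ℓ => s ℓ I J * g I ℓ), sq, Finset.sum_mul_sum, Finset.sum_mul]
  conv_rhs => rw [Fintype.sum_prod_type]
  refine Finset.sum_congr rfl fun t₁ _ => ?_
  rw [Finset.sum_mul]
  exact Finset.sum_congr rfl fun t₂ _ => by ring

/-- Cauchy–Schwarz for the sign sums. -/
lemma alg2 {k m : ℕ} (J : MIdx n m) (p : MIdx n k → Fin n → ℝ) :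
    (∑ I : MIdx n k, ∑ ℓ : Fin n, msign ℓ J.1 I.1 * p I ℓ)^2
      ≤ (Fintype.card (MIdx n k) * n : ℕ) * ∑ I : MIdx n k, ∑ ℓ : Fin n, (p I ℓ)^2 := by
  rw [← hflat (fun I ℓ => msign ℓ J.1 I.1 * p I ℓ), ← hflat (fun I ℓ => (p I ℓ)^2)]
  calc (∑ t : MIdx n k × Fin n, msign t.2 J.1 t.1.1 * p t.1 t.2)^2
      ≤ (Finset.univ.card : ℝ) * ∑ t : MIdx n k × Fin n, (msign t.2 J.1 t.1.1 * p t.1 t.2)^2 :=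
        sq_sum_le_card_mul_sum_sq
    _ ≤ (Fintype.card (MIdx n k) * n : ℕ) * ∑ t : MIdx n k × Fin n, (p t.1 t.2)^2 := by
        rw [Finset.card_univ]
        have hcard : (Fintype.card (MIdx n k × Fin n) : ℝ)
            = ((Fintype.card (MIdx n k) * n : ℕ) : ℝ) := by
          rw [Fintype.card_prod, Fintype.card_fin]
        rw [hcard]
        refine mul_le_mul_of_nonneg_left (Finset.sum_le_sum fun t _ => ?_) (by positivity)
        rw [mul_pow]
        calc msign t.2 J.1 t.1.1 ^ 2 * p t.1 t.2 ^ 2 ≤ 1 * p t.1 t.2 ^ 2 :=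
              mul_le_mul_of_nonneg_right (msign_sq_le _ _ _) (sq_nonneg _)
          _ = p t.1 t.2 ^ 2 := one_mul _

end
noncomputable section
lemma exp_sq_helper (c D F S : ℝ) (h : c * c * D = F) :
    (c * S) * (c * S) * D = S ^ 2 * F := by rw [← h]; ring
end
noncomputable section
open MeasureTheory Real Set Finset

lemma sum5_mul {n k m : ℕ} (F : MIdx n m → MIdx n k → Fin n → MIdx n k → Fin n → ℝ) (E : ℝ) :
    (∑ J : MIdx n m, ∑ I₁ : MIdx n k, ∑ I₂ : MIdx n k, ∑ ℓ₁ : Fin n, ∑ ℓ₂ : Fin n,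
        F J I₁ ℓ₁ I₂ ℓ₂) * E
    = ∑ J : MIdx n m, ∑ I₁ : MIdx n k, ∑ I₂ : MIdx n k, ∑ ℓ₁ : Fin n, ∑ ℓ₂ : Fin n,
        F J I₁ ℓ₁ I₂ ℓ₂ * E := by
  rw [Finset.sum_mul]
  refine Finset.sum_congr rfl fun J _ => ?_
  rw [Finset.sum_mul]
  refine Finset.sum_congr rfl fun I₁ _ => ?_
  rw [Finset.sum_mul]
  refine Finset.sum_congr rfl fun I₂ _ => ?_
  rw [Finset.sum_mul]
  refine Finset.sum_congr rfl fun ℓ₁ _ => ?_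
  rw [Finset.sum_mul]

lemma quad_helper (e p B M : ℝ) (h : p^2 ≤ M * B) : (e + p)^2 ≤ 2*e^2 + 2*M*B := by
  nlinarith [sq_nonneg (e - p)]

lemma final_helper (HH GG QD DD RR DS BB Mc : ℝ) (h2 : DD + RR = GG) (h3 : QD = HH + RR)
    (h7 : QD ≤ 2*DS + 2*Mc*BB) (hDS : 0 ≤ DS) (hDD : 0 ≤ DD) (hBB : 0 ≤ BB) (hMc : 0 ≤ Mc) :
    HH + GG ≤ (2 * Mc + 2) * (DS + DD + BB) := by
  nlinarith [mul_nonneg hMc hDS, mul_nonneg hMc hBB, mul_nonneg hMc hDD]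

end


set_option maxHeartbeats 3200000 in
/-- The stronger a priori estimate (Remark `rem:stima`), which also controls
the full gradient term `Σ'_I Σ_ℓ |∂η_I/∂xℓ|²`. -/
theorem stronger_apriori_estimate (n k : ℕ) :
    ∃ C : ℕ, ∀ X : Set (Euc n), IsOpen X → IsConnected X →
      ∀ φ ψ : Euc n → ℝ, ContDiffOn ℝ (⊤ : ℕ∞) φ X → ContDiffOn ℝ (⊤ : ℕ∞) ψ X →
      ∀ η : Form n k, IsTestForm X η →
      (∫ x in X,
        ((∑ J : MIdx n (k - 1), ∑ I₁ : MIdx n k, ∑ I₂ : MIdx n k,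
          ∑ ℓ₁ : Fin n, ∑ ℓ₂ : Fin n,
          msign ℓ₁ J.1 I₁.1 * msign ℓ₂ J.1 I₂.1 * hessMat φ x ℓ₁ ℓ₂ * η x I₁ * η x I₂)
         + ∑ I : MIdx n k, ∑ ℓ : Fin n, (pder ℓ (fun y => η y I) x) ^ 2)
        * exp (-φ x)) ≤
      (C : ℝ) *
        (wNormSq X (fun x => φ x - 2 * ψ x)
            (dstarW (fun x => φ x - 2 * ψ x) (fun x => φ x - ψ x) η)
          + wNormSq X φ (dcoef η)
          + ∫ x in X,
              (∑ I : MIdx n k, ∑ ℓ : Fin n, (pder ℓ ψ x) ^ 2 * (η x I) ^ 2) * exp (-φ x)) := by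
  classical
  refine ⟨2 * (Fintype.card (MIdx n (k - 1)) * (Fintype.card (MIdx n k) * n)) + 2,
    fun X hX _hXconn φ ψ hφ' hψ' η hη => ?_⟩
  set Mc : ℕ := Fintype.card (MIdx n (k - 1)) * (Fintype.card (MIdx n k) * n) with hMcdef
  -- the compact support set
  set K : Set (Euc n) := ⋃ I : MIdx n k, tsupport (fun x => η x I) with hKdef
  have hK : IsCompact K := isCompact_iUnion fun I => hη.2.1 I
  have hKX : K ⊆ X := Set.iUnion_subset fun I => hη.2.2 I
  have hφ : XSm X φ := hφ'
  have hψ : XSm X ψ := hψ'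
  have hE : XSm X (fun x => exp (-φ x)) := hφ.exp_neg
  have hηG : ∀ I : MIdx n k, Good X K (fun x => η x I) := fun I =>
    ⟨(hη.1 I).contDiffOn, fun x hx =>
      image_eq_zero_of_notMem_tsupport (f := fun x => η x I)
        (fun hm => hx (Set.mem_iUnion.2 ⟨I, hm⟩))⟩
  -- coefficient families
  set aa : MIdx n k → Fin n → Euc n → ℝ := fun I ℓ x => pder ℓ (fun y => η y I) x with haa
  set dd : MIdx n k → Fin n → Euc n → ℝ :=
    fun I ℓ x => pder ℓ φ x * η x I - aa I ℓ x with hdd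
  set pp : MIdx n k → Fin n → Euc n → ℝ := fun I ℓ x => pder ℓ ψ x * η x I with hpp
  set ee : MIdx n k → Fin n → Euc n → ℝ := fun I ℓ x => dd I ℓ x - pp I ℓ x with hee
  have haaG : ∀ I ℓ, Good X K (aa I ℓ) := fun I ℓ => (hηG I).pderiv hX hK ℓ
  have hddG : ∀ I ℓ, Good X K (dd I ℓ) := fun I ℓ =>
    (XSm.mul_good (XSm.pderiv hX hφ ℓ) (hηG I)).sub' (haaG I ℓ)
  have hppG : ∀ I ℓ, Good X K (pp I ℓ) := fun I ℓ =>
    XSm.mul_good (XSm.pderiv hX hψ ℓ) (hηG I)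
  have heeG : ∀ I ℓ, Good X K (ee I ℓ) := fun I ℓ => (hddG I ℓ).sub' (hppG I ℓ)
  have hInt : ∀ {f : Euc n → ℝ}, Good X K f → Integrable f volume := fun hf =>
    hf.integrable hX hK hKX
  have hhess : ∀ ℓ₁ ℓ₂ : Fin n, XSm X (fun x => hessMat φ x ℓ₁ ℓ₂) := fun ℓ₁ ℓ₂ =>
    XSm.pderiv hX (XSm.pderiv hX hφ ℓ₂) ℓ₁
  -- goodness of the sign-weighted sums
  have hSdd : ∀ J : MIdx n (k-1),
      Good X K (fun x => ∑ I : MIdx n k, ∑ ℓ : Fin n, msign ℓ J.1 I.1 * dd I ℓ x) := fun J =>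
    Good.finset_sum _ _ fun I _ => Good.finset_sum _ _ fun ℓ _ =>
      Good.const_mul _ (hddG I ℓ)
  have hSee : ∀ J : MIdx n (k-1),
      Good X K (fun x => ∑ I : MIdx n k, ∑ ℓ : Fin n, msign ℓ J.1 I.1 * ee I ℓ x) := fun J =>
    Good.finset_sum _ _ fun I _ => Good.finset_sum _ _ fun ℓ _ =>
      Good.const_mul _ (heeG I ℓ)
  have hSaa : ∀ H : MIdx n (k+1),
      Good X K (fun x => ∑ I : MIdx n k, ∑ ℓ : Fin n, msign ℓ I.1 H.1 * aa I ℓ x) := fun H =>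
    Good.finset_sum _ _ fun I _ => Good.finset_sum _ _ fun ℓ _ =>
      Good.const_mul _ (haaG I ℓ)
  -- the main scalar quantities
  set QD : ℝ := ∫ x, (∑ J : MIdx n (k-1),
      (∑ I : MIdx n k, ∑ ℓ : Fin n, msign ℓ J.1 I.1 * dd I ℓ x)^2) * exp (-φ x) with hQDdef
  set DS : ℝ := ∫ x, (∑ J : MIdx n (k-1),
      (∑ I : MIdx n k, ∑ ℓ : Fin n, msign ℓ J.1 I.1 * ee I ℓ x)^2) * exp (-φ x) with hDSdef
  set DD : ℝ := ∫ x, (∑ H : MIdx n (k+1),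
      (∑ I : MIdx n k, ∑ ℓ : Fin n, msign ℓ I.1 H.1 * aa I ℓ x)^2) * exp (-φ x) with hDDdef
  set BB : ℝ := ∫ x, (∑ I : MIdx n k, ∑ ℓ : Fin n, (pp I ℓ x)^2) * exp (-φ x) with hBBdef
  set HH : ℝ := ∫ x, (∑ J : MIdx n (k-1), ∑ I₁ : MIdx n k, ∑ I₂ : MIdx n k,
      ∑ ℓ₁ : Fin n, ∑ ℓ₂ : Fin n,
      msign ℓ₁ J.1 I₁.1 * msign ℓ₂ J.1 I₂.1 * hessMat φ x ℓ₁ ℓ₂ * η x I₁ * η x I₂)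
      * exp (-φ x) with hHHdef
  set GG : ℝ := ∫ x, (∑ I : MIdx n k, ∑ ℓ : Fin n, aa I ℓ x ^ 2) * exp (-φ x) with hGGdef
  set RR : ℝ := ∫ x, (∑ J : MIdx n (k-1), ∑ I₁ : MIdx n k, ∑ I₂ : MIdx n k,
      ∑ ℓ₁ : Fin n, ∑ ℓ₂ : Fin n,
      msign ℓ₁ J.1 I₁.1 * msign ℓ₂ J.1 I₂.1 * (aa I₁ ℓ₂ x * aa I₂ ℓ₁ x))
      * exp (-φ x) with hRRdef
  -- goodness of the big integrands
  have hHxG : Good X K (fun x => ∑ J : MIdx n (k-1), ∑ I₁ : MIdx n k, ∑ I₂ : MIdx n k,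
      ∑ ℓ₁ : Fin n, ∑ ℓ₂ : Fin n,
      msign ℓ₁ J.1 I₁.1 * msign ℓ₂ J.1 I₂.1 * hessMat φ x ℓ₁ ℓ₂ * η x I₁ * η x I₂) :=
    Good.finset_sum _ _ fun J _ => Good.finset_sum _ _ fun I₁ _ =>
      Good.finset_sum _ _ fun I₂ _ => Good.finset_sum _ _ fun ℓ₁ _ =>
      Good.finset_sum _ _ fun ℓ₂ _ =>
        ((XSm.mul_good (contDiffOn_const.mul (hhess ℓ₁ ℓ₂)) (hηG I₁)).mul_good (hηG I₂))
  have hRxG : Good X K (fun x => ∑ J : MIdx n (k-1), ∑ I₁ : MIdx n k, ∑ I₂ : MIdx n k,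
      ∑ ℓ₁ : Fin n, ∑ ℓ₂ : Fin n,
      msign ℓ₁ J.1 I₁.1 * msign ℓ₂ J.1 I₂.1 * (aa I₁ ℓ₂ x * aa I₂ ℓ₁ x)) :=
    Good.finset_sum _ _ fun J _ => Good.finset_sum _ _ fun I₁ _ =>
      Good.finset_sum _ _ fun I₂ _ => Good.finset_sum _ _ fun ℓ₁ _ =>
      Good.finset_sum _ _ fun ℓ₂ _ =>
        Good.const_mul _ ((haaG I₁ ℓ₂).mul_good (haaG I₂ ℓ₁))
  have hGxG : Good X K (fun x => ∑ I : MIdx n k, ∑ ℓ : Fin n, aa I ℓ x ^ 2) :=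
    Good.finset_sum _ _ fun I _ => Good.finset_sum _ _ fun ℓ _ => (haaG I ℓ).sq'
  have hQxG : Good X K (fun x => ∑ J : MIdx n (k-1),
      (∑ I : MIdx n k, ∑ ℓ : Fin n, msign ℓ J.1 I.1 * dd I ℓ x)^2) :=
    Good.finset_sum _ _ fun J _ => (hSdd J).sq'
  have hSxG : Good X K (fun x => ∑ J : MIdx n (k-1),
      (∑ I : MIdx n k, ∑ ℓ : Fin n, msign ℓ J.1 I.1 * ee I ℓ x)^2) :=
    Good.finset_sum _ _ fun J _ => (hSee J).sq'
  have hDxG : Good X K (fun x => ∑ H : MIdx n (k+1),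
      (∑ I : MIdx n k, ∑ ℓ : Fin n, msign ℓ I.1 H.1 * aa I ℓ x)^2) :=
    Good.finset_sum _ _ fun H _ => (hSaa H).sq'
  have hBxG : Good X K (fun x => ∑ I : MIdx n k, ∑ ℓ : Fin n, (pp I ℓ x)^2) :=
    Good.finset_sum _ _ fun I _ => Good.finset_sum _ _ fun ℓ _ => (hppG I ℓ).sq'

  -- (c2)  DD + RR = GG
  have hc2 : DD + RR = GG := by
    rw [hDDdef, hRRdef, hGGdef,
      ← integral_add (hInt (hDxG.mul_xsm hE)) (hInt (hRxG.mul_xsm hE))]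
    congr 1
    funext x
    rw [← add_mul]
    congr 1
    exact alg1 (fun I ℓ => aa I ℓ x)
  -- nonnegativity
  have hDD0 : 0 ≤ DD := integral_nonneg fun x =>
    mul_nonneg (Finset.sum_nonneg fun H _ => sq_nonneg _) (exp_nonneg _)
  have hDS0 : 0 ≤ DS := integral_nonneg fun x =>
    mul_nonneg (Finset.sum_nonneg fun J _ => sq_nonneg _) (exp_nonneg _)
  have hBB0 : 0 ≤ BB := integral_nonneg fun x =>
    mul_nonneg (Finset.sum_nonneg fun I _ => Finset.sum_nonneg fun ℓ _ => sq_nonneg _)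
      (exp_nonneg _)
  -- (c4)  wNormSq X φ (dcoef η) = DD
  have hc4 : wNormSq X φ (dcoef η) = DD := by
    have h1 : wNormSq X φ (dcoef η)
        = ∫ x in X, (∑ H : MIdx n (k+1),
            (∑ I : MIdx n k, ∑ ℓ : Fin n, msign ℓ I.1 H.1 * aa I ℓ x)^2) * exp (-φ x) := by
      show (∫ x in X, (∑ H : MIdx n (k+1), dcoef η x H * dcoef η x H) * exp (-φ x)) = _
      refine setIntegral_congr_fun hX.measurableSet fun x _ => ?_
      congr 1
      refine Finset.sum_congr rfl fun H _ => ?_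
      rw [pow_two]
      rfl
    rw [h1, hDDdef]
    refine setIntegral_eq_integral_of_forall_compl_eq_zero fun x hx => ?_
    have hxK : x ∉ K := fun h => hx (hKX h)
    rw [Finset.sum_eq_zero fun H _ => ?_, zero_mul]
    rw [Finset.sum_eq_zero fun I _ => Finset.sum_eq_zero fun ℓ _ => ?_]
    · ring
    · rw [(haaG I ℓ).2 x hxK, mul_zero]
  -- (c6)  the gradient-of-ψ term equals BB
  have hc6 : (∫ x in X,
        (∑ I : MIdx n k, ∑ ℓ : Fin n, (pder ℓ ψ x) ^ 2 * (η x I) ^ 2) * exp (-φ x)) = BB := by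
    have h1 : (∫ x in X,
          (∑ I : MIdx n k, ∑ ℓ : Fin n, (pder ℓ ψ x) ^ 2 * (η x I) ^ 2) * exp (-φ x))
        = ∫ x in X, (∑ I : MIdx n k, ∑ ℓ : Fin n, (pp I ℓ x)^2) * exp (-φ x) := by
      refine setIntegral_congr_fun hX.measurableSet fun x _ => ?_
      congr 1
      refine Finset.sum_congr rfl fun I _ => Finset.sum_congr rfl fun ℓ _ => ?_
      simp only [hpp]
      ring
    rw [h1, hBBdef]
    refine setIntegral_eq_integral_of_forall_compl_eq_zero fun x hx => ?_
    have hxK : x ∉ K := fun h => hx (hKX h)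
    rw [Finset.sum_eq_zero fun I _ => Finset.sum_eq_zero fun ℓ _ => ?_, zero_mul]
    rw [(hppG I ℓ).2 x hxK]
    ring
  -- (c1)  the left-hand side equals HH + GG
  have hc1 : (∫ x in X,
        ((∑ J : MIdx n (k - 1), ∑ I₁ : MIdx n k, ∑ I₂ : MIdx n k,
          ∑ ℓ₁ : Fin n, ∑ ℓ₂ : Fin n,
          msign ℓ₁ J.1 I₁.1 * msign ℓ₂ J.1 I₂.1 * hessMat φ x ℓ₁ ℓ₂ * η x I₁ * η x I₂)
         + ∑ I : MIdx n k, ∑ ℓ : Fin n, (pder ℓ (fun y => η y I) x) ^ 2)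
        * exp (-φ x)) = HH + GG := by
    have h0 : (∫ x in X,
        ((∑ J : MIdx n (k - 1), ∑ I₁ : MIdx n k, ∑ I₂ : MIdx n k,
          ∑ ℓ₁ : Fin n, ∑ ℓ₂ : Fin n,
          msign ℓ₁ J.1 I₁.1 * msign ℓ₂ J.1 I₂.1 * hessMat φ x ℓ₁ ℓ₂ * η x I₁ * η x I₂)
         + ∑ I : MIdx n k, ∑ ℓ : Fin n, (pder ℓ (fun y => η y I) x) ^ 2)
        * exp (-φ x)) = ∫ x,
        ((∑ J : MIdx n (k - 1), ∑ I₁ : MIdx n k, ∑ I₂ : MIdx n k,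
          ∑ ℓ₁ : Fin n, ∑ ℓ₂ : Fin n,
          msign ℓ₁ J.1 I₁.1 * msign ℓ₂ J.1 I₂.1 * hessMat φ x ℓ₁ ℓ₂ * η x I₁ * η x I₂)
         + ∑ I : MIdx n k, ∑ ℓ : Fin n, (pder ℓ (fun y => η y I) x) ^ 2)
        * exp (-φ x) := by
      refine setIntegral_eq_integral_of_forall_compl_eq_zero fun x hx => ?_
      have hxK : x ∉ K := fun h => hx (hKX h)
      have hA : (∑ J : MIdx n (k - 1), ∑ I₁ : MIdx n k, ∑ I₂ : MIdx n k,
          ∑ ℓ₁ : Fin n, ∑ ℓ₂ : Fin n,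
          msign ℓ₁ J.1 I₁.1 * msign ℓ₂ J.1 I₂.1 * hessMat φ x ℓ₁ ℓ₂ * η x I₁ * η x I₂) = 0 :=
        Finset.sum_eq_zero fun J _ => Finset.sum_eq_zero fun I₁ _ =>
          Finset.sum_eq_zero fun I₂ _ => Finset.sum_eq_zero fun ℓ₁ _ =>
          Finset.sum_eq_zero fun ℓ₂ _ => by
            have hz : η x I₂ = 0 := (hηG I₂).2 x hxK
            rw [hz, mul_zero]
      have hB : (∑ I : MIdx n k, ∑ ℓ : Fin n, (pder ℓ (fun y => η y I) x) ^ 2) = 0 :=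
        Finset.sum_eq_zero fun I _ => Finset.sum_eq_zero fun ℓ _ => by
          have hz : pder ℓ (fun y => η y I) x = 0 := (haaG I ℓ).2 x hxK
          rw [hz]
          ring
      rw [hA, hB, add_zero, zero_mul]
    rw [h0, hHHdef, hGGdef,
      ← integral_add (hInt (hHxG.mul_xsm hE)) (hInt (hGxG.mul_xsm hE))]
    congr 1
    funext x
    simp only [haa]
    ring

  -- (c5)  the adjoint-term norm equals DS
  have hc5 : wNormSq X (fun x => φ x - 2 * ψ x)
      (dstarW (fun x => φ x - 2 * ψ x) (fun x => φ x - ψ x) η) = DS := by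
    have hα : XSm X (fun y => φ y - ψ y) := hφ.sub hψ
    have h1 : wNormSq X (fun x => φ x - 2 * ψ x)
        (dstarW (fun x => φ x - 2 * ψ x) (fun x => φ x - ψ x) η)
        = ∫ x in X, (∑ J : MIdx n (k-1),
            (∑ I : MIdx n k, ∑ ℓ : Fin n, msign ℓ J.1 I.1 * ee I ℓ x)^2) * exp (-φ x) := by
      show (∫ x in X, (∑ J : MIdx n (k-1),
          dstarW (fun x => φ x - 2 * ψ x) (fun x => φ x - ψ x) η x J *
          dstarW (fun x => φ x - 2 * ψ x) (fun x => φ x - ψ x) η x J)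
          * exp (-(φ x - 2 * ψ x))) = _
      refine setIntegral_congr_fun hX.measurableSet fun x hx => ?_
      have hpd : ∀ (I : MIdx n k) (ℓ : Fin n),
          pder ℓ (fun y => η y I * exp (-(φ y - ψ y))) x
            = -ee I ℓ x * exp (-(φ x - ψ x)) := by
        intro I ℓ
        rw [pder_mul ℓ ((hηG I).differentiableAt hX hK hKX x)
            (hα.exp_neg.differentiableAt hX hx),
          pder_exp_neg ℓ (hα.differentiableAt hX hx),
          pder_sub ℓ (hφ.differentiableAt hX hx) (hψ.differentiableAt hX hx)]
        simp only [hee, hdd, hpp, haa]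
        ring
      have hcoef : ∀ J : MIdx n (k-1),
          dstarW (fun x => φ x - 2 * ψ x) (fun x => φ x - ψ x) η x J
            = exp (-ψ x) * ∑ I : MIdx n k, ∑ ℓ : Fin n, msign ℓ J.1 I.1 * ee I ℓ x := by
        intro J
        show -exp (φ x - 2 * ψ x) * (∑ I : MIdx n k, ∑ ℓ : Fin n,
            msign ℓ J.1 I.1 * pder ℓ (fun y => η y I * exp (-(φ y - ψ y))) x) = _
        rw [Finset.sum_congr rfl fun (I : MIdx n k) _ =>
          Finset.sum_congr rfl fun (ℓ : Fin n) _ => by rw [hpd I ℓ]]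
        rw [show (∑ I : MIdx n k, ∑ ℓ : Fin n,
            msign ℓ J.1 I.1 * (-ee I ℓ x * exp (-(φ x - ψ x))))
            = (-exp (-(φ x - ψ x)))
              * ∑ I : MIdx n k, ∑ ℓ : Fin n, msign ℓ J.1 I.1 * ee I ℓ x from by
          rw [Finset.mul_sum]
          refine Finset.sum_congr rfl fun I _ => ?_
          rw [Finset.mul_sum]
          exact Finset.sum_congr rfl fun ℓ _ => by ring]
        rw [← mul_assoc]
        congr 1
        rw [mul_neg, neg_mul, neg_neg, ← Real.exp_add]
        congr 1
        ring
      rw [Finset.sum_congr rfl fun (J : MIdx n (k-1)) _ => by rw [hcoef J]]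
      have hexp : exp (-ψ x) * exp (-ψ x) * exp (-(φ x - 2 * ψ x)) = exp (-φ x) := by
        rw [← Real.exp_add, ← Real.exp_add]
        congr 1
        ring
      rw [Finset.sum_mul, Finset.sum_mul]
      exact Finset.sum_congr rfl fun J _ => exp_sq_helper _ _ _ _ hexp
    rw [h1, hDSdef]
    refine setIntegral_eq_integral_of_forall_compl_eq_zero fun x hx => ?_
    have hxK : x ∉ K := fun h => hx (hKX h)
    rw [Finset.sum_eq_zero fun J _ => ?_, zero_mul]
    rw [Finset.sum_eq_zero fun I _ => Finset.sum_eq_zero fun ℓ _ => ?_]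
    · ring
    · rw [(heeG I ℓ).2 x hxK, mul_zero]

  -- (c3)  QD = HH + RR  via integration by parts (dd_identity)
  have hc3 : QD = HH + RR := by
    have hιInt : ∀ q : MIdx n (k-1) × (MIdx n k × Fin n) × (MIdx n k × Fin n),
        Integrable (fun x => dd q.2.1.1 q.2.1.2 x * (dd q.2.2.1 q.2.2.2 x * exp (-φ x)))
          volume :=
      fun q => hInt ((hddG _ _).mul_xsm ((hddG _ _).1.mul hE))
    have hflatQ : (fun x => (∑ J : MIdx n (k-1),
        (∑ I : MIdx n k, ∑ ℓ : Fin n, msign ℓ J.1 I.1 * dd I ℓ x)^2) * exp (-φ x))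
        = fun x => ∑ q : MIdx n (k-1) × (MIdx n k × Fin n) × (MIdx n k × Fin n),
            (msign q.2.1.2 q.1.1 q.2.1.1.1 * msign q.2.2.2 q.1.1 q.2.2.1.1)
              * (dd q.2.1.1 q.2.1.2 x * (dd q.2.2.1 q.2.2.2 x * exp (-φ x))) :=
      funext fun x => ptflat (fun ℓ I J => msign ℓ J.1 I.1) (fun I ℓ => dd I ℓ x) (exp (-φ x))
    have hqd1 : QD = ∑ q : MIdx n (k-1) × (MIdx n k × Fin n) × (MIdx n k × Fin n),
        (msign q.2.1.2 q.1.1 q.2.1.1.1 * msign q.2.2.2 q.1.1 q.2.2.1.1)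
          * ∫ x, dd q.2.1.1 q.2.1.2 x * (dd q.2.2.1 q.2.2.2 x * exp (-φ x)) := by
      rw [hQDdef, hflatQ, integral_finset_sum _ fun q _ => (hιInt q).const_mul _]
      exact Finset.sum_congr rfl fun q _ => integral_const_mul _ _
    have hqd2 : ∀ q : MIdx n (k-1) × (MIdx n k × Fin n) × (MIdx n k × Fin n),
        (∫ x, dd q.2.1.1 q.2.1.2 x * (dd q.2.2.1 q.2.2.2 x * exp (-φ x)))
          = ∫ x, (aa q.2.1.1 q.2.2.2 x * aa q.2.2.1 q.2.1.2 x
              + hessMat φ x q.2.1.2 q.2.2.2 * η x q.2.1.1 * η x q.2.2.1) * exp (-φ x) :=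
      fun q => dd_identity hX hK hKX hφ (hηG q.2.1.1) (hηG q.2.2.1) q.2.1.2 q.2.2.2
    have hqInt2 : ∀ q : MIdx n (k-1) × (MIdx n k × Fin n) × (MIdx n k × Fin n),
        Integrable (fun x => (aa q.2.1.1 q.2.2.2 x * aa q.2.2.1 q.2.1.2 x
            + hessMat φ x q.2.1.2 q.2.2.2 * η x q.2.1.1 * η x q.2.2.1) * exp (-φ x))
          volume := fun q =>
      hInt ((((haaG _ _).mul_good (haaG _ _)).add'
        ((XSm.mul_good (hhess q.2.1.2 q.2.2.2) (hηG q.2.1.1)).mul_good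
          (hηG q.2.2.1))).mul_xsm hE)
    have hqd3 : QD = ∫ x, ∑ q : MIdx n (k-1) × (MIdx n k × Fin n) × (MIdx n k × Fin n),
        (msign q.2.1.2 q.1.1 q.2.1.1.1 * msign q.2.2.2 q.1.1 q.2.2.1.1)
          * ((aa q.2.1.1 q.2.2.2 x * aa q.2.2.1 q.2.1.2 x
              + hessMat φ x q.2.1.2 q.2.2.2 * η x q.2.1.1 * η x q.2.2.1) * exp (-φ x)) := by
      rw [hqd1, integral_finset_sum _ fun q _ => (hqInt2 q).const_mul _]
      exact Finset.sum_congr rfl fun q _ => by rw [hqd2 q, integral_const_mul]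
    rw [hqd3, hHHdef, hRRdef,
      ← integral_add (hInt (hHxG.mul_xsm hE)) (hInt (hRxG.mul_xsm hE))]
    congr 1
    funext x
    have hper : ∀ q : MIdx n (k-1) × (MIdx n k × Fin n) × (MIdx n k × Fin n),
        (msign q.2.1.2 q.1.1 q.2.1.1.1 * msign q.2.2.2 q.1.1 q.2.2.1.1)
          * ((aa q.2.1.1 q.2.2.2 x * aa q.2.2.1 q.2.1.2 x
              + hessMat φ x q.2.1.2 q.2.2.2 * η x q.2.1.1 * η x q.2.2.1) * exp (-φ x))
        = (msign q.2.1.2 q.1.1 q.2.1.1.1 * msign q.2.2.2 q.1.1 q.2.2.1.1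
            * hessMat φ x q.2.1.2 q.2.2.2 * η x q.2.1.1 * η x q.2.2.1 * exp (-φ x))
          + (msign q.2.1.2 q.1.1 q.2.1.1.1 * msign q.2.2.2 q.1.1 q.2.2.1.1
              * (aa q.2.1.1 q.2.2.2 x * aa q.2.2.1 q.2.1.2 x) * exp (-φ x)) :=
      fun q => by ring
    rw [Finset.sum_congr rfl fun q _ => hper q, Finset.sum_add_distrib]
    have hu1 : (∑ q : MIdx n (k-1) × (MIdx n k × Fin n) × (MIdx n k × Fin n),
        msign q.2.1.2 q.1.1 q.2.1.1.1 * msign q.2.2.2 q.1.1 q.2.2.1.1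
          * hessMat φ x q.2.1.2 q.2.2.2 * η x q.2.1.1 * η x q.2.2.1 * exp (-φ x))
        = ∑ J : MIdx n (k-1), ∑ I₁ : MIdx n k, ∑ I₂ : MIdx n k, ∑ ℓ₁ : Fin n, ∑ ℓ₂ : Fin n,
            msign ℓ₁ J.1 I₁.1 * msign ℓ₂ J.1 I₂.1 * hessMat φ x ℓ₁ ℓ₂
              * η x I₁ * η x I₂ * exp (-φ x) :=
      unflatten5 (fun J I₁ ℓ₁ I₂ ℓ₂ => msign ℓ₁ J.1 I₁.1 * msign ℓ₂ J.1 I₂.1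
        * hessMat φ x ℓ₁ ℓ₂ * η x I₁ * η x I₂ * exp (-φ x))
    have hu2 : (∑ q : MIdx n (k-1) × (MIdx n k × Fin n) × (MIdx n k × Fin n),
        msign q.2.1.2 q.1.1 q.2.1.1.1 * msign q.2.2.2 q.1.1 q.2.2.1.1
          * (aa q.2.1.1 q.2.2.2 x * aa q.2.2.1 q.2.1.2 x) * exp (-φ x))
        = ∑ J : MIdx n (k-1), ∑ I₁ : MIdx n k, ∑ I₂ : MIdx n k, ∑ ℓ₁ : Fin n, ∑ ℓ₂ : Fin n,
            msign ℓ₁ J.1 I₁.1 * msign ℓ₂ J.1 I₂.1 * (aa I₁ ℓ₂ x * aa I₂ ℓ₁ x)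
              * exp (-φ x) :=
      unflatten5 (fun J I₁ ℓ₁ I₂ ℓ₂ => msign ℓ₁ J.1 I₁.1 * msign ℓ₂ J.1 I₂.1
        * (aa I₁ ℓ₂ x * aa I₂ ℓ₁ x) * exp (-φ x))
    rw [hu1, hu2]
    have hs1 : (∑ J : MIdx n (k-1), ∑ I₁ : MIdx n k, ∑ I₂ : MIdx n k,
        ∑ ℓ₁ : Fin n, ∑ ℓ₂ : Fin n,
        msign ℓ₁ J.1 I₁.1 * msign ℓ₂ J.1 I₂.1 * hessMat φ x ℓ₁ ℓ₂ * η x I₁ * η x I₂)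
        * exp (-φ x)
        = ∑ J : MIdx n (k-1), ∑ I₁ : MIdx n k, ∑ I₂ : MIdx n k, ∑ ℓ₁ : Fin n, ∑ ℓ₂ : Fin n,
            msign ℓ₁ J.1 I₁.1 * msign ℓ₂ J.1 I₂.1 * hessMat φ x ℓ₁ ℓ₂
              * η x I₁ * η x I₂ * exp (-φ x) :=
      sum5_mul (fun J I₁ ℓ₁ I₂ ℓ₂ => msign ℓ₁ J.1 I₁.1 * msign ℓ₂ J.1 I₂.1
        * hessMat φ x ℓ₁ ℓ₂ * η x I₁ * η x I₂) (exp (-φ x))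
    have hs2 : (∑ J : MIdx n (k-1), ∑ I₁ : MIdx n k, ∑ I₂ : MIdx n k,
        ∑ ℓ₁ : Fin n, ∑ ℓ₂ : Fin n,
        msign ℓ₁ J.1 I₁.1 * msign ℓ₂ J.1 I₂.1 * (aa I₁ ℓ₂ x * aa I₂ ℓ₁ x)) * exp (-φ x)
        = ∑ J : MIdx n (k-1), ∑ I₁ : MIdx n k, ∑ I₂ : MIdx n k, ∑ ℓ₁ : Fin n, ∑ ℓ₂ : Fin n,
            msign ℓ₁ J.1 I₁.1 * msign ℓ₂ J.1 I₂.1 * (aa I₁ ℓ₂ x * aa I₂ ℓ₁ x)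
              * exp (-φ x) :=
      sum5_mul (fun J I₁ ℓ₁ I₂ ℓ₂ => msign ℓ₁ J.1 I₁.1 * msign ℓ₂ J.1 I₂.1
        * (aa I₁ ℓ₂ x * aa I₂ ℓ₁ x)) (exp (-φ x))
    rw [← hs1, ← hs2]

  -- (c7) QD ≤ 2 DS + 2 Mc BB
  have hc7 : QD ≤ 2 * DS + 2 * (Mc:ℝ) * BB := by
    have hpt : ∀ x : Euc n, (∑ J : MIdx n (k-1),
        (∑ I : MIdx n k, ∑ ℓ : Fin n, msign ℓ J.1 I.1 * dd I ℓ x)^2) * exp (-φ x)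
        ≤ (2 * (∑ J : MIdx n (k-1),
            (∑ I : MIdx n k, ∑ ℓ : Fin n, msign ℓ J.1 I.1 * ee I ℓ x)^2)
          + 2 * (Mc:ℝ) * (∑ I : MIdx n k, ∑ ℓ : Fin n, (pp I ℓ x)^2)) * exp (-φ x) := by
      intro x
      refine mul_le_mul_of_nonneg_right ?_ (exp_nonneg _)
      have hJ : ∀ J : MIdx n (k-1),
          (∑ I : MIdx n k, ∑ ℓ : Fin n, msign ℓ J.1 I.1 * dd I ℓ x)^2
          ≤ 2 * (∑ I : MIdx n k, ∑ ℓ : Fin n, msign ℓ J.1 I.1 * ee I ℓ x)^2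
            + 2 * ((Fintype.card (MIdx n k) * n : ℕ):ℝ)
              * (∑ I : MIdx n k, ∑ ℓ : Fin n, (pp I ℓ x)^2) := by
        intro J
        have hsplit : (∑ I : MIdx n k, ∑ ℓ : Fin n, msign ℓ J.1 I.1 * dd I ℓ x)
            = (∑ I : MIdx n k, ∑ ℓ : Fin n, msign ℓ J.1 I.1 * ee I ℓ x)
              + (∑ I : MIdx n k, ∑ ℓ : Fin n, msign ℓ J.1 I.1 * pp I ℓ x) := by
          rw [← Finset.sum_add_distrib]
          refine Finset.sum_congr rfl fun I _ => ?_
          rw [← Finset.sum_add_distrib]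
          refine Finset.sum_congr rfl fun ℓ _ => ?_
          simp only [hee]
          ring
        have hcs := alg2 J (fun I ℓ => pp I ℓ x)
        rw [hsplit]
        exact quad_helper _ _ _ _ hcs
      calc (∑ J : MIdx n (k-1),
            (∑ I : MIdx n k, ∑ ℓ : Fin n, msign ℓ J.1 I.1 * dd I ℓ x)^2)
          ≤ ∑ J : MIdx n (k-1),
            (2 * (∑ I : MIdx n k, ∑ ℓ : Fin n, msign ℓ J.1 I.1 * ee I ℓ x)^2
              + 2 * ((Fintype.card (MIdx n k) * n : ℕ):ℝ)
                * (∑ I : MIdx n k, ∑ ℓ : Fin n, (pp I ℓ x)^2)) :=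
            Finset.sum_le_sum fun J _ => hJ J
        _ = 2 * (∑ J : MIdx n (k-1),
              (∑ I : MIdx n k, ∑ ℓ : Fin n, msign ℓ J.1 I.1 * ee I ℓ x)^2)
            + 2 * (Mc:ℝ) * (∑ I : MIdx n k, ∑ ℓ : Fin n, (pp I ℓ x)^2) := by
            rw [Finset.sum_add_distrib, ← Finset.mul_sum, Finset.sum_const,
              Finset.card_univ, nsmul_eq_mul, hMcdef]
            push_cast
            ring
    have h1 : Integrable (fun x => (∑ J : MIdx n (k-1),
        (∑ I : MIdx n k, ∑ ℓ : Fin n, msign ℓ J.1 I.1 * dd I ℓ x)^2) * exp (-φ x)) volume :=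
      hInt (hQxG.mul_xsm hE)
    have h2good : Good X K (fun x => 2 * (∑ J : MIdx n (k-1),
        (∑ I : MIdx n k, ∑ ℓ : Fin n, msign ℓ J.1 I.1 * ee I ℓ x)^2)
        + 2 * (Mc:ℝ) * (∑ I : MIdx n k, ∑ ℓ : Fin n, (pp I ℓ x)^2)) :=
      (Good.const_mul 2 hSxG).add' (Good.const_mul _ hBxG)
    have h2 : Integrable (fun x => (2 * (∑ J : MIdx n (k-1),
        (∑ I : MIdx n k, ∑ ℓ : Fin n, msign ℓ J.1 I.1 * ee I ℓ x)^2)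
        + 2 * (Mc:ℝ) * (∑ I : MIdx n k, ∑ ℓ : Fin n, (pp I ℓ x)^2)) * exp (-φ x)) volume :=
      hInt (h2good.mul_xsm hE)
    have h3 : Integrable (fun x => (∑ J : MIdx n (k-1),
        (∑ I : MIdx n k, ∑ ℓ : Fin n, msign ℓ J.1 I.1 * ee I ℓ x)^2) * exp (-φ x)) volume :=
      hInt (hSxG.mul_xsm hE)
    have h4 : Integrable (fun x =>
        (∑ I : MIdx n k, ∑ ℓ : Fin n, (pp I ℓ x)^2) * exp (-φ x)) volume :=
      hInt (hBxG.mul_xsm hE)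
    calc QD ≤ ∫ x, (2 * (∑ J : MIdx n (k-1),
          (∑ I : MIdx n k, ∑ ℓ : Fin n, msign ℓ J.1 I.1 * ee I ℓ x)^2)
          + 2 * (Mc:ℝ) * (∑ I : MIdx n k, ∑ ℓ : Fin n, (pp I ℓ x)^2)) * exp (-φ x) := by
          rw [hQDdef]
          exact integral_mono h1 h2 hpt
      _ = 2 * DS + 2 * (Mc:ℝ) * BB := by
          rw [hDSdef, hBBdef]
          rw [show (fun x => (2 * (∑ J : MIdx n (k-1),
              (∑ I : MIdx n k, ∑ ℓ : Fin n, msign ℓ J.1 I.1 * ee I ℓ x)^2)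
              + 2 * (Mc:ℝ) * (∑ I : MIdx n k, ∑ ℓ : Fin n, (pp I ℓ x)^2)) * exp (-φ x))
              = fun x => 2 * ((∑ J : MIdx n (k-1),
                (∑ I : MIdx n k, ∑ ℓ : Fin n, msign ℓ J.1 I.1 * ee I ℓ x)^2) * exp (-φ x))
              + (2 * (Mc:ℝ)) * ((∑ I : MIdx n k, ∑ ℓ : Fin n, (pp I ℓ x)^2) * exp (-φ x))
            from funext fun x => by ring]
          rw [integral_add (h3.const_mul 2) (h4.const_mul _), integral_const_mul,
            integral_const_mul]
  -- final assembly
  have hMc0 : (0:ℝ) ≤ (Mc:ℝ) := Nat.cast_nonneg _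
  rw [hc1, hc5, hc4, hc6]
  push_cast
  exact final_helper _ _ _ _ _ _ _ _ hc2 hc3 hc7 hDS0 hDD0 hBB0 hMc0
end

section
/- Let (H₁, ⟨·,·⟩_{H₁}) and (H₂, ⟨·,·⟩_{H₂}) be Hilbert spaces, let T : H₁ ⇸ H₂ be a densely defined closed linear operator with adjoint T* : H₂ ⇸ H₁, and let F ⊆ H₂ be a closed subspace with im T ⊆ F. Then im T = F if and only if there exists C > 0 such that ‖y‖_{H₂} ≤ C ‖T* y‖_{H₁} for every y ∈ dom T* ∩ F. -/
open MeasureTheory Real Topology Filter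

noncomputable section

open LinearPMap RealInnerProductSpace in
private theorem range_eq_aux_mp {H₁ H₂ : Type*}
    [NormedAddCommGroup H₁] [InnerProductSpace ℝ H₁] [CompleteSpace H₁]
    [NormedAddCommGroup H₂] [InnerProductSpace ℝ H₂] [CompleteSpace H₂]
    (T : H₁ →ₗ.[ℝ] H₂)
    (hdense : Dense (T.domain : Set H₁))
    (hclosed : IsClosed (T.graph : Set (H₁ × H₂)))
    (F : Submodule ℝ H₂) (hF : IsClosed (F : Set H₂))
    (hTF : ∀ x : T.domain, T x ∈ F)
    (h : ({y : H₂ | ∃ x : T.domain, T x = y} = (F : Set H₂))) :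
      ∃ C > (0 : ℝ), ∀ y : T.adjoint.domain, (y : H₂) ∈ F →
        ‖(y : H₂)‖ ≤ C * ‖T.adjoint y‖ := by
  haveI : CompleteSpace T.graph := hclosed.completeSpace_coe
  haveI : CompleteSpace F := hF.completeSpace_coe
  have hmem : ∀ a : T.graph, (a : H₁ × H₂).2 ∈ F := by
    intro a
    obtain ⟨y, hy1, hy2⟩ := T.mem_graph_iff.mp a.2
    rw [← hy2]; exact hTF y
  set Slin : T.graph →ₗ[ℝ] F :=
    ((LinearMap.snd ℝ H₁ H₂).comp T.graph.subtype).codRestrict F hmem with hSlin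
  set S : T.graph →L[ℝ] F := Slin.mkContinuous 1 (fun a => by
    rw [one_mul]; exact norm_snd_le (a : H₁ × H₂)) with hS
  have hsurj : Function.Surjective S := by
    rintro ⟨f, hf⟩
    have : f ∈ {y : H₂ | ∃ x : T.domain, T x = y} := h ▸ hf
    obtain ⟨x, hx⟩ := this
    exact ⟨⟨((x : H₁), T x), T.mem_graph x⟩, Subtype.ext hx⟩
  obtain ⟨C, hC, hpre⟩ := S.exists_preimage_norm_le hsurj
  refine ⟨C, hC, fun y hyF => ?_⟩
  obtain ⟨a, ha, hna⟩ := hpre ⟨(y : H₂), hyF⟩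
  obtain ⟨x, hx1, hx2⟩ := T.mem_graph_iff.mp a.2
  have hTx : T x = (y : H₂) := by
    have : ((S a : F) : H₂) = (y : H₂) := by rw [ha]
    rwa [hx2]
  have hxa : ‖(x : H₁)‖ ≤ C * ‖(y : H₂)‖ := by
    calc ‖(x : H₁)‖ ≤ ‖(a : H₁ × H₂)‖ := hx1 ▸ norm_fst_le (a : H₁ × H₂)
    _ ≤ C * ‖(y : H₂)‖ := hna
  have hinner : ‖(y : H₂)‖ ^ 2 = ⟪T.adjoint y, (x : H₁)⟫ := by
    rw [adjoint_isFormalAdjoint hdense y x, hTx, real_inner_self_eq_norm_sq]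
  rcases eq_or_lt_of_le (norm_nonneg (y : H₂)) with h0 | h0
  · rw [← h0]; positivity
  · have := calc ‖(y : H₂)‖ ^ 2 = ⟪T.adjoint y, (x : H₁)⟫ := hinner
      _ ≤ ‖T.adjoint y‖ * ‖(x : H₁)‖ := real_inner_le_norm _ _
      _ ≤ ‖T.adjoint y‖ * (C * ‖(y : H₂)‖) := by
          exact mul_le_mul_of_nonneg_left hxa (norm_nonneg _)
    have h3 : ‖T.adjoint y‖ * (C * ‖(y : H₂)‖) = C * ‖T.adjoint y‖ * ‖(y : H₂)‖ := by ring
    have h4 : ‖(y : H₂)‖ * ‖(y : H₂)‖ ≤ C * ‖T.adjoint y‖ * ‖(y : H₂)‖ := by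
      have := pow_two ‖(y : H₂)‖
      linarith
    exact le_of_mul_le_mul_right h4 h0

open LinearPMap RealInnerProductSpace in
private theorem range_eq_aux_mpr {H₁ H₂ : Type*}
    [NormedAddCommGroup H₁] [InnerProductSpace ℝ H₁] [CompleteSpace H₁]
    [NormedAddCommGroup H₂] [InnerProductSpace ℝ H₂] [CompleteSpace H₂]
    (T : H₁ →ₗ.[ℝ] H₂)
    (hdense : Dense (T.domain : Set H₁))
    (hclosed : IsClosed (T.graph : Set (H₁ × H₂)))
    (F : Submodule ℝ H₂) (hF : IsClosed (F : Set H₂))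
    (hTF : ∀ x : T.domain, T x ∈ F)
    (C : ℝ) (hC : C > 0)
    (hest : ∀ y : T.adjoint.domain, (y : H₂) ∈ F →
        ‖(y : H₂)‖ ≤ C * ‖T.adjoint y‖) :
    ({y : H₂ | ∃ x : T.domain, T x = y} = (F : Set H₂)) := by
  haveI : CompleteSpace F := hF.completeSpace_coe
  apply Set.Subset.antisymm
  · rintro _ ⟨x, rfl⟩; exact hTF x
  intro z hz
  -- Step A : the fundamental estimate for all y in the adjoint domain
  have keyA : ∀ y : T.adjoint.domain, |⟪z, (y : H₂)⟫| ≤ C * ‖z‖ * ‖T.adjoint y‖ := by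
    intro y
    set y' : H₂ := (Submodule.orthogonalProjection F (y : H₂) : H₂) with hy'
    have hy'F : y' ∈ F := (Submodule.orthogonalProjection F (y : H₂)).2
    have hperp : (y : H₂) - y' ∈ Fᗮ := F.sub_starProjection_mem_orthogonal (y : H₂)
    have hinnF : ∀ w : H₂, w ∈ F → ⟪w, (y : H₂)⟫ = ⟪w, y'⟫ := by
      intro w hw
      have := hperp w hw
      have h2 : ⟪w, (y : H₂) - y'⟫ = 0 := this
      rw [inner_sub_right] at h2
      linarith
    have hy'dom : y' ∈ T.adjoint.domain := by
      apply T.mem_adjoint_domain_of_exists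
      refine ⟨T.adjoint y, fun x => ?_⟩
      rw [adjoint_isFormalAdjoint hdense y x, real_inner_comm (T x) (y : H₂), real_inner_comm (T x) y']
      exact hinnF (T x) (hTF x)
    have hTy' : T.adjoint ⟨y', hy'dom⟩ = T.adjoint y := by
      apply adjoint_apply_eq hdense
      intro x
      rw [adjoint_isFormalAdjoint hdense y x]
      show (⟪(y : H₂), T x⟫ = ⟪y', T x⟫)
      rw [real_inner_comm (T x) (y : H₂), real_inner_comm (T x) y']
      exact hinnF (T x) (hTF x)
    calc |⟪z, (y : H₂)⟫| = |⟪z, y'⟫| := by rw [hinnF z hz]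
      _ ≤ ‖z‖ * ‖y'‖ := abs_real_inner_le_norm _ _
      _ ≤ ‖z‖ * (C * ‖T.adjoint ⟨y', hy'dom⟩‖) := by
          apply mul_le_mul_of_nonneg_left _ (norm_nonneg _)
          exact hest ⟨y', hy'dom⟩ hy'F
      _ = C * ‖z‖ * ‖T.adjoint y‖ := by rw [hTy']; ring
  -- Step B : construct x via Hahn-Banach and Riesz
  set A : T.adjoint.domain →ₗ[ℝ] H₁ := T.adjoint.toFun with hA
  have hAapp : ∀ y : T.adjoint.domain, A y = T.adjoint y := fun _ => rfl
  set ℓ : T.adjoint.domain →ₗ[ℝ] ℝ :=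
    (innerSL ℝ z).toLinearMap.comp (T.adjoint.domain.subtype) with hℓ
  have hℓapp : ∀ y : T.adjoint.domain, ℓ y = ⟪z, (y : H₂)⟫ := fun _ => rfl
  have hker : LinearMap.ker A ≤ LinearMap.ker ℓ := by
    intro y hy
    rw [LinearMap.mem_ker] at hy ⊢
    have := keyA y
    rw [← hAapp, hy, norm_zero, mul_zero] at this
    have h0 : |⟪z, (y : H₂)⟫| ≤ 0 := this
    rw [hℓapp]
    exact abs_eq_zero.mp (le_antisymm h0 (abs_nonneg _))
  set R : Submodule ℝ H₁ := LinearMap.range A with hR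
  set ψ : R →ₗ[ℝ] ℝ :=
    (Submodule.liftQ (LinearMap.ker A) ℓ hker).comp
      (LinearMap.quotKerEquivRange A).symm.toLinearMap with hψ
  have hψapp : ∀ y : T.adjoint.domain, ψ ⟨A y, LinearMap.mem_range_self A y⟩ = ⟪z, (y : H₂)⟫ := by
    intro y
    have h1 : (LinearMap.quotKerEquivRange A).symm ⟨A y, LinearMap.mem_range_self A y⟩
        = Submodule.Quotient.mk y := by
      apply (LinearMap.quotKerEquivRange A).injective
      rw [LinearEquiv.apply_symm_apply]
      exact Subtype.ext (LinearMap.quotKerEquivRange_apply_mk A y).symm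
    simp only [hψ, LinearMap.coe_comp, Function.comp_apply, LinearEquiv.coe_toLinearMap, h1]
    rw [Submodule.liftQ_apply]
    exact hℓapp y
  have hψbound : ∀ w : R, ‖ψ w‖ ≤ (C * ‖z‖) * ‖w‖ := by
    rintro ⟨w, hw⟩
    obtain ⟨y, rfl⟩ := hw
    rw [Real.norm_eq_abs, hψapp y]
    have := keyA y
    simpa [hAapp, mul_assoc] using this
  set ψc : R →L[ℝ] ℝ := ψ.mkContinuous (C * ‖z‖) hψbound with hψc
  obtain ⟨g, hg, _⟩ := exists_extension_norm_eq R ψc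
  set x : H₁ := (InnerProductSpace.toDual ℝ H₁).symm g with hx
  have hxinner : ∀ y : T.adjoint.domain, ⟪x, T.adjoint y⟫ = ⟪z, (y : H₂)⟫ := by
    intro y
    have h1 : ⟪x, T.adjoint y⟫ = g (T.adjoint y) := by
      rw [hx, InnerProductSpace.toDual_symm_apply]
    have h2 : g (T.adjoint y) = ψ ⟨A y, LinearMap.mem_range_self A y⟩ :=
      hg ⟨A y, LinearMap.mem_range_self A y⟩
    rw [h1, h2, hψapp y]
  -- Step C : (x, z) is in the graph of T
  have hgraph : ((x, z) : H₁ × H₂) ∈ T.graph := by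
    by_contra hxz
    set e : WithLp 2 (H₁ × H₂) ≃L[ℝ] H₁ × H₂ :=
      WithLp.prodContinuousLinearEquiv 2 ℝ H₁ H₂ with he
    set G₂ : Submodule ℝ (WithLp 2 (H₁ × H₂)) :=
      T.graph.comap (e : WithLp 2 (H₁ × H₂) →ₗ[ℝ] H₁ × H₂) with hG₂
    have hG₂closed : IsClosed (G₂ : Set (WithLp 2 (H₁ × H₂))) := by
      have : (G₂ : Set (WithLp 2 (H₁ × H₂))) = e ⁻¹' (T.graph : Set (H₁ × H₂)) := rfl
      rw [this]
      exact hclosed.preimage e.continuous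
    haveI : CompleteSpace G₂ := hG₂closed.completeSpace_coe
    set q : WithLp 2 (H₁ × H₂) := (WithLp.equiv 2 (H₁ × H₂)).symm (x, z) with hq
    have hqmem : q ∉ G₂ := by
      intro hmem
      exact hxz hmem
    set w0 : WithLp 2 (H₁ × H₂) := q - (Submodule.orthogonalProjection G₂ q : WithLp 2 (H₁ × H₂)) with hw0def
    have hw0 : w0 ∈ G₂ᗮ := G₂.sub_starProjection_mem_orthogonal q
    have hw0ne : w0 ≠ 0 := by
      intro h0
      apply hqmem
      have : q = (Submodule.orthogonalProjection G₂ q : WithLp 2 (H₁ × H₂)) := by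
        rwa [hw0def, sub_eq_zero] at h0
      rw [this]
      exact (Submodule.orthogonalProjection G₂ q).2
    have hqinner : ⟪w0, q⟫ ≠ 0 := by
      have hq' : q = w0 + (Submodule.orthogonalProjection G₂ q : WithLp 2 (H₁ × H₂)) := by
        rw [hw0def]; abel
      have hperp : ⟪w0, (Submodule.orthogonalProjection G₂ q : WithLp 2 (H₁ × H₂))⟫ = 0 := by
        rw [real_inner_comm]
        exact hw0 _ (Submodule.orthogonalProjection G₂ q).2
      rw [hq', inner_add_right, hperp, add_zero]
      exact fun h => hw0ne (inner_self_eq_zero.mp h)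
    set u : H₁ := (WithLp.equiv 2 (H₁ × H₂) w0).1 with hu
    set v : H₂ := (WithLp.equiv 2 (H₁ × H₂) w0).2 with hv
    have horth : ∀ xd : T.domain, ⟪(xd : H₁), u⟫ + ⟪T xd, v⟫ = 0 := by
      intro xd
      have hmem : (WithLp.equiv 2 (H₁ × H₂)).symm ((xd : H₁), T xd) ∈ G₂ := T.mem_graph xd
      have := hw0 _ hmem
      rw [WithLp.prod_inner_apply] at this
      exact this
    have hvdom : v ∈ T.adjoint.domain := by
      apply T.mem_adjoint_domain_of_exists
      refine ⟨-u, fun xd => ?_⟩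
      have h1 := horth xd
      have h2 : ⟪-u, (xd : H₁)⟫ = -⟪(xd : H₁), u⟫ := by
        rw [inner_neg_left, real_inner_comm]
      have h3 : ⟪v, T xd⟫ = ⟪T xd, v⟫ := real_inner_comm _ _
      linarith
    have hTv : T.adjoint ⟨v, hvdom⟩ = -u := by
      apply adjoint_apply_eq hdense
      intro xd
      show ⟪-u, (xd : H₁)⟫ = ⟪v, T xd⟫
      have h1 := horth xd
      have h2 : ⟪-u, (xd : H₁)⟫ = -⟪(xd : H₁), u⟫ := by
        rw [inner_neg_left, real_inner_comm]
      have h3 : ⟪v, T xd⟫ = ⟪T xd, v⟫ := real_inner_comm _ _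
      linarith
    have hcontr : ⟪x, -u⟫ = ⟪z, v⟫ := by
      have := hxinner ⟨v, hvdom⟩
      rw [hTv] at this
      exact this
    apply hqinner
    rw [WithLp.prod_inner_apply]
    show ⟪u, x⟫ + ⟪v, z⟫ = 0
    have h4 : ⟪x, -u⟫ = -⟪u, x⟫ := by rw [inner_neg_right, real_inner_comm x u]
    have h5 : ⟪z, v⟫ = ⟪v, z⟫ := real_inner_comm _ _
    linarith [hcontr, h4, h5]
  obtain ⟨x', _, hx2⟩ := T.mem_graph_iff.mp hgraph
  exact ⟨x', hx2⟩


/-- (Hörmander, Lemma 4.1.1.) Let `T : H₁ ⇸ H₂` be a densely defined closed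
linear operator between Hilbert spaces, with adjoint `T*`, and let `F ⊆ H₂` be a closed subspace
containing the image of `T`. Then `im T = F` if and only if there exists `C > 0` such that
`‖y‖ ≤ C ‖T* y‖` for every `y ∈ dom T* ∩ F`. -/
theorem range_eq_iff_adjoint_estimate
    {H₁ H₂ : Type*}
    [NormedAddCommGroup H₁] [InnerProductSpace ℝ H₁] [CompleteSpace H₁]
    [NormedAddCommGroup H₂] [InnerProductSpace ℝ H₂] [CompleteSpace H₂]
    (T : H₁ →ₗ.[ℝ] H₂)
    (hdense : Dense (T.domain : Set H₁))
    (hclosed : IsClosed (T.graph : Set (H₁ × H₂)))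
    (F : Submodule ℝ H₂) (hF : IsClosed (F : Set H₂))
    (hTF : ∀ x : T.domain, T x ∈ F) :
    ({y : H₂ | ∃ x : T.domain, T x = y} = (F : Set H₂)) ↔
      ∃ C > (0 : ℝ), ∀ y : T.adjoint.domain, (y : H₂) ∈ F →
        ‖(y : H₂)‖ ≤ C * ‖T.adjoint y‖ := by
  constructor
  · exact range_eq_aux_mp T hdense hclosed F hF hTF
  · rintro ⟨C, hC, hest⟩
    exact range_eq_aux_mpr T hdense hclosed F hF hTF C hC hest
end
end

section
/- Let A be a real symmetric n×n matrix with eigenvalues λ₁, …, λ_n (listed with multiplicity), and let 1 ≤ k ≤ n. Define the matrix M, indexed by strictly increasing multi-indices of length k, by M_{I₁,I₂} := Σ'_{|J|=k−1} Σ_{ℓ₁,ℓ₂=1}^{n} sign(ℓ₁J, I₁) sign(ℓ₂J, I₂) A_{ℓ₁ℓ₂}. Then M is a symmetric binom(n,k) × binom(n,k) matrix whose eigenvalues (with multiplicity) are exactly the sums λ_{i₁} + ⋯ + λ_{i_k} over all choices 1 ≤ i₁ < ⋯ < i_k ≤ n. -/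
open MeasureTheory Real Topology Filter

namespace DEE

variable {n k : ℕ}

def sg (I : MIdx n k) : Fin k → Fin n := I.1.orderEmbOfFin I.2

lemma sg_mem (I : MIdx n k) (q : Fin k) : sg I q ∈ I.1 :=
  Finset.orderEmbOfFin_mem _ _ _

lemma sg_inj (I : MIdx n k) : Function.Injective (sg I) :=
  (I.1.orderEmbOfFin I.2).injective

lemma sg_mono (I : MIdx n k) : StrictMono (sg I) :=
  (I.1.orderEmbOfFin I.2).strictMono

lemma sg_surj (I : MIdx n k) {a : Fin n} (ha : a ∈ I.1) : ∃ q, sg I q = a := by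
  have h := Finset.range_orderEmbOfFin I.1 I.2
  have : a ∈ Set.range (I.1.orderEmbOfFin I.2) := by rw [h]; exact_mod_cast ha
  exact this

lemma sg_image (I : MIdx n k) : Finset.image (sg I) Finset.univ = I.1 := by
  apply Finset.eq_of_subset_of_card_le
  · intro a ha
    simp only [Finset.mem_image] at ha
    obtain ⟨q, _, rfl⟩ := ha
    exact sg_mem I q
  · rw [Finset.card_image_of_injective _ (sg_inj I), Finset.card_univ, Fintype.card_fin, I.2]

def Fdet (u : Fin k → Fin n → ℝ) (I : MIdx n k) : ℝ :=
  (Matrix.of fun p q => u p (sg I q)).det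


def imgIdx (r : Fin k → Fin n) (hr : Function.Injective r) : MIdx n k :=
  ⟨Finset.univ.image r, by
    rw [Finset.card_image_of_injective _ hr, Finset.card_univ, Fintype.card_fin]⟩

lemma mem_imgIdx (r : Fin k → Fin n) (hr : Function.Injective r) (p : Fin k) :
    r p ∈ (imgIdx r hr).1 :=
  Finset.mem_image.mpr ⟨p, Finset.mem_univ p, rfl⟩

noncomputable def permOf (r : Fin k → Fin n) (hr : Function.Injective r) : Equiv.Perm (Fin k) :=
  Equiv.ofBijective
    (fun p => ((imgIdx r hr).1.orderIsoOfFin (imgIdx r hr).2).symm ⟨r p, mem_imgIdx r hr p⟩)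
    (by
      have hinj : Function.Injective (fun p =>
          ((imgIdx r hr).1.orderIsoOfFin (imgIdx r hr).2).symm ⟨r p, mem_imgIdx r hr p⟩) := by
        intro a b hab
        apply hr
        have h2 := congrArg (((imgIdx r hr).1.orderIsoOfFin (imgIdx r hr).2)) hab
        simp only [OrderIso.apply_symm_apply] at h2
        exact congrArg Subtype.val h2
      exact hinj.bijective_of_finite)

lemma sg_imgIdx_permOf (r : Fin k → Fin n) (hr : Function.Injective r) (p : Fin k) :
    sg (imgIdx r hr) (permOf r hr p) = r p := by
  simp only [permOf, Equiv.ofBijective_apply, sg]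
  rw [← Finset.coe_orderIsoOfFin_apply, OrderIso.apply_symm_apply]

/-- Cauchy–Binet. -/
lemma cauchy_binet (u u' : Fin k → Fin n → ℝ) :
    ∑ I : MIdx n k, Fdet u I * Fdet u' I
      = (Matrix.of fun p q => ∑ ℓ, u p ℓ * u' q ℓ).det := by
  classical
  set f := (Matrix.detRowAlternating : (Fin k → ℝ) [⋀^Fin k]→ₗ[ℝ] ℝ) with hf
  set w : Fin n → Fin k → ℝ := fun ℓ q => u' q ℓ with hw
  have hRHS : (Matrix.of fun p q => ∑ ℓ, u p ℓ * u' q ℓ).det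
      = ∑ r : Fin k → Fin n, (∏ p, u p (r p)) * f (fun p => w (r p)) := by
    have h1 : (Matrix.of fun p q => ∑ ℓ, u p ℓ * u' q ℓ).det
        = f (fun p => ∑ ℓ, u p ℓ • w ℓ) := by
      congr 1
      funext p q
      simp [w, Finset.sum_apply, smul_eq_mul]
    have h2 := f.toMultilinearMap.map_sum (g := fun p ℓ => u p ℓ • w ℓ)
    rw [h1]
    rw [show (f : ((Fin k → ℝ) [⋀^Fin k]→ₗ[ℝ] ℝ)) (fun p => ∑ ℓ, u p ℓ • w ℓ)
      = f.toMultilinearMap (fun p => ∑ ℓ, u p ℓ • w ℓ) from rfl, h2]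
    refine Finset.sum_congr rfl fun r _ => ?_
    rw [show f.toMultilinearMap (fun p => u p (r p) • w (r p))
      = f.toMultilinearMap ((fun p => (fun p' => u p' (r p')) p • (fun p' => w (r p')) p)) from rfl,
      f.toMultilinearMap.map_smul_univ]
    simp [smul_eq_mul]
  rw [hRHS]
  have hzero : ∀ r : Fin k → Fin n, ¬ Function.Injective r →
      (∏ p, u p (r p)) * f (fun p => w (r p)) = 0 := by
    intro r hr
    obtain ⟨a, b, hab, hne⟩ := Function.not_injective_iff.mp hr
    have : f (fun p => w (r p)) = 0 :=
      f.map_eq_zero_of_eq _ (by simp only [hab]) hne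
    rw [this, mul_zero]
  rw [← Finset.sum_filter_of_ne (p := fun r : Fin k → Fin n => Function.Injective r)
    (fun r _ h => by by_contra hni; exact h (hzero r hni))]
  have key : ∑ r ∈ Finset.univ.filter (fun r : Fin k → Fin n => Function.Injective r),
        (∏ p, u p (r p)) * f (fun p => w (r p))
      = ∑ x : MIdx n k × Equiv.Perm (Fin k),
        (∏ p, u p (sg x.1 (x.2 p))) * f (fun p => w (sg x.1 (x.2 p))) := by
    have himage : ∀ (I : MIdx n k) (pe : Equiv.Perm (Fin k)),
        Finset.univ.image (fun p => sg I (pe p)) = I.1 := by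
      intro I pe
      rw [show (fun p => sg I (pe p)) = (sg I) ∘ pe from rfl, ← Finset.image_image,
        Finset.image_univ_equiv]
      exact sg_image I
    refine Finset.sum_bij'
      (i := fun r hr => (imgIdx r (Finset.mem_filter.mp hr).2, permOf r (Finset.mem_filter.mp hr).2))
      (j := fun x _ => fun p => sg x.1 (x.2 p)) ?_ ?_ ?_ ?_ ?_
    · intro r hr; exact Finset.mem_univ _
    · intro x hx
      refine Finset.mem_filter.mpr ⟨Finset.mem_univ _, ?_⟩
      exact (sg_inj x.1).comp x.2.injective
    · -- left inverse : j (i r) = r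
      intro r hr
      funext p
      exact sg_imgIdx_permOf r (Finset.mem_filter.mp hr).2 p
    · -- right inverse : i (j x) = x
      intro x hx
      obtain ⟨I, pe⟩ := x
      have hinj : Function.Injective (fun p => sg I (pe p)) := (sg_inj I).comp pe.injective
      have himg : (imgIdx (fun p => sg I (pe p)) hinj).1 = I.1 := himage I pe
      have hfun : (sg I : Fin k → Fin n)
          = (imgIdx (fun p => sg I (pe p)) hinj).1.orderEmbOfFin
              (imgIdx (fun p => sg I (pe p)) hinj).2 := by
        refine Finset.orderEmbOfFin_unique _ (fun i => ?_) (sg_mono I)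
        rw [himg]; exact sg_mem I i
      refine Prod.ext (Subtype.ext himg) ?_
      apply Equiv.ext
      intro p
      show ((imgIdx (fun p => sg I (pe p)) hinj).1.orderIsoOfFin (imgIdx (fun p => sg I (pe p)) hinj).2).symm _ = pe p
      rw [OrderIso.symm_apply_eq]
      apply Subtype.ext
      rw [Finset.coe_orderIsoOfFin_apply]
      exact congrFun hfun (pe p)
    · -- values agree
      intro r hr
      have heq := sg_imgIdx_permOf r (Finset.mem_filter.mp hr).2
      simp only [heq]
  rw [key, Fintype.sum_prod_type]
  refine Finset.sum_congr rfl fun I _ => ?_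
  have hperm : ∀ pe : Equiv.Perm (Fin k),
      f (fun p => w (sg I (pe p))) = (Equiv.Perm.sign pe : ℤ) * f (fun p => w (sg I p)) := by
    intro pe
    have := f.map_perm (fun p => w (sg I p)) pe
    rw [show (fun p => w (sg I (pe p))) = (fun p => w (sg I p)) ∘ pe from rfl, this]
    simp [Units.smul_def, zsmul_eq_mul]
  have hFu : Fdet u I = ∑ pe : Equiv.Perm (Fin k),
      (Equiv.Perm.sign pe : ℤ) * ∏ p, u p (sg I (pe p)) := by
    rw [Fdet, ← Matrix.det_transpose, Matrix.det_apply']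
    refine Finset.sum_congr rfl fun pe _ => ?_
    simp [Matrix.detRowAlternating]
  have hFu' : Fdet u' I = f (fun p => w (sg I p)) := by
    rw [Fdet, ← Matrix.det_transpose]
    congr 1
  rw [hFu, hFu', Finset.sum_mul]
  refine Finset.sum_congr rfl fun pe _ => ?_
  rw [hperm pe]
  ring
lemma card_filter_lt_sg (I : MIdx n k) (q : Fin k) :
    (I.1.filter (fun x => x < sg I q)).card = q := by
  have himg : I.1.filter (fun x => x < sg I q) = (Finset.Iio q).image (sg I) := by
    ext x
    simp only [Finset.mem_filter, Finset.mem_image, Finset.mem_Iio]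
    constructor
    · rintro ⟨hx, hlt⟩
      obtain ⟨j, rfl⟩ := sg_surj I hx
      exact ⟨j, (sg_mono I).lt_iff_lt.mp hlt, rfl⟩
    · rintro ⟨j, hj, rfl⟩
      exact ⟨sg_mem I j, sg_mono I hj⟩
  rw [himg, Finset.card_image_of_injective _ (sg_inj I), Fin.card_Iio]

variable {m : ℕ}

lemma erase_card (I : MIdx n (m+1)) (q : Fin (m+1)) :
    (I.1.erase (sg I q)).card = m := by
  rw [Finset.card_erase_of_mem (sg_mem I q), I.2]
  rfl

/-- The erased multi-index. -/
def eIdx (I : MIdx n (m+1)) (q : Fin (m+1)) : MIdx n m :=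
  ⟨I.1.erase (sg I q), erase_card I q⟩

lemma sg_eIdx (I : MIdx n (m+1)) (q : Fin (m+1)) (j : Fin m) :
    sg (eIdx I q) j = sg I (q.succAbove j) := by
  have hfun : (fun j => sg I (q.succAbove j)) = (eIdx I q).1.orderEmbOfFin (eIdx I q).2 := by
    refine Finset.orderEmbOfFin_unique _ (fun i => ?_) ?_
    · exact Finset.mem_erase.mpr ⟨fun h => q.succAbove_ne i (sg_inj I h), sg_mem I _⟩
    · exact (sg_mono I).comp (Fin.strictMono_succAbove q)
  exact (congrFun hfun j).symm

lemma cycleRange_inv_apply (q : Fin (m+1)) (p : Fin (m+1)) :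
    (q.cycleRange)⁻¹ p = (Fin.cons q q.succAbove : Fin (m+1) → Fin (m+1)) p := by
  apply (q.cycleRange).injective
  rw [Equiv.Perm.inv_def, Equiv.apply_symm_apply]
  induction p using Fin.cases with
  | zero => rw [Fin.cons_zero, Fin.cycleRange_self]
  | succ j => rw [Fin.cons_succ, Fin.cycleRange_succAbove]

lemma msign_eq (I : MIdx n (m+1)) (q : Fin (m+1)) :
    msign (sg I q) (eIdx I q).1 I.1 = (-1 : ℝ) ^ (q : ℕ) := by
  rw [msign, if_pos ⟨Finset.notMem_erase _ _, Finset.insert_erase (sg_mem I q)⟩]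
  congr 1
  rw [eIdx, Finset.filter_erase]
  have hnm : sg I q ∉ (I.1.filter (fun j => j < sg I q)) :=
    fun h => lt_irrefl _ (Finset.mem_filter.mp h).2
  rw [Finset.erase_eq_of_notMem hnm, card_filter_lt_sg]

/-- The sign lemma: determinant of the indicator matrix computes `msign`. -/
lemma det_indicator (I : MIdx n (m+1)) (J : MIdx n m) (ℓ : Fin n) :
    (Matrix.of fun p q =>
        if sg I q = (Fin.cons ℓ (sg J) : Fin (m+1) → Fin n) p then (1:ℝ) else 0).det
      = msign ℓ J.1 I.1 := by
  by_cases hℓ : ℓ ∈ J.1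
  · rw [msign, if_neg (by tauto)]
    obtain ⟨j₀, hj₀⟩ := sg_surj J hℓ
    refine Matrix.det_zero_of_row_eq (M := Matrix.of fun p q =>
      if sg I q = (Fin.cons ℓ (sg J) : Fin (m+1) → Fin n) p then (1:ℝ) else 0)
      (i := 0) (j := Fin.succ j₀) (Fin.succ_ne_zero j₀).symm ?_
    funext q
    simp only [Matrix.of_apply, Fin.cons_zero, Fin.cons_succ, hj₀]
  by_cases hI : insert ℓ J.1 = I.1
  · -- the main case
    have hℓI : ℓ ∈ I.1 := hI ▸ Finset.mem_insert_self _ _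
    obtain ⟨q₀, hq₀⟩ := sg_surj I hℓI
    have hJ : J = eIdx I q₀ := by
      apply Subtype.ext
      show J.1 = I.1.erase (sg I q₀)
      rw [hq₀, ← hI, Finset.erase_insert hℓ]
    have hcons : ∀ p, (Fin.cons ℓ (sg J) : Fin (m+1) → Fin n) p
        = sg I ((q₀.cycleRange)⁻¹ p) := by
      intro p
      rw [cycleRange_inv_apply]
      induction p using Fin.cases with
      | zero => rw [Fin.cons_zero, Fin.cons_zero, hq₀]
      | succ j => rw [Fin.cons_succ, Fin.cons_succ, hJ, sg_eIdx]
    have hmat : (Matrix.of fun p q =>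
          if sg I q = (Fin.cons ℓ (sg J) : Fin (m+1) → Fin n) p then (1:ℝ) else 0)
        = ((q₀.cycleRange)⁻¹ : Equiv.Perm (Fin (m+1))).permMatrix ℝ := by
      ext p q
      rw [Matrix.of_apply, hcons p]
      simp only [Equiv.Perm.permMatrix, PEquiv.toMatrix_apply, Equiv.toPEquiv_apply,
        Option.mem_def, Option.some.injEq]
      by_cases h : (q₀.cycleRange)⁻¹ p = q
      · rw [if_pos (by rw [h]), if_pos h]
      · rw [if_neg (fun hc => h ((sg_inj I hc).symm)), if_neg h]
    rw [hmat, Matrix.det_permutation, map_inv, Fin.sign_cycleRange, ← hq₀, hJ, msign_eq]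
    simp
  · rw [msign, if_neg (by tauto)]
    have hall : ¬ ∀ p, (Fin.cons ℓ (sg J) : Fin (m+1) → Fin n) p ∈ I.1 := by
      intro hall
      apply hI
      apply Finset.eq_of_subset_of_card_le
      · intro x hx
        rcases Finset.mem_insert.mp hx with rfl | hx'
        · exact hall 0
        · obtain ⟨j, rfl⟩ := sg_surj J hx'
          exact hall (Fin.succ j)
      · rw [I.2, Finset.card_insert_of_notMem hℓ, J.2]
    push_neg at hall
    obtain ⟨p, hp⟩ := hall
    refine Matrix.det_eq_zero_of_row_eq_zero p ?_
    intro q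
    exact if_neg (fun h => hp (by rw [← h]; exact sg_mem I q))

lemma det_updateRow_eq_sum (B : Matrix (Fin k) (Fin k) ℝ) (p : Fin k) (c : Fin k → ℝ) :
    (B.updateRow p c).det = ∑ q, c q * B.adjugate q p := by
  have hc : c = ∑ q, (Pi.single q (c q) : Fin k → ℝ) := by
    rw [Finset.univ_sum_single]
  conv_lhs => rw [hc]
  have h1 : (B.updateRow p (∑ q, (Pi.single q (c q) : Fin k → ℝ))).det
      = (Matrix.detRowAlternating : (Fin k → ℝ) [⋀^Fin k]→ₗ[ℝ] ℝ)
          (Function.update (Matrix.of.symm B) p (∑ q, (Pi.single q (c q) : Fin k → ℝ))) := rfl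
  rw [h1, AlternatingMap.map_update_sum]
  refine Finset.sum_congr rfl fun q _ => ?_
  have h2 : (Matrix.detRowAlternating : (Fin k → ℝ) [⋀^Fin k]→ₗ[ℝ] ℝ)
      (Function.update (Matrix.of.symm B) p (Pi.single q (c q) : Fin k → ℝ))
      = (B.updateRow p (Pi.single q (c q))).det := rfl
  have h3 : (Pi.single q (c q) : Fin k → ℝ) = c q • (Pi.single q (1:ℝ) : Fin k → ℝ) := by
    funext x
    by_cases hx : x = q
    · subst hx; simp
    · simp [Pi.single_apply, hx]
  rw [h2, h3, Matrix.det_updateRow_smul, ← Matrix.adjugate_apply]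

lemma det_updateCol_eq_sum (B : Matrix (Fin k) (Fin k) ℝ) (q : Fin k) (b : Fin k → ℝ) :
    (B.updateCol q b).det = ∑ p, b p * B.adjugate q p := by
  rw [← Matrix.det_transpose, ← Matrix.updateRow_transpose, det_updateRow_eq_sum]
  refine Finset.sum_congr rfl fun p _ => ?_
  rw [← Matrix.adjugate_transpose, Matrix.transpose_apply]

/-- Row-column switch identity for the "derivative of the determinant". -/
lemma sum_det_row_col (B C : Matrix (Fin k) (Fin k) ℝ) :
    ∑ p, (B.updateRow p (C p)).det = ∑ q, (B.updateCol q (fun p => C p q)).det := by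
  simp only [det_updateRow_eq_sum, det_updateCol_eq_sum]
  rw [Finset.sum_comm]

/-- Summing a `(k-1)`-multi-index against `msign` computes a determinant with prescribed
columns. -/
lemma msign_sum (J : MIdx n m) (ℓ₂ : Fin n) (u : Fin (m+1) → Fin n → ℝ) :
    ∑ I' : MIdx n (m+1), msign ℓ₂ J.1 I'.1 * Fdet u I'
      = (Matrix.of fun p q => u p ((Fin.cons ℓ₂ (sg J) : Fin (m+1) → Fin n) q)).det := by
  have hcb := cauchy_binet u
    (fun p ℓ => if ℓ = (Fin.cons ℓ₂ (sg J) : Fin (m+1) → Fin n) p then (1:ℝ) else 0)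
  have hL : ∀ I' : MIdx n (m+1),
      Fdet (fun p ℓ => if ℓ = (Fin.cons ℓ₂ (sg J) : Fin (m+1) → Fin n) p then (1:ℝ) else 0) I'
        = msign ℓ₂ J.1 I'.1 := fun I' => det_indicator I' J ℓ₂
  calc ∑ I' : MIdx n (m+1), msign ℓ₂ J.1 I'.1 * Fdet u I'
      = ∑ I' : MIdx n (m+1), Fdet u I' *
          Fdet (fun p ℓ => if ℓ = (Fin.cons ℓ₂ (sg J) : Fin (m+1) → Fin n) p then (1:ℝ) else 0)
            I' := by
        refine Finset.sum_congr rfl fun I' _ => ?_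
        rw [hL I', mul_comm]
    _ = _ := by
        rw [hcb]
        congr 1
        funext p q
        rw [Matrix.of_apply, Matrix.of_apply]
        have hterm : ∀ ℓ, u p ℓ *
            (if ℓ = (Fin.cons ℓ₂ (sg J) : Fin (m+1) → Fin n) q then (1:ℝ) else 0)
            = if ℓ = (Fin.cons ℓ₂ (sg J) : Fin (m+1) → Fin n) q then u p ℓ else 0 := by
          intro ℓ; split <;> simp
        rw [Finset.sum_congr rfl fun ℓ _ => hterm ℓ,
          Finset.sum_ite_eq' Finset.univ _ (fun ℓ => u p ℓ)]
        simp

/-- Linearity step: contracting the first column with `A`. -/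
lemma sum_A_det (A : Matrix (Fin n) (Fin n) ℝ) (ℓ₁ : Fin n) (g : Fin m → Fin n)
    (u : Fin (m+1) → Fin n → ℝ) :
    ∑ ℓ₂, A ℓ₁ ℓ₂ * (Matrix.of fun p q => u p ((Fin.cons ℓ₂ g : Fin (m+1) → Fin n) q)).det
      = (Matrix.of fun p q =>
          (Fin.cons (fun p' => ∑ m', A ℓ₁ m' * u p' m') (fun j p' => u p' (g j)) :
            Fin (m+1) → Fin (m+1) → ℝ) q p).det := by
  set N : Matrix (Fin (m+1)) (Fin (m+1)) ℝ :=
    Matrix.of fun p q =>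
      (Fin.cons (fun _ => (0:ℝ)) (fun j p' => u p' (g j)) : Fin (m+1) → Fin (m+1) → ℝ) q p
    with hN
  have hupd : ∀ b : Fin (m+1) → ℝ, N.updateCol 0 b
      = Matrix.of fun p q =>
          (Fin.cons b (fun j p' => u p' (g j)) : Fin (m+1) → Fin (m+1) → ℝ) q p := by
    intro b
    ext p q
    induction q using Fin.cases with
    | zero => simp [Matrix.updateCol_self, Fin.cons_zero]
    | succ j => simp [Matrix.updateCol_ne (Fin.succ_ne_zero j), hN, Fin.cons_succ]
  have hform : ∀ ℓ₂, (Matrix.of fun p q => u p ((Fin.cons ℓ₂ g : Fin (m+1) → Fin n) q)).det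
      = (N.updateCol 0 (fun p => u p ℓ₂)).det := by
    intro ℓ₂
    rw [hupd]
    congr 1
    ext p q
    induction q using Fin.cases with
    | zero => simp [Fin.cons_zero]
    | succ j => simp [Fin.cons_succ]
  calc ∑ ℓ₂, A ℓ₁ ℓ₂ * (Matrix.of fun p q => u p ((Fin.cons ℓ₂ g : Fin (m+1) → Fin n) q)).det
      = ∑ ℓ₂, A ℓ₁ ℓ₂ * ∑ p, u p ℓ₂ * N.adjugate 0 p := by
        refine Finset.sum_congr rfl fun ℓ₂ _ => ?_
        rw [hform, det_updateCol_eq_sum]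
    _ = ∑ p, (∑ ℓ₂, A ℓ₁ ℓ₂ * u p ℓ₂) * N.adjugate 0 p := by
        simp only [Finset.mul_sum]
        rw [Finset.sum_comm]
        refine Finset.sum_congr rfl fun p _ => ?_
        rw [Finset.sum_mul]
        exact Finset.sum_congr rfl fun ℓ₂ _ => by ring
    _ = (N.updateCol 0 (fun p => ∑ m', A ℓ₁ m' * u p m')).det := by
        rw [det_updateCol_eq_sum]
    _ = _ := by rw [hupd]

/-- Moving the contracted column into position `q₀`. -/
lemma msign_mul_det (I : MIdx n (m+1)) (q₀ : Fin (m+1)) (c : Fin (m+1) → ℝ)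
    (u : Fin (m+1) → Fin n → ℝ) :
    ((-1:ℝ)^(q₀:ℕ)) * (Matrix.of fun p q =>
        (Fin.cons c (fun j p' => u p' (sg I (q₀.succAbove j))) :
          Fin (m+1) → Fin (m+1) → ℝ) q p).det
      = ((Matrix.of fun p q => u p (sg I q)).updateCol q₀ c).det := by
  set M : Matrix (Fin (m+1)) (Fin (m+1)) ℝ := Matrix.of fun p q =>
      (Fin.cons c (fun j p' => u p' (sg I (q₀.succAbove j))) :
        Fin (m+1) → Fin (m+1) → ℝ) q p with hM
  have hmat : (Matrix.of fun p q => u p (sg I q)).updateCol q₀ c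
      = M.submatrix id (q₀.cycleRange) := by
    ext p q
    by_cases hq : q = q₀
    · subst hq
      simp [Matrix.updateCol_self, Matrix.submatrix_apply, Fin.cycleRange_self, hM,
        Fin.cons_zero]
    · obtain ⟨j, hj⟩ := Fin.exists_succAbove_eq hq
      rw [Matrix.updateCol_ne hq, Matrix.submatrix_apply, id, ← hj, Fin.cycleRange_succAbove]
      simp [hM, Fin.cons_succ]
  rw [hmat, Matrix.det_permute', Fin.sign_cycleRange]
  simp

/-- Reindexing the `(J, ℓ₁)` sum over positions `q` in `I`. -/
lemma pair_sum (I : MIdx n (m+1)) (X : Fin n → MIdx n m → ℝ) :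
    ∑ J : MIdx n m, ∑ ℓ₁ : Fin n, msign ℓ₁ J.1 I.1 * X ℓ₁ J
      = ∑ q : Fin (m+1), ((-1:ℝ)^(q:ℕ)) * X (sg I q) (eIdx I q) := by
  classical
  rw [← Finset.sum_product']
  rw [← Finset.sum_filter_of_ne (p := fun x : MIdx n m × Fin n =>
    x.2 ∉ x.1.1 ∧ insert x.2 x.1.1 = I.1)
    (fun x _ h => by
      by_contra hc
      exact h (by rw [msign, if_neg hc, zero_mul]))]
  refine Finset.sum_bij' (i := fun x hx => (I.1.orderIsoOfFin I.2).symm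
      ⟨x.2, by
        have := (Finset.mem_filter.mp hx).2.2
        rw [← this]; exact Finset.mem_insert_self _ _⟩)
    (j := fun q _ => (eIdx I q, sg I q)) ?_ ?_ ?_ ?_ ?_
  · intro x hx; exact Finset.mem_univ _
  · intro q _
    refine Finset.mem_filter.mpr ⟨Finset.mem_univ _, Finset.notMem_erase _ _,
      Finset.insert_erase (sg_mem I q)⟩
  · -- left inverse
    intro x hx
    have hcond := (Finset.mem_filter.mp hx).2
    have hsg : sg I ((I.1.orderIsoOfFin I.2).symm ⟨x.2, by
        rw [← hcond.2]; exact Finset.mem_insert_self _ _⟩) = x.2 := by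
      rw [sg, ← Finset.coe_orderIsoOfFin_apply, OrderIso.apply_symm_apply]
    refine Prod.ext (Subtype.ext ?_) hsg
    show (I.1.erase _) = x.1.1
    rw [hsg, ← hcond.2, Finset.erase_insert hcond.1]
  · -- right inverse
    intro q _
    rw [OrderIso.symm_apply_eq]
    apply Subtype.ext
    rw [Finset.coe_orderIsoOfFin_apply]
    rfl
  · -- values
    intro x hx
    have hcond := (Finset.mem_filter.mp hx).2
    set q := (I.1.orderIsoOfFin I.2).symm ⟨x.2, by
        rw [← hcond.2]; exact Finset.mem_insert_self _ _⟩ with hq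
    have hsg : sg I q = x.2 := by
      rw [hq, sg, ← Finset.coe_orderIsoOfFin_apply, OrderIso.apply_symm_apply]
    have hE : eIdx I q = x.1 := by
      apply Subtype.ext
      show (I.1.erase (sg I q)) = x.1.1
      rw [hsg, ← hcond.2, Finset.erase_insert hcond.1]
    rw [← hsg, ← hE, msign_eq]

/-- The central computation: the matrix `M` acts on `Fdet u` like the derivation extension. -/
lemma M_apply (A : Matrix (Fin n) (Fin n) ℝ) (I : MIdx n (m+1))
    (u : Fin (m+1) → Fin n → ℝ) :
    ∑ I' : MIdx n (m+1),
        (∑ J : MIdx n m, ∑ ℓ₁ : Fin n, ∑ ℓ₂ : Fin n,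
          msign ℓ₁ J.1 I.1 * msign ℓ₂ J.1 I'.1 * A ℓ₁ ℓ₂) * Fdet u I'
      = ∑ p : Fin (m+1),
          ((Matrix.of fun p' q => u p' (sg I q)).updateRow p
            (fun q => ∑ b, A (sg I q) b * u p b)).det := by
  classical
  set B : Matrix (Fin (m+1)) (Fin (m+1)) ℝ := Matrix.of fun p q => u p (sg I q) with hB
  calc ∑ I' : MIdx n (m+1),
        (∑ J : MIdx n m, ∑ ℓ₁ : Fin n, ∑ ℓ₂ : Fin n,
          msign ℓ₁ J.1 I.1 * msign ℓ₂ J.1 I'.1 * A ℓ₁ ℓ₂) * Fdet u I'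
      = ∑ J : MIdx n m, ∑ ℓ₁ : Fin n, msign ℓ₁ J.1 I.1 *
          (∑ ℓ₂, A ℓ₁ ℓ₂ * (∑ I' : MIdx n (m+1), msign ℓ₂ J.1 I'.1 * Fdet u I')) := by
        simp only [Finset.sum_mul]
        rw [Finset.sum_comm]
        refine Finset.sum_congr rfl fun J _ => ?_
        rw [Finset.sum_comm]
        refine Finset.sum_congr rfl fun ℓ₁ _ => ?_
        rw [Finset.sum_comm]
        simp only [Finset.mul_sum]
        refine Finset.sum_congr rfl fun ℓ₂ _ => Finset.sum_congr rfl fun I' _ => by ring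
    _ = ∑ J : MIdx n m, ∑ ℓ₁ : Fin n, msign ℓ₁ J.1 I.1 *
          (Matrix.of fun p q =>
            (Fin.cons (fun p' => ∑ b, A ℓ₁ b * u p' b) (fun j p' => u p' (sg J j)) :
              Fin (m+1) → Fin (m+1) → ℝ) q p).det := by
        refine Finset.sum_congr rfl fun J _ => Finset.sum_congr rfl fun ℓ₁ _ => ?_
        congr 1
        rw [Finset.sum_congr rfl fun ℓ₂ _ => by rw [msign_sum J ℓ₂ u]]
        exact sum_A_det A ℓ₁ (sg J) u
    _ = ∑ q : Fin (m+1), ((-1:ℝ)^(q:ℕ)) *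
          (Matrix.of fun p q' =>
            (Fin.cons (fun p' => ∑ b, A (sg I q) b * u p' b)
              (fun j p' => u p' (sg (eIdx I q) j)) :
              Fin (m+1) → Fin (m+1) → ℝ) q' p).det := by
        exact pair_sum I (fun ℓ₁ J => (Matrix.of fun p q =>
            (Fin.cons (fun p' => ∑ b, A ℓ₁ b * u p' b) (fun j p' => u p' (sg J j)) :
              Fin (m+1) → Fin (m+1) → ℝ) q p).det)
    _ = ∑ q : Fin (m+1), (B.updateCol q (fun p => ∑ b, A (sg I q) b * u p b)).det := by
        refine Finset.sum_congr rfl fun q _ => ?_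
        have hgj : (fun j p' => u p' (sg (eIdx I q) j))
            = (fun j p' => u p' (sg I (q.succAbove j))) := by
          funext j p'
          rw [sg_eIdx]
        rw [hgj]
        exact msign_mul_det I q (fun p => ∑ b, A (sg I q) b * u p b) u
    _ = ∑ p : Fin (m+1), (B.updateRow p (fun q => ∑ b, A (sg I q) b * u p b)).det := by
        have h := sum_det_row_col B (Matrix.of fun p q => ∑ b, A (sg I q) b * u p b)
        simp only [Matrix.of_apply] at h
        exact h.symm

end DEE

/-- For a real symmetric `n × n` matrix `A` with eigenvalues `λ₁, …, λ_n`
(listed with multiplicity, via an orthonormal eigenbasis `v`), the matrix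
`M_{I₁,I₂} = Σ'_{|J|=k−1} Σ_{ℓ₁,ℓ₂} sign(ℓ₁J,I₁) sign(ℓ₂J,I₂) A_{ℓ₁ℓ₂}` of the derivation
extension `D^{[k]}_A` is symmetric and its eigenvalues (with multiplicity, exhibited by an
orthonormal eigenbasis indexed by the strictly increasing multi-indices `I₀` of length `k`)
are exactly the sums `Σ_{i ∈ I₀} λ_i`. -/
theorem derivation_extension_eigenvalues
    (n k : ℕ) (hk1 : 1 ≤ k) (hkn : k ≤ n)
    (A : Matrix (Fin n) (Fin n) ℝ) (hA : ∀ a b, A a b = A b a)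
    (lam : Fin n → ℝ) (v : Fin n → Fin n → ℝ)
    (hortho : ∀ i j, (∑ ℓ, v i ℓ * v j ℓ) = if i = j then (1 : ℝ) else 0)
    (heig : ∀ i a, (∑ b, A a b * v i b) = lam i * v i a) :
    -- `M` is symmetric …
    (∀ I₁ I₂ : MIdx n k,
      (∑ J : MIdx n (k - 1), ∑ ℓ₁ : Fin n, ∑ ℓ₂ : Fin n,
        msign ℓ₁ J.1 I₁.1 * msign ℓ₂ J.1 I₂.1 * A ℓ₁ ℓ₂) =
      ∑ J : MIdx n (k - 1), ∑ ℓ₁ : Fin n, ∑ ℓ₂ : Fin n,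
        msign ℓ₁ J.1 I₂.1 * msign ℓ₂ J.1 I₁.1 * A ℓ₁ ℓ₂) ∧
    -- … and it admits an orthonormal eigenbasis `w I₀` with eigenvalues `Σ_{i ∈ I₀} λ_i`:
    ∃ w : MIdx n k → MIdx n k → ℝ,
      (∀ I₁ I₂ : MIdx n k, (∑ I : MIdx n k, w I₁ I * w I₂ I) =
        if I₁ = I₂ then (1 : ℝ) else 0) ∧
      ∀ I₀ I : MIdx n k,
        (∑ I' : MIdx n k, (∑ J : MIdx n (k - 1), ∑ ℓ₁ : Fin n, ∑ ℓ₂ : Fin n,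
          msign ℓ₁ J.1 I.1 * msign ℓ₂ J.1 I'.1 * A ℓ₁ ℓ₂) * w I₀ I') =
        (∑ i ∈ I₀.1, lam i) * w I₀ I := by
  classical
  obtain ⟨m, rfl⟩ : ∃ m, k = m + 1 := ⟨k - 1, (Nat.succ_pred_eq_of_pos hk1).symm⟩
  constructor
  · -- symmetry of `M`
    intro I₁ I₂
    refine Finset.sum_congr rfl fun J _ => ?_
    rw [Finset.sum_comm]
    refine Finset.sum_congr rfl fun a _ => Finset.sum_congr rfl fun b _ => ?_
    rw [hA b a]
    ring
  · refine ⟨fun I₀ I => DEE.Fdet (fun p => v (DEE.sg I₀ p)) I, ?_, ?_⟩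
    · -- orthonormality of the eigenbasis
      intro I₁ I₂
      rw [DEE.cauchy_binet]
      have hG : (Matrix.of fun p q => ∑ ℓ, v (DEE.sg I₁ p) ℓ * v (DEE.sg I₂ q) ℓ)
          = Matrix.of fun p q => if DEE.sg I₁ p = DEE.sg I₂ q then (1:ℝ) else 0 := by
        ext p q
        rw [Matrix.of_apply, Matrix.of_apply]
        exact hortho _ _
      rw [hG]
      by_cases h : I₁ = I₂
      · subst h
        rw [if_pos rfl]
        have hone : (Matrix.of fun p q => if DEE.sg I₁ p = DEE.sg I₁ q then (1:ℝ) else 0)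
            = (1 : Matrix (Fin (m+1)) (Fin (m+1)) ℝ) := by
          ext p q
          rw [Matrix.of_apply, Matrix.one_apply]
          by_cases hpq : p = q
          · subst hpq; rw [if_pos rfl, if_pos rfl]
          · rw [if_neg (fun hc => hpq (DEE.sg_inj I₁ hc)), if_neg hpq]
        rw [hone, Matrix.det_one]
      · rw [if_neg h]
        have hns : ¬ I₁.1 ⊆ I₂.1 := fun hsub => h (Subtype.ext
          (Finset.eq_of_subset_of_card_le hsub (by rw [I₁.2, I₂.2])))
        obtain ⟨a, ha1, ha2⟩ := Finset.not_subset.mp hns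
        obtain ⟨p, rfl⟩ := DEE.sg_surj I₁ ha1
        refine Matrix.det_eq_zero_of_row_eq_zero p fun q => ?_
        exact if_neg (fun hc => ha2 (by rw [hc]; exact DEE.sg_mem I₂ q))
    · -- the eigenvalue equations
      intro I₀ I
      have hMA := DEE.M_apply A I (fun p => v (DEE.sg I₀ p))
      set u : Fin (m+1) → Fin n → ℝ := fun p => v (DEE.sg I₀ p) with hu
      set B : Matrix (Fin (m+1)) (Fin (m+1)) ℝ :=
        Matrix.of fun p q => u p (DEE.sg I q) with hBdef
      have hrest : (∑ p : Fin (m+1),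
            ((Matrix.of fun p' q => u p' (DEE.sg I q)).updateRow p
              (fun q => ∑ b, A (DEE.sg I q) b * u p b)).det)
          = (∑ i ∈ I₀.1, lam i) * DEE.Fdet u I := by
        have hrow : ∀ p : Fin (m+1), (fun q => ∑ b, A (DEE.sg I q) b * u p b)
            = lam (DEE.sg I₀ p) • (fun q => u p (DEE.sg I q)) := by
          intro p
          funext q
          rw [Pi.smul_apply, smul_eq_mul]
          exact heig (DEE.sg I₀ p) (DEE.sg I q)
        calc ∑ p : Fin (m+1),
              ((Matrix.of fun p' q => u p' (DEE.sg I q)).updateRow p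
                (fun q => ∑ b, A (DEE.sg I q) b * u p b)).det
            = ∑ p : Fin (m+1), lam (DEE.sg I₀ p) * B.det := by
              refine Finset.sum_congr rfl fun p _ => ?_
              rw [hrow p, Matrix.det_updateRow_smul,
                show (fun q => u p (DEE.sg I q)) = B p from rfl, Matrix.updateRow_eq_self]
          _ = (∑ i ∈ I₀.1, lam i) * DEE.Fdet u I := by
              rw [← DEE.sg_image I₀, Finset.sum_image (fun x _ y _ h => DEE.sg_inj I₀ h),
                Finset.sum_mul]
              rfl
      exact hMA.trans hrest
end

section
/- Let A be a real symmetric n×n matrix with ordered eigenvalues λ₁ ≤ ⋯ ≤ λ_n, and let 1 ≤ k ≤ n. Then for every family of real numbers (η_I)_I indexed by strictly increasing multi-indices I of length k, Σ'_{|J|=k−1} Σ'_{|I₁|=k} Σ'_{|I₂|=k} Σ_{ℓ₁,ℓ₂=1}^{n} sign(ℓ₁J, I₁) sign(ℓ₂J, I₂) A_{ℓ₁ℓ₂} η_{I₁} η_{I₂} ≥ (λ₁ + ⋯ + λ_k) · Σ'_{|I|=k} η_I². -/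
open MeasureTheory Real Topology Filter

namespace DQF

variable {n k : ℕ}

lemma msign_ne_zero {ℓ : Fin n} {J I : Finset (Fin n)} (h : msign ℓ J I ≠ 0) :
    ℓ ∉ J ∧ insert ℓ J = I := by
  by_contra hc
  rw [msign, if_neg hc] at h
  exact h rfl

lemma msign_of {ℓ : Fin n} {J I : Finset (Fin n)} (h1 : ℓ ∉ J) (h2 : insert ℓ J = I) :
    msign ℓ J I = (-1 : ℝ) ^ (J.filter (fun j => j < ℓ)).card := by
  rw [msign, if_pos ⟨h1, h2⟩]

lemma sumJ_eval (ℓ₁ ℓ₂ : Fin n) (I₁ I₂ : MIdx n k) :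
    (∑ J : MIdx n (k-1), msign ℓ₁ J.1 I₁.1 * msign ℓ₂ J.1 I₂.1) =
    if ℓ₁ ∈ I₁.1 ∧ ℓ₂ ∉ I₁.1.erase ℓ₁ ∧ insert ℓ₂ (I₁.1.erase ℓ₁) = I₂.1 then
      (-1:ℝ)^((I₁.1.erase ℓ₁).filter (fun j => j < ℓ₁)).card *
      (-1:ℝ)^((I₁.1.erase ℓ₁).filter (fun j => j < ℓ₂)).card
    else 0 := by
  by_cases hc : ℓ₁ ∈ I₁.1 ∧ ℓ₂ ∉ I₁.1.erase ℓ₁ ∧ insert ℓ₂ (I₁.1.erase ℓ₁) = I₂.1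
  · obtain ⟨h1, h2, h3⟩ := hc
    have hJc : (I₁.1.erase ℓ₁).card = k - 1 := by
      rw [Finset.card_erase_of_mem h1, I₁.2]
    rw [if_pos ⟨h1, h2, h3⟩]
    rw [Finset.sum_eq_single (⟨I₁.1.erase ℓ₁, hJc⟩ : MIdx n (k-1))]
    · rw [msign_of (Finset.notMem_erase _ _) (Finset.insert_erase h1), msign_of h2 h3]
    · intro J _ hne
      by_contra h0
      obtain ⟨ha, _⟩ := mul_ne_zero_iff.mp h0
      obtain ⟨hmem, hins⟩ := msign_ne_zero ha
      apply hne
      apply Subtype.ext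
      show (J : Finset (Fin n)) = I₁.1.erase ℓ₁
      rw [← hins, Finset.erase_insert hmem]
    · intro h; exact absurd (Finset.mem_univ _) h
  · rw [if_neg hc]
    apply Finset.sum_eq_zero
    intro J _
    by_contra h0
    obtain ⟨ha, hb⟩ := mul_ne_zero_iff.mp h0
    obtain ⟨hm1, hi1⟩ := msign_ne_zero ha
    obtain ⟨hm2, hi2⟩ := msign_ne_zero hb
    have hJ : J.1 = I₁.1.erase ℓ₁ := by rw [← hi1, Finset.erase_insert hm1]
    exact hc ⟨hi1 ▸ Finset.mem_insert_self _ _, hJ ▸ hm2, by rw [← hJ, hi2]⟩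

lemma sumH_eval (ℓ₁ ℓ₂ : Fin n) (I₁ I₂ : MIdx n k) :
    (∑ H : MIdx n (k+1), msign ℓ₂ I₁.1 H.1 * msign ℓ₁ I₂.1 H.1) =
    if ℓ₂ ∉ I₁.1 ∧ ℓ₁ ∉ I₂.1 ∧ insert ℓ₁ I₂.1 = insert ℓ₂ I₁.1 then
      (-1:ℝ)^(I₁.1.filter (fun j => j < ℓ₂)).card *
      (-1:ℝ)^(I₂.1.filter (fun j => j < ℓ₁)).card
    else 0 := by
  by_cases hc : ℓ₂ ∉ I₁.1 ∧ ℓ₁ ∉ I₂.1 ∧ insert ℓ₁ I₂.1 = insert ℓ₂ I₁.1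
  · obtain ⟨h1, h2, h3⟩ := hc
    have hHc : (insert ℓ₂ I₁.1).card = k + 1 := by
      rw [Finset.card_insert_of_notMem h1, I₁.2]
    rw [if_pos ⟨h1, h2, h3⟩]
    rw [Finset.sum_eq_single (⟨insert ℓ₂ I₁.1, hHc⟩ : MIdx n (k+1))]
    · rw [msign_of h1 rfl, msign_of h2 h3]
    · intro H _ hne
      by_contra h0
      obtain ⟨ha, _⟩ := mul_ne_zero_iff.mp h0
      obtain ⟨_, hins⟩ := msign_ne_zero ha
      exact hne (Subtype.ext hins.symm)
    · intro h; exact absurd (Finset.mem_univ _) h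
  · rw [if_neg hc]
    apply Finset.sum_eq_zero
    intro H _
    by_contra h0
    obtain ⟨ha, hb⟩ := mul_ne_zero_iff.mp h0
    obtain ⟨hm1, hi1⟩ := msign_ne_zero ha
    obtain ⟨hm2, hi2⟩ := msign_ne_zero hb
    exact hc ⟨hm1, hm2, hi2.trans hi1.symm⟩

lemma star_id (ℓ₁ ℓ₂ : Fin n) (I₁ I₂ : MIdx n k) :
    (∑ J : MIdx n (k-1), msign ℓ₁ J.1 I₁.1 * msign ℓ₂ J.1 I₂.1)
    + (∑ H : MIdx n (k+1), msign ℓ₂ I₁.1 H.1 * msign ℓ₁ I₂.1 H.1)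
    = if ℓ₁ = ℓ₂ ∧ I₁ = I₂ then 1 else 0 := by
  rw [sumJ_eval, sumH_eval]
  by_cases hll : ℓ₁ = ℓ₂
  · subst hll
    by_cases hII : I₁ = I₂
    · subst hII
      by_cases hmem : ℓ₁ ∈ I₁.1
      · rw [if_pos ⟨hmem, Finset.notMem_erase _ _, Finset.insert_erase hmem⟩,
            if_neg (fun h => h.1 hmem), if_pos ⟨rfl, rfl⟩, add_zero, ← mul_pow]
        norm_num
      · rw [if_neg (fun h => hmem h.1), if_pos ⟨hmem, hmem, rfl⟩, if_pos ⟨rfl, rfl⟩,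
            zero_add, ← mul_pow]
        norm_num
    · rw [if_neg, if_neg, if_neg (fun h => hII h.2)]
      · norm_num
      · rintro ⟨g1, g2, g3⟩
        exact hII (Subtype.ext (by rw [← Finset.erase_insert g1, ← g3, Finset.erase_insert g2]))
      · rintro ⟨h1, _, h3⟩
        exact hII (Subtype.ext (by rw [← h3, Finset.insert_erase h1]))
  · by_cases hc1 : ℓ₁ ∈ I₁.1 ∧ ℓ₂ ∉ I₁.1.erase ℓ₁ ∧ insert ℓ₂ (I₁.1.erase ℓ₁) = I₂.1
    · obtain ⟨h1, h2, h3⟩ := hc1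
      have hl2I1 : ℓ₂ ∉ I₁.1 := fun hx => h2 (Finset.mem_erase.mpr ⟨Ne.symm hll, hx⟩)
      have hl1E : ℓ₁ ∉ I₁.1.erase ℓ₁ := Finset.notMem_erase _ _
      have hl1I2 : ℓ₁ ∉ I₂.1 := by
        rw [← h3, Finset.mem_insert]
        rintro (h | h)
        · exact hll h
        · exact hl1E h
      have hins : insert ℓ₁ I₂.1 = insert ℓ₂ I₁.1 := by
        rw [← h3, Finset.insert_comm, Finset.insert_erase h1]
      rw [if_pos ⟨h1, h2, h3⟩, if_pos ⟨hl2I1, hl1I2, hins⟩,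
          if_neg (fun h => hll h.1)]
      set E := I₁.1.erase ℓ₁ with hE
      have hcI1 : I₁.1 = insert ℓ₁ E := (Finset.insert_erase h1).symm
      have hfc : (I₁.1.filter (fun j => j < ℓ₂)).card =
          (E.filter (fun j => j < ℓ₂)).card + (if ℓ₁ < ℓ₂ then 1 else 0) := by
        conv_lhs => rw [hcI1]
        rw [Finset.filter_insert]
        split
        · rw [Finset.card_insert_of_notMem (fun hx => hl1E (Finset.mem_of_mem_filter _ hx))]
        · simp
      have hfd : (I₂.1.filter (fun j => j < ℓ₁)).card =
          (E.filter (fun j => j < ℓ₁)).card + (if ℓ₂ < ℓ₁ then 1 else 0) := by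
        conv_lhs => rw [← h3]
        rw [Finset.filter_insert]
        split
        · rw [Finset.card_insert_of_notMem (fun hx => h2 (Finset.mem_of_mem_filter _ hx))]
        · simp
      rw [hfc, hfd]
      rcases lt_or_gt_of_ne hll with h | h
      · rw [if_pos h, if_neg (asymm h)]
        simp [pow_succ]
        ring
      · rw [if_neg (asymm h), if_pos h]
        simp [pow_succ]
        ring
    · rw [if_neg hc1, if_neg, if_neg (fun h => hll h.1)]
      · norm_num
      rintro ⟨g1, g2, g3⟩
      apply hc1
      have h1 : ℓ₁ ∈ I₁.1 := by
        have hx : ℓ₁ ∈ insert ℓ₂ I₁.1 := g3 ▸ Finset.mem_insert_self ℓ₁ I₂.1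
        rcases Finset.mem_insert.mp hx with h | h
        · exact absurd h hll
        · exact h
      refine ⟨h1, fun hx => g1 (Finset.mem_of_mem_erase hx), ?_⟩
      calc insert ℓ₂ (I₁.1.erase ℓ₁) = (insert ℓ₂ I₁.1).erase ℓ₁ :=
            (Finset.erase_insert_of_ne (Ne.symm hll)).symm
        _ = (insert ℓ₁ I₂.1).erase ℓ₁ := by rw [g3]
        _ = I₂.1 := Finset.erase_insert g2

lemma diag_eval (I₁ I₂ : MIdx n k) :
    (∑ J : MIdx n (k-1), ∑ ℓ : Fin n, msign ℓ J.1 I₁.1 * msign ℓ J.1 I₂.1)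
    = if I₁ = I₂ then (k : ℝ) else 0 := by
  by_cases hII : I₁ = I₂
  · subst hII
    rw [if_pos rfl, Finset.sum_comm]
    have h1 : ∀ ℓ : Fin n, (∑ J : MIdx n (k-1), msign ℓ J.1 I₁.1 * msign ℓ J.1 I₁.1)
        = if ℓ ∈ I₁.1 then (1:ℝ) else 0 := by
      intro ℓ
      by_cases hmem : ℓ ∈ I₁.1
      · rw [if_pos hmem]
        have hJc : (I₁.1.erase ℓ).card = k - 1 := by
          rw [Finset.card_erase_of_mem hmem, I₁.2]
        rw [Finset.sum_eq_single (⟨I₁.1.erase ℓ, hJc⟩ : MIdx n (k-1))]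
        · rw [msign_of (Finset.notMem_erase _ _) (Finset.insert_erase hmem), ← mul_pow]
          norm_num
        · intro J _ hne
          by_contra h0
          obtain ⟨ha, _⟩ := mul_ne_zero_iff.mp h0
          obtain ⟨hm, hi⟩ := msign_ne_zero ha
          apply hne
          apply Subtype.ext
          show (J : Finset (Fin n)) = I₁.1.erase ℓ
          rw [← hi, Finset.erase_insert hm]
        · intro h; exact absurd (Finset.mem_univ _) h
      · rw [if_neg hmem]
        apply Finset.sum_eq_zero
        intro J _
        by_contra h0
        obtain ⟨ha, _⟩ := mul_ne_zero_iff.mp h0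
        obtain ⟨_, hi⟩ := msign_ne_zero ha
        exact hmem (hi ▸ Finset.mem_insert_self _ _)
    rw [Finset.sum_congr rfl (fun ℓ _ => h1 ℓ)]
    rw [Finset.sum_ite_mem, Finset.univ_inter, Finset.sum_const, I₁.2]
    simp
  · rw [if_neg hII]
    apply Finset.sum_eq_zero; intro J _
    apply Finset.sum_eq_zero; intro ℓ _
    by_contra h0
    obtain ⟨ha, hb⟩ := mul_ne_zero_iff.mp h0
    obtain ⟨_, hi1⟩ := msign_ne_zero ha
    obtain ⟨_, hi2⟩ := msign_ne_zero hb
    exact hII (Subtype.ext (hi1.symm.trans hi2))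

lemma sq_sum_expand {A B C : Type*} [Fintype A] [Fintype B] [Fintype C]
    (F : A → B → C → ℝ) :
    ∑ a : A, (∑ b : B, ∑ c : C, F a b c)^2
    = ∑ b₁ : B, ∑ b₂ : B, ∑ c₁ : C, ∑ c₂ : C, ∑ a : A, F a b₁ c₁ * F a b₂ c₂ := by
  have step : ∀ a, (∑ b : B, ∑ c : C, F a b c)^2
      = ∑ b₁ : B, ∑ b₂ : B, ∑ c₁ : C, ∑ c₂ : C, F a b₁ c₁ * F a b₂ c₂ := by
    intro a
    rw [sq, Finset.sum_mul_sum]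
    refine Finset.sum_congr rfl fun b₁ _ => Finset.sum_congr rfl fun b₂ _ => ?_
    rw [Finset.sum_mul_sum]
  rw [Finset.sum_congr rfl fun a _ => step a]
  rw [Finset.sum_comm]
  refine Finset.sum_congr rfl fun b₁ _ => ?_
  rw [Finset.sum_comm]
  refine Finset.sum_congr rfl fun b₂ _ => ?_
  rw [Finset.sum_comm]
  refine Finset.sum_congr rfl fun c₁ _ => ?_
  rw [Finset.sum_comm]

end DQF

namespace DQF

lemma sum_comm5 {A B C D E : Type*} [Fintype A] [Fintype B] [Fintype C] [Fintype D]
    [Fintype E] (f : A → B → C → D → E → ℝ) :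
    ∑ a : A, ∑ b : B, ∑ c : C, ∑ d : D, ∑ e : E, f a b c d e
    = ∑ b : B, ∑ c : C, ∑ d : D, ∑ e : E, ∑ a : A, f a b c d e := by
  rw [Finset.sum_comm]
  refine Finset.sum_congr rfl fun b _ => ?_
  rw [Finset.sum_comm]
  refine Finset.sum_congr rfl fun c _ => ?_
  rw [Finset.sum_comm]
  refine Finset.sum_congr rfl fun d _ => ?_
  rw [Finset.sum_comm]

end DQF

/-- For a real symmetric `n × n` matrix `A` with ordered eigenvalues
`λ₁ ≤ ⋯ ≤ λ_n` (exhibited by an orthonormal eigenbasis), the quadratic form of the derivation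
extension `D^{[k]}_A` is bounded below by its smallest eigenvalue `λ₁ + ⋯ + λ_k`:
for any coefficients `(η_I)`, the `D^{[k]}_A`-form of `η` is `≥ (λ₁+⋯+λ_k) Σ' η_I²`. -/
theorem derivation_extension_quadform_lower_bound
    (n k : ℕ) (hk1 : 1 ≤ k) (hkn : k ≤ n)
    (A : Matrix (Fin n) (Fin n) ℝ) (hA : ∀ a b, A a b = A b a)
    (lam : Fin n → ℝ) (hmono : Monotone lam)
    (v : Fin n → Fin n → ℝ)
    (hortho : ∀ i j, (∑ ℓ, v i ℓ * v j ℓ) = if i = j then (1 : ℝ) else 0)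
    (heig : ∀ i a, (∑ b, A a b * v i b) = lam i * v i a)
    (η : MIdx n k → ℝ) :
    (∑ i : Fin k, lam (Fin.castLE hkn i)) * ∑ I : MIdx n k, (η I) ^ 2 ≤
      ∑ J : MIdx n (k - 1), ∑ I₁ : MIdx n k, ∑ I₂ : MIdx n k, ∑ ℓ₁ : Fin n, ∑ ℓ₂ : Fin n,
        msign ℓ₁ J.1 I₁.1 * msign ℓ₂ J.1 I₂.1 * A ℓ₁ ℓ₂ * η I₁ * η I₂ := by
  classical
  set S : ℝ := ∑ I : MIdx n k, (η I) ^ 2 with hSdef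
  -- completeness of the eigenbasis
  have hcomp : ∀ a b : Fin n, (∑ i, v i a * v i b) = if a = b then (1:ℝ) else 0 := by
    have hVVt : (Matrix.of v) * Matrix.transpose (Matrix.of v) = (1 : Matrix (Fin n) (Fin n) ℝ) := by
      ext i j
      simpa [Matrix.mul_apply, Matrix.one_apply] using hortho i j
    have hVtV := mul_eq_one_comm.mp hVVt
    intro a b
    have h := congrFun (congrFun hVtV a) b
    simpa [Matrix.mul_apply, Matrix.transpose_apply, Matrix.one_apply] using h
  -- spectral decomposition
  have hAspec : ∀ a b, A a b = ∑ i, lam i * v i a * v i b := by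
    intro a b
    calc A a b = ∑ c, A a c * (if c = b then (1:ℝ) else 0) := by simp
      _ = ∑ c, A a c * (∑ i, v i c * v i b) :=
          Finset.sum_congr rfl fun c _ => by rw [hcomp c b]
      _ = ∑ c, ∑ i, A a c * (v i c * v i b) :=
          Finset.sum_congr rfl fun c _ => Finset.mul_sum _ _ _
      _ = ∑ i, ∑ c, A a c * (v i c * v i b) := Finset.sum_comm
      _ = ∑ i, (∑ c, A a c * v i c) * v i b := by
          refine Finset.sum_congr rfl fun i _ => ?_
          rw [Finset.sum_mul]
          exact Finset.sum_congr rfl fun c _ => by ring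
      _ = ∑ i, lam i * v i a * v i b :=
          Finset.sum_congr rfl fun i _ => by rw [heig i a]
  -- the contraction coefficients and their squares
  set q : Fin n → ℝ := fun i => ∑ J : MIdx n (k-1),
    (∑ I : MIdx n k, ∑ ℓ : Fin n, msign ℓ J.1 I.1 * (v i ℓ * η I))^2 with hqdef
  set r : Fin n → ℝ := fun i => ∑ H : MIdx n (k+1),
    (∑ I : MIdx n k, ∑ ℓ : Fin n, msign ℓ I.1 H.1 * (v i ℓ * η I))^2 with hrdef
  have hq_expand : ∀ w : Fin n → ℝ,
      (∑ J : MIdx n (k-1), (∑ I : MIdx n k, ∑ ℓ : Fin n, msign ℓ J.1 I.1 * (w ℓ * η I))^2)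
      = ∑ I₁ : MIdx n k, ∑ I₂ : MIdx n k, ∑ ℓ₁ : Fin n, ∑ ℓ₂ : Fin n,
          (∑ J : MIdx n (k-1), msign ℓ₁ J.1 I₁.1 * msign ℓ₂ J.1 I₂.1) *
            (w ℓ₁ * w ℓ₂ * η I₁ * η I₂) := by
    intro w
    rw [DQF.sq_sum_expand
      (fun (J : MIdx n (k-1)) (I : MIdx n k) (ℓ : Fin n) => msign ℓ J.1 I.1 * (w ℓ * η I))]
    refine Finset.sum_congr rfl fun I₁ _ => Finset.sum_congr rfl fun I₂ _ =>
      Finset.sum_congr rfl fun ℓ₁ _ => Finset.sum_congr rfl fun ℓ₂ _ => ?_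
    calc (∑ J : MIdx n (k-1),
            (msign ℓ₁ J.1 I₁.1 * (w ℓ₁ * η I₁)) * (msign ℓ₂ J.1 I₂.1 * (w ℓ₂ * η I₂)))
        = ∑ J : MIdx n (k-1),
            (msign ℓ₁ J.1 I₁.1 * msign ℓ₂ J.1 I₂.1) * (w ℓ₁ * w ℓ₂ * η I₁ * η I₂) :=
          Finset.sum_congr rfl fun J _ => by ring
      _ = _ := by rw [← Finset.sum_mul]
  have hd_expand : ∀ w : Fin n → ℝ,
      (∑ H : MIdx n (k+1), (∑ I : MIdx n k, ∑ ℓ : Fin n, msign ℓ I.1 H.1 * (w ℓ * η I))^2)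
      = ∑ I₁ : MIdx n k, ∑ I₂ : MIdx n k, ∑ ℓ₁ : Fin n, ∑ ℓ₂ : Fin n,
          (∑ H : MIdx n (k+1), msign ℓ₂ I₁.1 H.1 * msign ℓ₁ I₂.1 H.1) *
            (w ℓ₁ * w ℓ₂ * η I₁ * η I₂) := by
    intro w
    rw [DQF.sq_sum_expand
      (fun (H : MIdx n (k+1)) (I : MIdx n k) (ℓ : Fin n) => msign ℓ I.1 H.1 * (w ℓ * η I))]
    refine Finset.sum_congr rfl fun I₁ _ => Finset.sum_congr rfl fun I₂ _ => ?_
    rw [Finset.sum_comm]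
    refine Finset.sum_congr rfl fun ℓ₁ _ => Finset.sum_congr rfl fun ℓ₂ _ => ?_
    calc (∑ H : MIdx n (k+1),
            (msign ℓ₂ I₁.1 H.1 * (w ℓ₂ * η I₁)) * (msign ℓ₁ I₂.1 H.1 * (w ℓ₁ * η I₂)))
        = ∑ H : MIdx n (k+1),
            (msign ℓ₂ I₁.1 H.1 * msign ℓ₁ I₂.1 H.1) * (w ℓ₁ * w ℓ₂ * η I₁ * η I₂) :=
          Finset.sum_congr rfl fun H _ => by ring
      _ = _ := by rw [← Finset.sum_mul]
  -- the big sum equals ∑ i, lam i * q i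
  have hBig : (∑ J : MIdx n (k - 1), ∑ I₁ : MIdx n k, ∑ I₂ : MIdx n k, ∑ ℓ₁ : Fin n,
        ∑ ℓ₂ : Fin n, msign ℓ₁ J.1 I₁.1 * msign ℓ₂ J.1 I₂.1 * A ℓ₁ ℓ₂ * η I₁ * η I₂)
      = ∑ i, lam i * q i := by
    have h1 : (∑ J : MIdx n (k - 1), ∑ I₁ : MIdx n k, ∑ I₂ : MIdx n k, ∑ ℓ₁ : Fin n,
          ∑ ℓ₂ : Fin n, msign ℓ₁ J.1 I₁.1 * msign ℓ₂ J.1 I₂.1 * A ℓ₁ ℓ₂ * η I₁ * η I₂)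
        = ∑ I₁ : MIdx n k, ∑ I₂ : MIdx n k, ∑ ℓ₁ : Fin n, ∑ ℓ₂ : Fin n,
            (∑ J : MIdx n (k-1), msign ℓ₁ J.1 I₁.1 * msign ℓ₂ J.1 I₂.1) *
              (A ℓ₁ ℓ₂ * η I₁ * η I₂) := by
      rw [DQF.sum_comm5 (fun (J : MIdx n (k-1)) (I₁ : MIdx n k) (I₂ : MIdx n k)
        (ℓ₁ : Fin n) (ℓ₂ : Fin n) => msign ℓ₁ J.1 I₁.1 * msign ℓ₂ J.1 I₂.1 * A ℓ₁ ℓ₂ * η I₁ * η I₂)]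
      refine Finset.sum_congr rfl fun I₁ _ => Finset.sum_congr rfl fun I₂ _ =>
        Finset.sum_congr rfl fun ℓ₁ _ => Finset.sum_congr rfl fun ℓ₂ _ => ?_
      calc (∑ J : MIdx n (k-1), msign ℓ₁ J.1 I₁.1 * msign ℓ₂ J.1 I₂.1 * A ℓ₁ ℓ₂ * η I₁ * η I₂)
          = ∑ J : MIdx n (k-1),
              (msign ℓ₁ J.1 I₁.1 * msign ℓ₂ J.1 I₂.1) * (A ℓ₁ ℓ₂ * η I₁ * η I₂) :=
            Finset.sum_congr rfl fun J _ => by ring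
        _ = _ := by rw [← Finset.sum_mul]
    have h2 : ∑ i, lam i * q i
        = ∑ I₁ : MIdx n k, ∑ I₂ : MIdx n k, ∑ ℓ₁ : Fin n, ∑ ℓ₂ : Fin n,
            (∑ J : MIdx n (k-1), msign ℓ₁ J.1 I₁.1 * msign ℓ₂ J.1 I₂.1) *
              (A ℓ₁ ℓ₂ * η I₁ * η I₂) := by
      have h3 : ∀ i, lam i * q i = ∑ I₁ : MIdx n k, ∑ I₂ : MIdx n k, ∑ ℓ₁ : Fin n, ∑ ℓ₂ : Fin n,
          lam i * ((∑ J : MIdx n (k-1), msign ℓ₁ J.1 I₁.1 * msign ℓ₂ J.1 I₂.1) *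
            (v i ℓ₁ * v i ℓ₂ * η I₁ * η I₂)) := by
        intro i
        rw [hqdef]
        simp only []
        rw [hq_expand (v i)]
        simp only [Finset.mul_sum]
      rw [Finset.sum_congr rfl fun i _ => h3 i]
      rw [DQF.sum_comm5 (fun (i : Fin n) (I₁ : MIdx n k) (I₂ : MIdx n k) (ℓ₁ : Fin n)
        (ℓ₂ : Fin n) => lam i * ((∑ J : MIdx n (k-1), msign ℓ₁ J.1 I₁.1 * msign ℓ₂ J.1 I₂.1) *
          (v i ℓ₁ * v i ℓ₂ * η I₁ * η I₂)))]
      refine Finset.sum_congr rfl fun I₁ _ => Finset.sum_congr rfl fun I₂ _ =>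
        Finset.sum_congr rfl fun ℓ₁ _ => Finset.sum_congr rfl fun ℓ₂ _ => ?_
      calc (∑ i, lam i * ((∑ J : MIdx n (k-1), msign ℓ₁ J.1 I₁.1 * msign ℓ₂ J.1 I₂.1) *
              (v i ℓ₁ * v i ℓ₂ * η I₁ * η I₂)))
          = ∑ i, ((∑ J : MIdx n (k-1), msign ℓ₁ J.1 I₁.1 * msign ℓ₂ J.1 I₂.1) * (η I₁ * η I₂))
              * (lam i * v i ℓ₁ * v i ℓ₂) := Finset.sum_congr rfl fun i _ => by ring
        _ = ((∑ J : MIdx n (k-1), msign ℓ₁ J.1 I₁.1 * msign ℓ₂ J.1 I₂.1) * (η I₁ * η I₂))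
              * (∑ i, lam i * v i ℓ₁ * v i ℓ₂) := (Finset.mul_sum _ _ _).symm
        _ = ((∑ J : MIdx n (k-1), msign ℓ₁ J.1 I₁.1 * msign ℓ₂ J.1 I₂.1) * (η I₁ * η I₂))
              * A ℓ₁ ℓ₂ := by rw [← hAspec]
        _ = _ := by ring
    rw [h1, h2]
  -- q i + r i = S
  have hqr : ∀ i, q i + r i = S := by
    intro i
    have hv : (∑ ℓ, v i ℓ * v i ℓ) = 1 := by rw [hortho i i, if_pos rfl]
    rw [hqdef, hrdef]
    simp only []
    rw [hq_expand (v i), hd_expand (v i)]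
    simp only [← Finset.sum_add_distrib]
    have hcell : ∀ (I₁ I₂ : MIdx n k) (ℓ₁ ℓ₂ : Fin n),
        (∑ J : MIdx n (k-1), msign ℓ₁ J.1 I₁.1 * msign ℓ₂ J.1 I₂.1) *
            (v i ℓ₁ * v i ℓ₂ * η I₁ * η I₂)
          + (∑ H : MIdx n (k+1), msign ℓ₂ I₁.1 H.1 * msign ℓ₁ I₂.1 H.1) *
            (v i ℓ₁ * v i ℓ₂ * η I₁ * η I₂)
        = (if ℓ₁ = ℓ₂ ∧ I₁ = I₂ then (1:ℝ) else 0) * (v i ℓ₁ * v i ℓ₂ * η I₁ * η I₂) := by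
      intro I₁ I₂ ℓ₁ ℓ₂
      rw [← add_mul, DQF.star_id]
    rw [Finset.sum_congr rfl fun I₁ _ => Finset.sum_congr rfl fun I₂ _ =>
      Finset.sum_congr rfl fun ℓ₁ _ => Finset.sum_congr rfl fun ℓ₂ _ => hcell I₁ I₂ ℓ₁ ℓ₂]
    have hcollapse : (∑ I₁ : MIdx n k, ∑ I₂ : MIdx n k, ∑ ℓ₁ : Fin n, ∑ ℓ₂ : Fin n,
        (if ℓ₁ = ℓ₂ ∧ I₁ = I₂ then (1:ℝ) else 0) * (v i ℓ₁ * v i ℓ₂ * η I₁ * η I₂))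
        = ∑ I₁ : MIdx n k, ∑ ℓ₁ : Fin n, v i ℓ₁ * v i ℓ₁ * η I₁ * η I₁ := by
      refine Finset.sum_congr rfl fun I₁ _ => ?_
      rw [Finset.sum_comm]
      simp [ite_and, ite_mul, zero_mul, one_mul, Finset.sum_ite_eq, Finset.sum_ite_eq']
    rw [hcollapse]
    calc (∑ I₁ : MIdx n k, ∑ ℓ₁ : Fin n, v i ℓ₁ * v i ℓ₁ * η I₁ * η I₁)
        = ∑ I₁ : MIdx n k, (∑ ℓ₁ : Fin n, v i ℓ₁ * v i ℓ₁) * (η I₁ * η I₁) := by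
          refine Finset.sum_congr rfl fun I₁ _ => ?_
          rw [Finset.sum_mul]
          exact Finset.sum_congr rfl fun ℓ₁ _ => by ring
      _ = ∑ I₁ : MIdx n k, (η I₁)^2 := by
          refine Finset.sum_congr rfl fun I₁ _ => ?_
          rw [hv]; ring
      _ = S := hSdef.symm
  -- ∑ i, q i = k * S
  have hqsum : (∑ i, q i) = k * S := by
    have h3 : ∀ i : Fin n, q i = ∑ I₁ : MIdx n k, ∑ I₂ : MIdx n k, ∑ ℓ₁ : Fin n, ∑ ℓ₂ : Fin n,
        (∑ J : MIdx n (k-1), msign ℓ₁ J.1 I₁.1 * msign ℓ₂ J.1 I₂.1) *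
          (v i ℓ₁ * v i ℓ₂ * η I₁ * η I₂) := by
      intro i; rw [hqdef]; simp only []; exact hq_expand (v i)
    rw [Finset.sum_congr rfl fun i _ => h3 i]
    rw [DQF.sum_comm5 (fun (i : Fin n) (I₁ : MIdx n k) (I₂ : MIdx n k) (ℓ₁ : Fin n)
      (ℓ₂ : Fin n) => (∑ J : MIdx n (k-1), msign ℓ₁ J.1 I₁.1 * msign ℓ₂ J.1 I₂.1) *
        (v i ℓ₁ * v i ℓ₂ * η I₁ * η I₂))]
    have hcell : ∀ (I₁ I₂ : MIdx n k) (ℓ₁ ℓ₂ : Fin n),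
        (∑ i, (∑ J : MIdx n (k-1), msign ℓ₁ J.1 I₁.1 * msign ℓ₂ J.1 I₂.1) *
          (v i ℓ₁ * v i ℓ₂ * η I₁ * η I₂))
        = (if ℓ₁ = ℓ₂ then (1:ℝ) else 0) *
            ((∑ J : MIdx n (k-1), msign ℓ₁ J.1 I₁.1 * msign ℓ₂ J.1 I₂.1) * (η I₁ * η I₂)) := by
      intro I₁ I₂ ℓ₁ ℓ₂
      calc (∑ i, (∑ J : MIdx n (k-1), msign ℓ₁ J.1 I₁.1 * msign ℓ₂ J.1 I₂.1) *
            (v i ℓ₁ * v i ℓ₂ * η I₁ * η I₂))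
          = ∑ i, ((∑ J : MIdx n (k-1), msign ℓ₁ J.1 I₁.1 * msign ℓ₂ J.1 I₂.1) * (η I₁ * η I₂))
              * (v i ℓ₁ * v i ℓ₂) := Finset.sum_congr rfl fun i _ => by ring
        _ = ((∑ J : MIdx n (k-1), msign ℓ₁ J.1 I₁.1 * msign ℓ₂ J.1 I₂.1) * (η I₁ * η I₂))
              * (∑ i, v i ℓ₁ * v i ℓ₂) := (Finset.mul_sum _ _ _).symm
        _ = _ := by rw [hcomp ℓ₁ ℓ₂]; ring
    rw [Finset.sum_congr rfl fun I₁ _ => Finset.sum_congr rfl fun I₂ _ =>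
      Finset.sum_congr rfl fun ℓ₁ _ => Finset.sum_congr rfl fun ℓ₂ _ => hcell I₁ I₂ ℓ₁ ℓ₂]
    have hcoll : ∀ (I₁ I₂ : MIdx n k), (∑ ℓ₁ : Fin n, ∑ ℓ₂ : Fin n,
        (if ℓ₁ = ℓ₂ then (1:ℝ) else 0) *
          ((∑ J : MIdx n (k-1), msign ℓ₁ J.1 I₁.1 * msign ℓ₂ J.1 I₂.1) * (η I₁ * η I₂)))
        = (if I₁ = I₂ then (k:ℝ) else 0) * (η I₁ * η I₂) := by
      intro I₁ I₂
      have h4 : (∑ ℓ₁ : Fin n, ∑ ℓ₂ : Fin n,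
          (if ℓ₁ = ℓ₂ then (1:ℝ) else 0) *
            ((∑ J : MIdx n (k-1), msign ℓ₁ J.1 I₁.1 * msign ℓ₂ J.1 I₂.1) * (η I₁ * η I₂)))
          = ∑ ℓ₁ : Fin n, (∑ J : MIdx n (k-1), msign ℓ₁ J.1 I₁.1 * msign ℓ₁ J.1 I₂.1) *
              (η I₁ * η I₂) := by
        refine Finset.sum_congr rfl fun ℓ₁ _ => ?_
        simp [ite_mul, zero_mul, one_mul, Finset.sum_ite_eq, Finset.sum_ite_eq']
      rw [h4, ← Finset.sum_mul, Finset.sum_comm, DQF.diag_eval I₁ I₂]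
    rw [Finset.sum_congr rfl fun I₁ _ => Finset.sum_congr rfl fun I₂ _ => hcoll I₁ I₂]
    have h5 : ∀ I₁ : MIdx n k, (∑ I₂ : MIdx n k,
        (if I₁ = I₂ then (k:ℝ) else 0) * (η I₁ * η I₂)) = k * (η I₁ * η I₁) := by
      intro I₁
      simp [ite_mul, zero_mul, Finset.sum_ite_eq, Finset.sum_ite_eq']
    rw [Finset.sum_congr rfl fun I₁ _ => h5 I₁]
    rw [hSdef, Finset.mul_sum]
    exact Finset.sum_congr rfl fun I _ => by ring
  -- nonnegativity and upper bound for q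
  have hq0 : ∀ i, 0 ≤ q i := fun i => Finset.sum_nonneg fun J _ => sq_nonneg _
  have hr0 : ∀ i, 0 ≤ r i := fun i => Finset.sum_nonneg fun H _ => sq_nonneg _
  have hqS : ∀ i, q i ≤ S := fun i => by
    have := hqr i; have := hr0 i; linarith
  -- final minimization argument
  have hkm1 : k - 1 < n := lt_of_lt_of_le (Nat.sub_lt hk1 one_pos) hkn
  set μ : ℝ := lam ⟨k - 1, hkm1⟩ with hmu
  have hL : (∑ i : Fin k, lam (Fin.castLE hkn i))
      = ∑ i : Fin n, (if (i : ℕ) < k then lam i else 0) := by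
    have hfilt : (Finset.range n).filter (fun j => j < k) = Finset.range k := by
      ext j
      simp only [Finset.mem_filter, Finset.mem_range]
      omega
    calc (∑ i : Fin k, lam (Fin.castLE hkn i))
        = ∑ i : Fin k, (if h : (i : ℕ) < n then lam ⟨i, h⟩ else 0) := by
          refine Finset.sum_congr rfl fun i _ => ?_
          rw [dif_pos (lt_of_lt_of_le i.2 hkn)]
          exact congrArg lam (Fin.ext rfl)
      _ = ∑ j ∈ Finset.range k, (if h : j < n then lam ⟨j, h⟩ else 0) :=
          Fin.sum_univ_eq_sum_range (fun j => if h : j < n then lam ⟨j, h⟩ else 0) k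
      _ = ∑ j ∈ (Finset.range n).filter (fun j => j < k),
            (if h : j < n then lam ⟨j, h⟩ else 0) := by rw [hfilt]
      _ = ∑ j ∈ Finset.range n,
            (if j < k then (if h : j < n then lam ⟨j, h⟩ else 0) else 0) :=
          Finset.sum_filter _ _
      _ = ∑ i : Fin n, (if (i : ℕ) < k then (if h : (i:ℕ) < n then lam ⟨i, h⟩ else 0) else 0) :=
          (Fin.sum_univ_eq_sum_range
            (fun j => if j < k then (if h : j < n then lam ⟨j, h⟩ else 0) else 0) n).symm
      _ = ∑ i : Fin n, (if (i : ℕ) < k then lam i else 0) := by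
          refine Finset.sum_congr rfl fun i _ => ?_
          rw [dif_pos i.2]
  have hIf : (∑ i : Fin n, (if (i : ℕ) < k then S else 0)) = k * S := by
    have hfilt : (Finset.range n).filter (fun j => j < k) = Finset.range k := by
      ext j
      simp only [Finset.mem_filter, Finset.mem_range]
      omega
    calc (∑ i : Fin n, (if (i : ℕ) < k then S else 0))
        = ∑ j ∈ Finset.range n, (if j < k then S else 0) :=
          Fin.sum_univ_eq_sum_range (fun j => if j < k then S else 0) n
      _ = ∑ j ∈ (Finset.range n).filter (fun j => j < k), S := (Finset.sum_filter _ _).symm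
      _ = ∑ j ∈ Finset.range k, S := by rw [hfilt]
      _ = k * S := by rw [Finset.sum_const, Finset.card_range, nsmul_eq_mul]
  have per : ∀ i : Fin n, μ * (q i - (if (i : ℕ) < k then S else 0))
      ≤ lam i * q i - (if (i : ℕ) < k then lam i else 0) * S := by
    intro i
    by_cases hik : (i : ℕ) < k
    · rw [if_pos hik, if_pos hik]
      have hle : lam i ≤ μ := hmono (by rw [Fin.le_def]; simp; omega)
      have ht : q i - S ≤ 0 := by have := hqS i; linarith
      have h6 : μ * (q i - S) ≤ lam i * (q i - S) :=
        mul_le_mul_of_nonpos_right hle ht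
      nlinarith [h6]
    · rw [if_neg hik, if_neg hik]
      have hle : μ ≤ lam i := hmono (by rw [Fin.le_def]; simp; omega)
      have h6 : μ * (q i) ≤ lam i * (q i) :=
        mul_le_mul_of_nonneg_right hle (hq0 i)
      nlinarith [h6]
  have hsum := Finset.sum_le_sum (fun i (_ : i ∈ Finset.univ) => per i)
  rw [← Finset.mul_sum, Finset.sum_sub_distrib, hqsum, hIf, sub_self, mul_zero] at hsum
  rw [Finset.sum_sub_distrib] at hsum
  have hfin : (∑ i : Fin n, (if (i : ℕ) < k then lam i else 0) * S)
      = (∑ i : Fin n, (if (i : ℕ) < k then lam i else 0)) * S := by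
    rw [Finset.sum_mul]
  rw [hfin, ← hL] at hsum
  rw [hBig]
  linarith
end

section
/- Let X be an open connected subset of ℝ^n and let η = Σ'_{|I|=k} η_I dx^I be a smooth k-form on X. Then pointwise on X one has |dη|² = Σ'_{|I|=k} Σ_{ℓ=1}^{n} |∂η_I/∂x^ℓ|² − Σ'_{|J|=k−1} Σ'_{|I₁|=k} Σ'_{|I₂|=k} Σ_{ℓ₁,ℓ₂=1}^{n} sign(ℓ₁J, I₁) sign(ℓ₂J, I₂) (∂η_{I₁}/∂x^{ℓ₂}) (∂η_{I₂}/∂x^{ℓ₁}). -/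
open MeasureTheory Real Topology Filter

lemma sumL {n k : ℕ} (s t : Fin n) (A B : MIdx n k) :
    ∑ H : MIdx n (k + 1), msign s A.1 H.1 * msign t B.1 H.1 =
      if s ∉ A.1 ∧ t ∉ B.1 ∧ insert s A.1 = insert t B.1 then
        ((-1 : ℝ) ^ (A.1.filter (fun j => j < s)).card) *
          ((-1 : ℝ) ^ (B.1.filter (fun j => j < t)).card)
      else 0 := by
  by_cases hc : s ∉ A.1 ∧ t ∉ B.1 ∧ insert s A.1 = insert t B.1
  · obtain ⟨h1, h2, h3⟩ := hc
    have hcard : (insert s A.1).card = k + 1 := by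
      rw [Finset.card_insert_of_notMem h1, A.2]
    rw [if_pos ⟨h1, h2, h3⟩]
    rw [Fintype.sum_eq_single (⟨insert s A.1, hcard⟩ : MIdx n (k + 1))]
    · simp [msign, h1, h2, h3]
    · intro H hH
      rcases eq_or_ne (insert s A.1) H.1 with he | he
      · exact absurd (Subtype.ext he.symm) hH
      · simp [msign, he]
  · rw [if_neg hc]
    refine Finset.sum_eq_zero fun H _ => ?_
    by_contra hne
    have h1 : msign s A.1 H.1 ≠ 0 := fun h => hne (by rw [h, zero_mul])
    have h2 : msign t B.1 H.1 ≠ 0 := fun h => hne (by rw [h, mul_zero])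
    rw [msign, ne_eq, ite_eq_right_iff] at h1 h2
    push_neg at h1 h2
    exact hc ⟨h1.1.1, h2.1.1, h1.1.2.trans h2.1.2.symm⟩

lemma sumR {n k : ℕ} (s t : Fin n) (A B : MIdx n k) :
    ∑ J : MIdx n (k - 1), msign t J.1 A.1 * msign s J.1 B.1 =
      if t ∈ A.1 ∧ s ∉ A.1.erase t ∧ insert s (A.1.erase t) = B.1 then
        ((-1 : ℝ) ^ ((A.1.erase t).filter (fun j => j < t)).card) *
          ((-1 : ℝ) ^ ((A.1.erase t).filter (fun j => j < s)).card)
      else 0 := by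
  by_cases hc : t ∈ A.1 ∧ s ∉ A.1.erase t ∧ insert s (A.1.erase t) = B.1
  · obtain ⟨h1, h2, h3⟩ := hc
    have hcard : (A.1.erase t).card = k - 1 := by
      rw [Finset.card_erase_of_mem h1, A.2]
    rw [if_pos ⟨h1, h2, h3⟩]
    rw [Fintype.sum_eq_single (⟨A.1.erase t, hcard⟩ : MIdx n (k - 1))]
    · simp [msign, Finset.notMem_erase, Finset.insert_erase h1, h2, h3]
    · intro J hJ
      rcases eq_or_ne J.1 (A.1.erase t) with he | he
      · exact absurd (Subtype.ext he) hJ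
      · rcases eq_or_ne (insert t J.1) A.1 with ha | ha
        · by_cases htJ : t ∈ J.1
          · simp [msign, htJ]
          · exact absurd (by rw [← ha, Finset.erase_insert htJ]) he
        · simp [msign, ha]
  · rw [if_neg hc]
    refine Finset.sum_eq_zero fun J _ => ?_
    by_contra hne
    have h1 : msign t J.1 A.1 ≠ 0 := fun h => hne (by rw [h, zero_mul])
    have h2 : msign s J.1 B.1 ≠ 0 := fun h => hne (by rw [h, mul_zero])
    rw [msign, ne_eq, ite_eq_right_iff] at h1 h2
    push_neg at h1 h2
    obtain ⟨⟨htJ, htA⟩, -⟩ := h1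
    obtain ⟨⟨hsJ, hsB⟩, -⟩ := h2
    have hJA : J.1 = A.1.erase t := by rw [← htA, Finset.erase_insert htJ]
    exact hc ⟨htA ▸ Finset.mem_insert_self t J.1, hJA ▸ hsJ, by rw [← hJA, hsB]⟩

lemma filt_card {n : ℕ} (X : Finset (Fin n)) (t s : Fin n) (ht : t ∉ X) :
    ((insert t X).filter (fun j => j < s)).card
      = (X.filter (fun j => j < s)).card + (if t < s then 1 else 0) := by
  rw [Finset.filter_insert]
  by_cases h : t < s
  · rw [if_pos h, if_pos h,
      Finset.card_insert_of_notMem (fun hm => ht (Finset.mem_of_mem_filter _ hm))]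
  · rw [if_neg h, if_neg h, add_zero]

lemma key {n k : ℕ} (s t : Fin n) (A B : MIdx n k) :
    ∑ H : MIdx n (k + 1), msign s A.1 H.1 * msign t B.1 H.1 =
      (if s = t ∧ A = B then (1 : ℝ) else 0)
        - ∑ J : MIdx n (k - 1), msign t J.1 A.1 * msign s J.1 B.1 := by
  rw [sumL, sumR]
  by_cases hst : s = t ∧ A = B
  · obtain ⟨rfl, rfl⟩ := hst
    by_cases hsA : s ∈ A.1
    · rw [if_neg (fun h : s ∉ A.1 ∧ s ∉ A.1 ∧ insert s A.1 = insert s A.1 => h.1 hsA),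
        if_pos (⟨rfl, rfl⟩ : s = s ∧ A = A),
        if_pos ⟨hsA, Finset.notMem_erase s A.1, Finset.insert_erase hsA⟩,
        ← pow_add, Even.neg_one_pow ⟨_, rfl⟩]
      ring
    · rw [if_pos (⟨hsA, hsA, rfl⟩ : s ∉ A.1 ∧ s ∉ A.1 ∧ insert s A.1 = insert s A.1),
        if_pos (⟨rfl, rfl⟩ : s = s ∧ A = A),
        if_neg (fun h : s ∈ A.1 ∧ _ ∧ _ => hsA h.1),
        ← pow_add, Even.neg_one_pow ⟨_, rfl⟩]
      ring
  · rw [if_neg hst]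
    by_cases hL : s ∉ A.1 ∧ t ∉ B.1 ∧ insert s A.1 = insert t B.1
    · obtain ⟨h1, h2, h3⟩ := hL
      have hst' : s ≠ t := by
        rintro rfl
        refine hst ⟨rfl, Subtype.ext ?_⟩
        rw [← Finset.erase_insert h1, ← Finset.erase_insert h2, h3]
      have htA : t ∈ A.1 := by
        have : t ∈ insert s A.1 := h3 ▸ Finset.mem_insert_self t B.1
        rcases Finset.mem_insert.1 this with h | h
        · exact absurd h.symm hst'
        · exact h
      rw [if_pos ⟨h1, h2, h3⟩]
      set Jf := A.1.erase t with hJf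
      have htJ : t ∉ Jf := Finset.notMem_erase t A.1
      have hsJ : s ∉ Jf := fun h => h1 (Finset.mem_of_mem_erase h)
      have hAJ : A.1 = insert t Jf := (Finset.insert_erase htA).symm
      have hBJ : B.1 = insert s Jf := by
        rw [hJf, ← Finset.erase_insert_of_ne hst', h3, Finset.erase_insert h2]
      rw [if_pos ⟨htA, hsJ, hBJ.symm⟩]
      rw [hAJ, hBJ, filt_card _ _ _ htJ, filt_card _ _ _ hsJ]
      rcases hst'.lt_or_gt with h | h
      · rw [if_pos h, if_neg (not_lt.2 h.le), pow_add, pow_add]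
        ring
      · rw [if_neg (not_lt.2 h.le), if_pos h, pow_add, pow_add]
        ring
    · have hRf : ¬(t ∈ A.1 ∧ s ∉ A.1.erase t ∧ insert s (A.1.erase t) = B.1) := by
        rintro ⟨h1, h2, h3⟩
        have hst' : s ≠ t := by
          rintro rfl
          exact hst ⟨rfl, Subtype.ext (by rw [← h3, Finset.insert_erase h1])⟩
        have hsA : s ∉ A.1 := fun h => h2 (Finset.mem_erase.2 ⟨hst', h⟩)
        have htB : t ∉ B.1 := by
          rw [← h3]
          intro h
          rcases Finset.mem_insert.1 h with h | h
          · exact hst' h.symm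
          · exact Finset.notMem_erase t A.1 h
        refine hL ⟨hsA, htB, ?_⟩
        rw [← h3, Finset.insert_comm, Finset.insert_erase h1]
      rw [if_neg hL, if_neg hRf]
      ring

lemma sum5_comm {α β γ δ ε : Type*} [Fintype α] [Fintype β] [Fintype γ] [Fintype δ] [Fintype ε]
    (f : α → β → γ → δ → ε → ℝ) :
    (∑ a, ∑ b, ∑ c, ∑ d, ∑ e, f a b c d e) = ∑ e, ∑ a, ∑ b, ∑ c, ∑ d, f a b c d e := by
  calc (∑ a, ∑ b, ∑ c, ∑ d, ∑ e, f a b c d e)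
      = ∑ a, ∑ b, ∑ c, ∑ e, ∑ d, f a b c d e :=
        Finset.sum_congr rfl fun a _ => Finset.sum_congr rfl fun b _ =>
          Finset.sum_congr rfl fun c _ => Finset.sum_comm
    _ = ∑ a, ∑ b, ∑ e, ∑ c, ∑ d, f a b c d e :=
        Finset.sum_congr rfl fun a _ => Finset.sum_congr rfl fun b _ => Finset.sum_comm
    _ = ∑ a, ∑ e, ∑ b, ∑ c, ∑ d, f a b c d e :=
        Finset.sum_congr rfl fun a _ => Finset.sum_comm
    _ = ∑ e, ∑ a, ∑ b, ∑ c, ∑ d, f a b c d e := Finset.sum_comm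

lemma delta_sum {n k : ℕ} (a : MIdx n k → Fin n → ℝ) (I₁ : MIdx n k) (ℓ₁ : Fin n) :
    (∑ I₂ : MIdx n k, ∑ ℓ₂ : Fin n,
      (a I₁ ℓ₁ * a I₂ ℓ₂) * (if ℓ₁ = ℓ₂ ∧ I₁ = I₂ then (1 : ℝ) else 0)) = a I₁ ℓ₁ ^ 2 := by
  rw [Fintype.sum_eq_single I₁]
  · rw [Fintype.sum_eq_single ℓ₁]
    · simp [sq]
    · intro ℓ₂ h
      rw [if_neg (fun hc : ℓ₁ = ℓ₂ ∧ I₁ = I₁ => h hc.1.symm), mul_zero]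
  · intro I₂ h
    refine Finset.sum_eq_zero fun ℓ₂ _ => ?_
    rw [if_neg (fun hc : ℓ₁ = ℓ₂ ∧ I₁ = I₂ => h hc.2.symm), mul_zero]

set_option maxHeartbeats 1000000 in
lemma main_alg {n k : ℕ} (a : MIdx n k → Fin n → ℝ) :
    ∑ H : MIdx n (k + 1), (∑ I : MIdx n k, ∑ ℓ : Fin n, msign ℓ I.1 H.1 * a I ℓ) ^ 2 =
      (∑ I : MIdx n k, ∑ ℓ : Fin n, a I ℓ ^ 2) -
        ∑ J : MIdx n (k - 1), ∑ I₁ : MIdx n k, ∑ I₂ : MIdx n k, ∑ ℓ₁ : Fin n, ∑ ℓ₂ : Fin n,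
          msign ℓ₁ J.1 I₁.1 * msign ℓ₂ J.1 I₂.1 * (a I₁ ℓ₂ * a I₂ ℓ₁) := by
  have step1 : (∑ H : MIdx n (k + 1), (∑ I : MIdx n k, ∑ ℓ : Fin n, msign ℓ I.1 H.1 * a I ℓ) ^ 2)
      = ∑ I₁ : MIdx n k, ∑ ℓ₁ : Fin n, ∑ I₂ : MIdx n k, ∑ ℓ₂ : Fin n,
          (a I₁ ℓ₁ * a I₂ ℓ₂) * ∑ H : MIdx n (k + 1), msign ℓ₁ I₁.1 H.1 * msign ℓ₂ I₂.1 H.1 := by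
    simp only [sq, Finset.sum_mul, Finset.mul_sum]
    rw [Finset.sum_comm]
    refine Finset.sum_congr rfl fun I₁ _ => ?_
    rw [Finset.sum_comm]
    refine Finset.sum_congr rfl fun ℓ₁ _ => ?_
    rw [Finset.sum_comm]
    refine Finset.sum_congr rfl fun I₂ _ => ?_
    rw [Finset.sum_comm]
    refine Finset.sum_congr rfl fun ℓ₂ _ => ?_
    refine Finset.sum_congr rfl fun H _ => ?_
    ring
  rw [step1]
  simp only [key, mul_sub, Finset.sum_sub_distrib]
  congr 1
  · exact Finset.sum_congr rfl fun I₁ _ => Finset.sum_congr rfl fun ℓ₁ _ => delta_sum a I₁ ℓ₁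
  · simp only [Finset.mul_sum]
    rw [sum5_comm (fun (I₁ : MIdx n k) (ℓ₁ : Fin n) (I₂ : MIdx n k) (ℓ₂ : Fin n)
      (J : MIdx n (k - 1)) =>
        (a I₁ ℓ₁ * a I₂ ℓ₂) * (msign ℓ₂ J.1 I₁.1 * msign ℓ₁ J.1 I₂.1))]
    refine Finset.sum_congr rfl fun J _ => Finset.sum_congr rfl fun I₁ _ => ?_
    rw [Finset.sum_comm]
    refine Finset.sum_congr rfl fun I₂ _ => ?_
    rw [Finset.sum_comm]
    refine Finset.sum_congr rfl fun u _ => Finset.sum_congr rfl fun v _ => ?_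
    ring


/-- The pointwise identity
`|dη|² = Σ'_I Σ_ℓ |∂η_I/∂xℓ|² − Σ'_J Σ'_{I₁,I₂} Σ_{ℓ₁,ℓ₂} sign(ℓ₁J,I₁) sign(ℓ₂J,I₂)
(∂η_{I₁}/∂x^{ℓ₂})(∂η_{I₂}/∂x^{ℓ₁})` for a smooth `k`-form `η` on `X`. -/
theorem pointwise_norm_sq_of_d
    (n k : ℕ) (X : Set (Euc n)) (hXo : IsOpen X) (hXc : IsConnected X)
    (η : Form n k) (hη : ∀ I, ContDiffOn ℝ (⊤ : ℕ∞) (fun x => η x I) X) :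
    ∀ x ∈ X,
      (∑ H : MIdx n (k + 1), (dcoef η x H) ^ 2) =
        (∑ I : MIdx n k, ∑ ℓ : Fin n, (pder ℓ (fun y => η y I) x) ^ 2) -
          ∑ J : MIdx n (k - 1), ∑ I₁ : MIdx n k, ∑ I₂ : MIdx n k,
            ∑ ℓ₁ : Fin n, ∑ ℓ₂ : Fin n,
            msign ℓ₁ J.1 I₁.1 * msign ℓ₂ J.1 I₂.1 *
              (pder ℓ₂ (fun y => η y I₁) x * pder ℓ₁ (fun y => η y I₂) x) := by
  intro x hx
  simp only [dcoef]
  exact main_alg (fun I ℓ => pder ℓ (fun y => η y I) x)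
end
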